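/- arXiv:2109.02127 — 15 statements merged into one kernel-verified Lean document; each statement's English description precedes it below -/
import Mathlib

section
/- Let X be a Banach space and T : X → X a map such that there exist λ₁, λ₂ ∈ [0,1) with ‖Tx − Ty − (x − y)‖ ≤ λ₁‖x − y‖ + λ₂‖Tx − Ty‖ for all x, y ∈ X. Then T is bijective, and its inverse satisfies ((1−λ₂)/(1+λ₁))‖u − v‖ ≤ ‖T⁻¹u − T⁻¹v‖ ≤ ((1+λ₂)/(1−λ₁))‖u − v‖ for all u, v ∈ X. -/
open Function

section Aux
variable {X : Type*} [NormedAddCommGroup X] [NormedSpace ℝ X] [CompleteSpace X]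

/-- The homotopy between the identity and `T`. -/
noncomputable def TsAux (T : X → X) (s : ℝ) (x : X) : X := x + s • (T x - x)

variable {T : X → X} {l1 l2 : ℝ}

lemma TsAux_sub (T : X → X) (s : ℝ) (x y : X) :
    TsAux T s x - TsAux T s y = (x - y) + s • (T x - T y - (x - y)) := by
  simp only [TsAux]; module

/-- Uniform lower Lipschitz bound for the homotopy. -/
lemma lowerTs (hl1 : l1 ∈ Set.Ico (0 : ℝ) 1) (hl2 : l2 ∈ Set.Ico (0 : ℝ) 1)
    (hyp : ∀ x y : X, ‖T x - T y - (x - y)‖ ≤ l1 * ‖x - y‖ + l2 * ‖T x - T y‖)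
    {s : ℝ} (hs0 : 0 ≤ s) (hs1 : s ≤ 1) (x y : X) :
    min (1 - l1) (1 - l2) * ‖x - y‖ ≤ (1 + l2) * ‖TsAux T s x - TsAux T s y‖ := by
  obtain ⟨hl10, hl11⟩ := hl1
  obtain ⟨hl20, hl21⟩ := hl2
  set a := x - y with ha
  set w := T x - T y - (x - y) with hw
  have hTw : T x - T y = a + w := by rw [ha, hw]; abel
  have h1 : ‖w‖ ≤ l1 * ‖a‖ + l2 * ‖a + w‖ := by rw [← hTw]; exact hyp x y
  have hE : TsAux T s x - TsAux T s y = a + s • w := TsAux_sub T s x y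
  rw [hE]
  set E := ‖a + s • w‖ with hEdef
  have hE0 : 0 ≤ E := norm_nonneg _
  have h2 : ‖a + w‖ ≤ E + (1 - s) * ‖w‖ := by
    have heq : a + w = (a + s • w) + (1 - s) • w := by module
    rw [heq]
    calc ‖(a + s • w) + (1 - s) • w‖ ≤ ‖a + s • w‖ + ‖(1 - s) • w‖ := norm_add_le _ _
    _ = E + (1 - s) * ‖w‖ := by rw [norm_smul, Real.norm_eq_abs, abs_of_nonneg (by linarith)]
  have h3 : ‖a‖ ≤ E + s * ‖w‖ := by
    have heq : a = (a + s • w) - s • w := by module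
    rw [heq]
    calc ‖(a + s • w) - s • w‖ ≤ ‖a + s • w‖ + ‖s • w‖ := norm_sub_le _ _
    _ = E + s * ‖w‖ := by rw [norm_smul, Real.norm_eq_abs, abs_of_nonneg hs0]
  have h4 : (1 - l2 * (1 - s)) * ‖w‖ ≤ l1 * ‖a‖ + l2 * E := by
    have hmul := mul_le_mul_of_nonneg_left h2 hl20
    nlinarith
  have hpos : 0 < 1 - l2 * (1 - s) := by nlinarith
  have h5 : (1 - l2 * (1 - s)) * (‖a‖ - E) ≤ s * (l1 * ‖a‖ + l2 * E) := by
    have t1 : (1 - l2 * (1 - s)) * (‖a‖ - E) ≤ (1 - l2 * (1 - s)) * (s * ‖w‖) :=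
      mul_le_mul_of_nonneg_left (by linarith) hpos.le
    have t2 : s * ((1 - l2 * (1 - s)) * ‖w‖) ≤ s * (l1 * ‖a‖ + l2 * E) :=
      mul_le_mul_of_nonneg_left h4 hs0
    nlinarith
  have hminle : min (1 - l1) (1 - l2) ≤ 1 - l2 + l2 * s - s * l1 := by
    have m1 := min_le_left (1 - l1) (1 - l2)
    have m2 := min_le_right (1 - l1) (1 - l2)
    rcases le_total l1 l2 with h | h
    · nlinarith
    · nlinarith
  have ha0 : (0 : ℝ) ≤ ‖a‖ := norm_nonneg _
  nlinarith [mul_le_mul_of_nonneg_right hminle ha0,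
    mul_nonneg (mul_nonneg hl20 (by linarith : (0 : ℝ) ≤ 1 - s)) hE0]

/-- `T - id` is Lipschitz. -/
lemma wlip (hl2 : l2 ∈ Set.Ico (0 : ℝ) 1)
    (hyp : ∀ x y : X, ‖T x - T y - (x - y)‖ ≤ l1 * ‖x - y‖ + l2 * ‖T x - T y‖)
    (x y : X) : (1 - l2) * ‖T x - T y - (x - y)‖ ≤ (l1 + l2) * ‖x - y‖ := by
  have h1 := hyp x y
  have h2 : ‖T x - T y‖ ≤ ‖x - y‖ + ‖T x - T y - (x - y)‖ := by
    calc ‖T x - T y‖ = ‖(x - y) + (T x - T y - (x - y))‖ := by congr 1; abel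
    _ ≤ _ := norm_add_le _ _
  nlinarith [mul_le_mul_of_nonneg_left h2 hl2.1]

lemma stepSurj (hl1 : l1 ∈ Set.Ico (0 : ℝ) 1) (hl2 : l2 ∈ Set.Ico (0 : ℝ) 1)
    (hyp : ∀ x y : X, ‖T x - T y - (x - y)‖ ≤ l1 * ‖x - y‖ + l2 * ‖T x - T y‖)
    {s s' : ℝ} (hs : s ∈ Set.Icc (0 : ℝ) 1) (hs' : s' ∈ Set.Icc (0 : ℝ) 1)
    (hd : |s' - s| * ((1 + l2) * (2 * (l1 + l2) + 1)) ≤ min (1 - l1) (1 - l2) * (1 - l2))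
    (hsurj : Surjective (TsAux T s)) : Surjective (TsAux T s') := by
  obtain ⟨hl10, hl11⟩ := hl1
  obtain ⟨hl20, hl21⟩ := hl2
  have hm : (0 : ℝ) < min (1 - l1) (1 - l2) := lt_min (by linarith) (by linarith)
  intro u
  set G := TsAux T s with hG
  have hrG : ∀ z, G (invFun G z) = z := fun z => rightInverse_invFun hsurj z
  set Φ : X → X := fun x => invFun G (u - (s' - s) • (T x - x)) with hΦ
  have hGΦ : ∀ x, G (Φ x) = u - (s' - s) • (T x - x) := fun x => hrG _
  have hlip : ∀ x y : X, dist (Φ x) (Φ y) ≤ (1 / 2 : ℝ) * dist x y := by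
    intro x y
    rw [dist_eq_norm, dist_eq_norm]
    have key := lowerTs ⟨hl10, hl11⟩ ⟨hl20, hl21⟩ hyp hs.1 hs.2 (Φ x) (Φ y)
    have hGsub : G (Φ x) - G (Φ y) = (s' - s) • ((T y - y) - (T x - x)) := by
      rw [hGΦ x, hGΦ y]; module
    have hnorm : ‖G (Φ x) - G (Φ y)‖ = |s' - s| * ‖T x - T y - (x - y)‖ := by
      rw [hGsub, norm_smul, Real.norm_eq_abs]
      congr 1
      rw [← norm_neg]
      congr 1
      abel
    have hw := wlip ⟨hl20, hl21⟩ hyp x y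
    have key2 : min (1 - l1) (1 - l2) * ‖Φ x - Φ y‖ ≤
        (1 + l2) * (|s' - s| * ‖T x - T y - (x - y)‖) := by
      rw [← hnorm]; exact key
    have habs : (0 : ℝ) ≤ |s' - s| := abs_nonneg _
    have c1 : (1 - l2) * (min (1 - l1) (1 - l2) * ‖Φ x - Φ y‖)
        ≤ (1 + l2) * |s' - s| * ((l1 + l2) * ‖x - y‖) := by
      have t1 := mul_le_mul_of_nonneg_left key2 (by linarith : (0 : ℝ) ≤ 1 - l2)
      have t2 := mul_le_mul_of_nonneg_left hw (mul_nonneg (by linarith : (0 : ℝ) ≤ 1 + l2) habs)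
      nlinarith
    have c2 : 2 * ((1 + l2) * |s' - s| * ((l1 + l2) * ‖x - y‖)) ≤
        min (1 - l1) (1 - l2) * (1 - l2) * ‖x - y‖ := by
      have hxy : (0 : ℝ) ≤ ‖x - y‖ := norm_nonneg _
      nlinarith [mul_le_mul_of_nonneg_right hd hxy,
        mul_nonneg (mul_nonneg (by linarith : (0 : ℝ) ≤ 1 + l2) habs) hxy]
    have hmpos : (0 : ℝ) < min (1 - l1) (1 - l2) * (1 - l2) := mul_pos hm (by linarith)
    nlinarith
  have hcontr : ContractingWith (1 / 2 : NNReal) Φ := by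
    constructor
    · rw [← NNReal.coe_lt_coe]
      norm_num
    · apply LipschitzWith.of_dist_le_mul
      intro x y
      have hle := hlip x y
      simpa using hle
  have hfix : Φ (ContractingWith.fixedPoint Φ hcontr) = ContractingWith.fixedPoint Φ hcontr :=
    hcontr.fixedPoint_isFixedPt
  set z := ContractingWith.fixedPoint Φ hcontr with hz
  refine ⟨z, ?_⟩
  have hGz : G (Φ z) = G z := by rw [hfix]
  rw [hGΦ z] at hGz
  have hfin : u = TsAux T s' z := by
    rw [hG] at hGz
    simp only [TsAux] at hGz ⊢
    rw [eq_comm, eq_sub_iff_add_eq] at hGz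
    rw [← hGz]; module
  exact hfin.symm

lemma surjT (hl1 : l1 ∈ Set.Ico (0 : ℝ) 1) (hl2 : l2 ∈ Set.Ico (0 : ℝ) 1)
    (hyp : ∀ x y : X, ‖T x - T y - (x - y)‖ ≤ l1 * ‖x - y‖ + l2 * ‖T x - T y‖) :
    Surjective T := by
  obtain ⟨hl10, hl11⟩ := hl1
  obtain ⟨hl20, hl21⟩ := hl2
  have hMpos : (0 : ℝ) < min (1 - l1) (1 - l2) * (1 - l2) :=
    mul_pos (lt_min (by linarith) (by linarith)) (by linarith)
  have hCpos : (0 : ℝ) < (1 + l2) * (2 * (l1 + l2) + 1) := by nlinarith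
  set δ := min (1 - l1) (1 - l2) * (1 - l2) / ((1 + l2) * (2 * (l1 + l2) + 1)) with hδ
  have hδpos : 0 < δ := div_pos hMpos hCpos
  have hδC : δ * ((1 + l2) * (2 * (l1 + l2) + 1)) = min (1 - l1) (1 - l2) * (1 - l2) :=
    div_mul_cancel₀ _ hCpos.ne'
  have main : ∀ n : ℕ, ∀ s : ℝ, s ∈ Set.Icc (0 : ℝ) 1 → s ≤ n * δ → Surjective (TsAux T s) := by
    intro n
    induction n with
    | zero =>
      intro s hs h0
      have hs0 : s = 0 := le_antisymm (by simpa using h0) hs.1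
      subst hs0
      intro u
      exact ⟨u, by simp [TsAux]⟩
    | succ n ih =>
      intro s hs hle
      by_cases hc : s ≤ n * δ
      · exact ih s hs hc
      push_neg at hc
      have hnδ0 : (0 : ℝ) ≤ n * δ := mul_nonneg (Nat.cast_nonneg n) hδpos.le
      have hsurj0 : Surjective (TsAux T (n * δ)) :=
        ih (n * δ) ⟨hnδ0, le_trans hc.le hs.2⟩ le_rfl
      apply stepSurj ⟨hl10, hl11⟩ ⟨hl20, hl21⟩ hyp ⟨hnδ0, le_trans hc.le hs.2⟩ hs ?_ hsurj0
      have habs : |s - n * δ| ≤ δ := by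
        rw [abs_of_nonneg (by linarith)]
        have : ((n : ℝ) + 1) * δ = n * δ + δ := by ring
        push_cast at hle
        linarith
      calc |s - n * δ| * ((1 + l2) * (2 * (l1 + l2) + 1))
          ≤ δ * ((1 + l2) * (2 * (l1 + l2) + 1)) :=
            mul_le_mul_of_nonneg_right habs hCpos.le
        _ = min (1 - l1) (1 - l2) * (1 - l2) := hδC
  obtain ⟨n, hn⟩ := exists_nat_ge (1 / δ)
  have h1 : (1 : ℝ) ≤ n * δ := by
    rw [div_le_iff₀ hδpos] at hn
    linarith
  have hS1 : Surjective (TsAux T 1) := main n 1 ⟨zero_le_one, le_refl 1⟩ h1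
  have hT1 : TsAux T 1 = T := by
    funext x
    simp [TsAux]
  rwa [hT1] at hS1

end Aux

theorem stmt1 {X : Type*} [NormedAddCommGroup X] [NormedSpace ℝ X] [CompleteSpace X]
    (T : X → X) (l1 l2 : ℝ)
    (hl1 : l1 ∈ Set.Ico (0 : ℝ) 1) (hl2 : l2 ∈ Set.Ico (0 : ℝ) 1)
    (hyp : ∀ x y : X, ‖T x - T y - (x - y)‖ ≤ l1 * ‖x - y‖ + l2 * ‖T x - T y‖) :
    Function.Bijective T ∧
    ∀ u v : X,
      (1 - l2) / (1 + l1) * ‖u - v‖ ≤ ‖Function.invFun T u - Function.invFun T v‖ ∧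
      ‖Function.invFun T u - Function.invFun T v‖ ≤ (1 + l2) / (1 - l1) * ‖u - v‖ := by
  obtain ⟨hl10, hl11⟩ := hl1
  obtain ⟨hl20, hl21⟩ := hl2
  have hinj : Function.Injective T := by
    intro x y h
    have h1 := hyp x y
    rw [h] at h1
    simp only [sub_self, zero_sub, norm_neg, norm_zero] at h1
    have : (1 - l1) * ‖x - y‖ ≤ 0 := by linarith
    have hxy : ‖x - y‖ = 0 := le_antisymm (by nlinarith [norm_nonneg (x - y)]) (norm_nonneg _)
    rwa [norm_sub_eq_zero_iff] at hxy
  have hsurj : Function.Surjective T := surjT ⟨hl10, hl11⟩ ⟨hl20, hl21⟩ hyp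
  refine ⟨⟨hinj, hsurj⟩, ?_⟩
  intro u v
  have hr : ∀ z : X, T (Function.invFun T z) = z := fun z => Function.rightInverse_invFun hsurj z
  set x := Function.invFun T u with hx
  set y := Function.invFun T v with hy
  have h1 := hyp x y
  rw [hr u, hr v] at h1
  have hn1 : ‖u - v‖ - ‖x - y‖ ≤ ‖u - v - (x - y)‖ := by
    have := norm_sub_norm_le (u - v) (x - y)
    linarith [this]
  have hn2 : ‖x - y‖ - ‖u - v‖ ≤ ‖u - v - (x - y)‖ := by
    have := norm_sub_norm_le (x - y) (u - v)
    calc ‖x - y‖ - ‖u - v‖ ≤ ‖x - y - (u - v)‖ := this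
      _ = ‖u - v - (x - y)‖ := by rw [← norm_neg]; congr 1; abel
  constructor
  · rw [div_mul_eq_mul_div, div_le_iff₀ (by linarith : (0 : ℝ) < 1 + l1)]
    linarith
  · rw [div_mul_eq_mul_div, le_div_iff₀ (by linarith : (0 : ℝ) < 1 - l1)]
    linarith
end

section
/- Let X be a Banach space, T : X → X a Lipschitz map with T(0)=0, and suppose there exist λ₁, λ₂ ∈ [0,1) with ‖Tx − Ty − (x − y)‖ ≤ λ₁‖x − y‖ + λ₂‖Tx − Ty‖ for all x, y ∈ X. Then for every real α < (1−λ₁)/(1+λ₂), the map x ↦ Tx − αx is bijective with Lipschitz inverse. -/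
theorem stmt2 {X : Type*} [NormedAddCommGroup X] [NormedSpace ℝ X] [CompleteSpace X]
    (T : X → X) (hT0 : T 0 = 0) (hTlip : ∃ K : NNReal, LipschitzWith K T)
    (l1 l2 : ℝ)
    (hl1 : l1 ∈ Set.Ico (0 : ℝ) 1) (hl2 : l2 ∈ Set.Ico (0 : ℝ) 1)
    (hyp : ∀ x y : X, ‖T x - T y - (x - y)‖ ≤ l1 * ‖x - y‖ + l2 * ‖T x - T y‖) :
    ∀ α : ℝ, α < (1 - l1) / (1 + l2) →
      Function.Bijective (fun x => T x - α • x) ∧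
      ∃ K : NNReal, LipschitzWith K (Function.invFun (fun x => T x - α • x)) := by
  obtain ⟨K, hK⟩ := hTlip
  obtain ⟨hl1n, hl1u⟩ := hl1
  obtain ⟨hl2n, hl2u⟩ := hl2
  intro α hα
  haveI : Nonempty X := ⟨0⟩
  have h2pos : (0:ℝ) < 1 + l2 := by linarith
  have hαmul : α * (1 + l2) < 1 - l1 := (lt_div_iff₀ h2pos).mp hα
  set δ : ℝ := (1 - l1 - α - l2 * |α|) / (1 + l2) with hδdef
  have hδpos : 0 < δ := by
    apply div_pos _ h2pos
    rcases le_or_gt 0 α with h | h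
    · rw [abs_of_nonneg h]; nlinarith
    · rw [abs_of_neg h]; nlinarith
  have hα1 : α < 1 := lt_of_lt_of_le hα (by rw [div_le_one h2pos]; linarith)
  -- uniform expansiveness for all β ≤ α
  have key : ∀ β : ℝ, β ≤ α → ∀ x y : X,
      δ * ‖x - y‖ ≤ ‖(T x - β • x) - (T y - β • y)‖ := by
    intro β hβ x y
    have h1 := hyp x y
    have e0 : T x - T y = ((T x - β • x) - (T y - β • y)) + β • (x - y) := by
      rw [smul_sub]; abel
    have e1 : ‖T x - T y‖ ≤ ‖(T x - β • x) - (T y - β • y)‖ + |β| * ‖x - y‖ := by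
      calc ‖T x - T y‖ = ‖((T x - β • x) - (T y - β • y)) + β • (x - y)‖ := by rw [← e0]
        _ ≤ ‖(T x - β • x) - (T y - β • y)‖ + ‖β • (x - y)‖ := norm_add_le _ _
        _ = ‖(T x - β • x) - (T y - β • y)‖ + |β| * ‖x - y‖ := by
            rw [norm_smul, Real.norm_eq_abs]
    have e2' : (1 - β) • (x - y) =
        ((T x - β • x) - (T y - β • y)) - (T x - T y - (x - y)) := by
      rw [sub_smul, one_smul, smul_sub]; abel
    have e2 : (1 - β) * ‖x - y‖ ≤
        ‖(T x - β • x) - (T y - β • y)‖ + ‖T x - T y - (x - y)‖ := by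
      calc (1 - β) * ‖x - y‖ = ‖(1 - β) • (x - y)‖ := by
            rw [norm_smul, Real.norm_eq_abs, abs_of_nonneg (by linarith)]
        _ = ‖((T x - β • x) - (T y - β • y)) - (T x - T y - (x - y))‖ := by rw [e2']
        _ ≤ ‖(T x - β • x) - (T y - β • y)‖ + ‖T x - T y - (x - y)‖ := norm_sub_le _ _
    have habs : |β| ≤ |α| + (α - β) := by
      have h3 : |β| - |α| ≤ |β - α| := abs_sub_abs_le_abs_sub β α
      have h4 : |β - α| = α - β := by rw [abs_sub_comm, abs_of_nonneg (by linarith)]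
      linarith
    have mono : 1 - l1 - α - l2 * |α| ≤ 1 - l1 - β - l2 * |β| := by
      nlinarith [mul_le_mul_of_nonneg_left habs hl2n,
        mul_le_mul_of_nonneg_right (le_of_lt hl2u) (sub_nonneg.mpr hβ)]
    rw [hδdef, div_mul_eq_mul_div, div_le_iff₀ h2pos]
    nlinarith [h1, e2, mul_le_mul_of_nonneg_left e1 hl2n,
      mul_le_mul_of_nonneg_right mono (norm_nonneg (x - y))]
  -- injectivity
  have hinj : Function.Injective (fun x : X => T x - α • x) := by
    intro x y hxy
    have k1 := key α le_rfl x y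
    simp only at hxy
    rw [hxy, sub_self, norm_zero] at k1
    have h5 : ‖x - y‖ ≤ 0 := by nlinarith [norm_nonneg (x - y)]
    have h6 : x - y = 0 := by
      rw [← norm_eq_zero]; exact le_antisymm h5 (norm_nonneg _)
    exact sub_eq_zero.mp h6
  -- base case: surjectivity for very negative β
  have base : ∀ β : ℝ, β ≤ -((K:ℝ)+1) →
      Function.Surjective (fun x : X => T x - β • x) := by
    intro β hβ y
    have hKpos : (0:ℝ) < (K:ℝ) + 1 := by positivity
    have hβneg : β < 0 := lt_of_le_of_lt hβ (by linarith)
    have hβabs : (K:ℝ) + 1 ≤ |β| := by rw [abs_of_neg hβneg]; linarith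
    set g : X → X := fun x => β⁻¹ • (T x - y) with hg
    have hκ : (K/(K+1) : NNReal) < 1 := by
      rw [← NNReal.coe_lt_coe]
      push_cast
      rw [div_lt_one (by positivity)]
      linarith
    have hglip : LipschitzWith (K/(K+1)) g := by
      apply LipschitzWith.of_dist_le_mul
      intro x x'
      have hd : dist (g x) (g x') = |β|⁻¹ * ‖T x - T x'‖ := by
        rw [hg]
        simp only [dist_eq_norm, ← smul_sub]
        have h7 : (T x - y) - (T x' - y) = T x - T x' := by abel
        rw [h7, norm_smul, Real.norm_eq_abs, abs_inv]
      rw [hd, dist_eq_norm]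
      have hT := hK.dist_le_mul x x'
      rw [dist_eq_norm, dist_eq_norm] at hT
      push_cast
      calc |β|⁻¹ * ‖T x - T x'‖ ≤ ((K:ℝ)+1)⁻¹ * ((K:ℝ) * ‖x - x'‖) := by
            apply mul_le_mul _ hT (norm_nonneg _) (by positivity)
            exact inv_anti₀ hKpos hβabs
        _ = (K:ℝ)/((K:ℝ)+1) * ‖x - x'‖ := by ring
    have hcontr : ContractingWith (K/(K+1)) g := ⟨hκ, hglip⟩
    set x := hcontr.fixedPoint g with hx
    have hfix : g x = x := hcontr.fixedPoint_isFixedPt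
    rw [hg] at hfix
    simp only at hfix
    have h8 : T x - y = β • x := by
      have h9 := congrArg (fun z : X => β • z) hfix
      simp only [smul_smul, mul_inv_cancel₀ (ne_of_lt hβneg), one_smul] at h9
      exact h9
    refine ⟨x, ?_⟩
    simp only
    rw [← h8]; abel
  -- inductive step: surjectivity propagates from β to β + δ/2
  have step : ∀ β : ℝ, β + δ/2 ≤ α →
      Function.Surjective (fun x : X => T x - β • x) →
      Function.Surjective (fun x : X => T x - (β + δ/2) • x) := by
    intro β hβ hsurj y
    have hβα : β ≤ α := by linarith
    set S : X → X := fun x => T x - β • x with hS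
    have hrinv : Function.RightInverse (Function.invFun S) S :=
      Function.rightInverse_invFun hsurj
    set g : X → X := fun x => Function.invFun S (y + (δ/2) • x) with hg
    have hSg : ∀ x, S (g x) = y + (δ/2) • x := fun x => hrinv _
    have hglip : LipschitzWith (1/2 : NNReal) g := by
      apply LipschitzWith.of_dist_le_mul
      intro x x'
      have k1 : δ * ‖g x - g x'‖ ≤ ‖S (g x) - S (g x')‖ := key β hβα (g x) (g x')
      have k2 : S (g x) - S (g x') = (δ/2) • (x - x') := by
        rw [hSg, hSg, smul_sub]; abel
      rw [k2, norm_smul, Real.norm_eq_abs, abs_of_nonneg (by linarith)] at k1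
      rw [dist_eq_norm, dist_eq_norm]
      push_cast
      nlinarith [k1, hδpos, norm_nonneg (g x - g x'), norm_nonneg (x - x')]
    have hcontr : ContractingWith (1/2 : NNReal) g := by
      constructor
      · rw [← NNReal.coe_lt_coe]; norm_num
      · exact hglip
    set x := hcontr.fixedPoint g with hx
    have hfix : g x = x := hcontr.fixedPoint_isFixedPt
    have hSx : S x = y + (δ/2) • x := by
      have h11 := hSg x
      rw [hfix] at h11
      exact h11
    rw [hS] at hSx
    simp only at hSx
    refine ⟨x, ?_⟩
    simp only
    rw [add_smul, ← sub_sub, hSx]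
    abel
  -- surjectivity at α via finite continuation
  have hsurj : Function.Surjective (fun x : X => T x - α • x) := by
    have hhalf : 0 < δ/2 := by linarith
    obtain ⟨n, hn⟩ := exists_nat_gt ((α + (K:ℝ) + 1) / (δ/2))
    have hn' : α + (K:ℝ) + 1 ≤ (n:ℝ) * (δ/2) := by
      rw [div_lt_iff₀ hhalf] at hn; linarith
    have ind : ∀ k : ℕ, (k:ℝ) ≤ (n:ℝ) →
        Function.Surjective (fun x : X => T x - (α - (n:ℝ)*(δ/2) + (k:ℝ)*(δ/2)) • x) := by
      intro k
      induction k with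
      | zero =>
        intro _
        apply base
        push_cast
        linarith
      | succ k ih =>
        intro hk
        have hk1 : (k:ℝ) + 1 ≤ (n:ℝ) := by push_cast at hk; linarith
        have hkn : (k:ℝ) ≤ (n:ℝ) := by linarith
        have hstep := step (α - (n:ℝ)*(δ/2) + (k:ℝ)*(δ/2))
          (by nlinarith) (ih hkn)
        have heq : α - (n:ℝ)*(δ/2) + ((k+1 : ℕ):ℝ)*(δ/2)
            = α - (n:ℝ)*(δ/2) + (k:ℝ)*(δ/2) + δ/2 := by push_cast; ring
        rw [heq]
        exact hstep
    have h10 := ind n le_rfl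
    have heq2 : α - (n:ℝ)*(δ/2) + (n:ℝ)*(δ/2) = α := by ring
    rw [heq2] at h10
    exact h10
  refine ⟨⟨hinj, hsurj⟩, ⟨Real.toNNReal (1/δ), ?_⟩⟩
  apply LipschitzWith.of_dist_le_mul
  intro a b
  set u := Function.invFun (fun x : X => T x - α • x) a with hu
  set v := Function.invFun (fun x : X => T x - α • x) b with hv
  have hua : T u - α • u = a := Function.rightInverse_invFun hsurj a
  have hvb : T v - α • v = b := Function.rightInverse_invFun hsurj b
  have k1 := key α le_rfl u v
  rw [hua, hvb] at k1
  rw [dist_eq_norm, dist_eq_norm, Real.coe_toNNReal _ (by positivity)]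
  rw [one_div, ← div_eq_inv_mul, le_div_iff₀ hδpos, mul_comm]
  exact k1
end

section
/- Let X be a Banach space, T : X → X a Lipschitz map with T(0)=0, and suppose there exist α₀ ∈ ℝ and β₀ > 0 such that ‖Tx − Ty − α(x − y)‖ ≥ β₀‖x − y‖ for all x, y ∈ X and all real α ≤ α₀. Then for every real α ≤ α₀, the map x ↦ Tx − αx is bijective and its inverse is Lipschitz with constant at most 1/β₀. -/
theorem stmt3 {X : Type*} [NormedAddCommGroup X] [NormedSpace ℝ X] [CompleteSpace X]
    (T : X → X) (hT0 : T 0 = 0) (hTlip : ∃ K : NNReal, LipschitzWith K T)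
    (α₀ β₀ : ℝ) (hβ₀ : 0 < β₀)
    (hyp : ∀ α : ℝ, α ≤ α₀ → ∀ x y : X, β₀ * ‖x - y‖ ≤ ‖T x - T y - α • (x - y)‖) :
    ∀ α : ℝ, α ≤ α₀ →
      Function.Bijective (fun x => T x - α • x) ∧
      ∀ u v : X,
        ‖Function.invFun (fun x => T x - α • x) u - Function.invFun (fun x => T x - α • x) v‖
          ≤ (1 / β₀) * ‖u - v‖ := by
  obtain ⟨K, hK⟩ := hTlip
  haveI : Nonempty X := ⟨0⟩
  -- reformulated lower bound
  have key : ∀ α : ℝ, α ≤ α₀ → ∀ x y : X,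
      β₀ * ‖x - y‖ ≤ ‖(T x - α • x) - (T y - α • y)‖ := by
    intro α hα x y
    have e : (T x - α • x) - (T y - α • y) = T x - T y - α • (x - y) := by
      rw [smul_sub]; abel
    rw [e]; exact hyp α hα x y
  -- injectivity
  have hinj : ∀ α : ℝ, α ≤ α₀ → Function.Injective (fun x => T x - α • x) := by
    intro α hα x y h
    have h2 := key α hα x y
    simp only [h, sub_self, norm_zero] at h2
    have hxy : ‖x - y‖ = 0 := le_antisymm (by nlinarith [norm_nonneg (x - y)]) (norm_nonneg _)
    exact norm_sub_eq_zero_iff.mp hxy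
  -- base case: very negative α gives surjectivity
  have hbase : ∀ α : ℝ, α ≤ -((K : ℝ) + 1) →
      Function.Surjective (fun x => T x - α • x) := by
    intro α hα y
    have hKnn : (0:ℝ) ≤ (K:ℝ) := K.coe_nonneg
    have hαneg : α < 0 := lt_of_le_of_lt hα (by linarith)
    have hαabs : (K:ℝ) + 1 ≤ |α| := by
      rw [abs_of_neg hαneg]; linarith
    set c : NNReal := K / (K + 1) with hc
    have hcoe : (c : ℝ) = (K : ℝ) / ((K : ℝ) + 1) := by push_cast [hc]; ring
    have hcontr : ContractingWith c (fun x => α⁻¹ • (T x - y)) := by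
      constructor
      · rw [← NNReal.coe_lt_coe, hcoe, NNReal.coe_one]
        rw [div_lt_one (by linarith)]; linarith
      · apply LipschitzWith.of_dist_le_mul
        intro x x'
        simp only [dist_eq_norm]
        have e : α⁻¹ • (T x - y) - α⁻¹ • (T x' - y) = α⁻¹ • (T x - T x') := by
          rw [← smul_sub]; congr 1; abel
        rw [e, norm_smul, norm_inv, Real.norm_eq_abs]
        have hTd : ‖T x - T x'‖ ≤ (K:ℝ) * ‖x - x'‖ := by
          have := hK.dist_le_mul x x'
          simpa [dist_eq_norm] using this
        have hpos : (0:ℝ) < |α| := by linarith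
        rw [hcoe]
        rw [inv_mul_le_iff₀ hpos]
        have hKe : (K:ℝ)/((K:ℝ)+1) * ((K:ℝ)+1) = (K:ℝ) := div_mul_cancel₀ _ (by linarith)
        set q : ℝ := (K:ℝ)/((K:ℝ)+1) with hq
        have hqn : 0 ≤ q := div_nonneg hKnn (by linarith)
        have h3 : ((K:ℝ)+1) * (q * ‖x - x'‖) ≤ |α| * (q * ‖x - x'‖) :=
          mul_le_mul_of_nonneg_right hαabs (mul_nonneg hqn (norm_nonneg _))
        have h4 : ((K:ℝ)+1) * (q * ‖x - x'‖) = (K:ℝ) * ‖x - x'‖ := by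
          rw [← mul_assoc, mul_comm ((K:ℝ)+1) q, hKe]
        linarith
    set x := hcontr.fixedPoint (fun x => α⁻¹ • (T x - y)) with hx
    have hfix : α⁻¹ • (T x - y) = x := hcontr.fixedPoint_isFixedPt
    refine ⟨x, ?_⟩
    have hαne : α ≠ 0 := ne_of_lt hαneg
    have := congrArg (fun z => α • z) hfix
    simp only [smul_inv_smul₀ hαne] at this
    show T x - α • x = y
    rw [← this]; abel
  -- step: from β to β + β₀/2
  have hstep : ∀ β : ℝ, β ≤ α₀ → Function.Surjective (fun x => T x - β • x) →
      Function.Surjective (fun x => T x - (β + β₀/2) • x) := by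
    intro β hβ hsurj y
    set g := Function.invFun (fun x => T x - β • x) with hg
    have hright : ∀ u, T (g u) - β • (g u) = u := fun u =>
      Function.rightInverse_invFun hsurj u
    have hglip : ∀ u v, β₀ * ‖g u - g v‖ ≤ ‖u - v‖ := by
      intro u v
      have := key β hβ (g u) (g v)
      rwa [hright, hright] at this
    have hcontr : ContractingWith (1/2 : NNReal) (fun x => g (y + (β₀/2) • x)) := by
      constructor
      · rw [← NNReal.coe_lt_coe]; norm_num
      · apply LipschitzWith.of_dist_le_mul
        intro x x'
        simp only [dist_eq_norm]
        have e : (y + (β₀/2) • x) - (y + (β₀/2) • x') = (β₀/2) • (x - x') := by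
          rw [smul_sub]; abel
        have h1 := hglip (y + (β₀/2) • x) (y + (β₀/2) • x')
        rw [e, norm_smul, Real.norm_eq_abs, abs_of_pos (by linarith)] at h1
        have hcoe : ((1/2 : NNReal) : ℝ) = 1/2 := by norm_num
        rw [hcoe]
        nlinarith [norm_nonneg (x - x')]
    set x := hcontr.fixedPoint (fun x => g (y + (β₀/2) • x)) with hx
    have hfix : g (y + (β₀/2) • x) = x := hcontr.fixedPoint_isFixedPt
    refine ⟨x, ?_⟩
    have := congrArg (fun z => T z - β • z) hfix
    simp only [hright] at this
    show T x - (β + β₀/2) • x = y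
    rw [add_smul, show T x - (β • x + (β₀/2) • x) = T x - β • x - (β₀/2) • x from by abel,
      ← this]
    abel
  -- induction: surjectivity for all α ≤ α₀
  have hsurjAll : ∀ α : ℝ, α ≤ α₀ → Function.Surjective (fun x => T x - α • x) := by
    have hind : ∀ n : ℕ, ∀ α : ℝ, α ≤ α₀ → α ≤ -((K:ℝ)+1) + n * (β₀/2) →
        Function.Surjective (fun x => T x - α • x) := by
      intro n
      induction n with
      | zero =>
        intro α hα hα2
        exact hbase α (by simpa using hα2)
      | succ n ih =>
        intro α hα hα2
        by_cases h : α ≤ -((K:ℝ)+1) + n * (β₀/2)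
        · exact ih α hα h
        · push_neg at h
          have hβle : α - β₀/2 ≤ α₀ := by linarith
          have hβle2 : α - β₀/2 ≤ -((K:ℝ)+1) + n * (β₀/2) := by
            push_cast at hα2; linarith
          have hs := hstep (α - β₀/2) hβle (ih (α - β₀/2) hβle hβle2)
          have e : α - β₀/2 + β₀/2 = α := by ring
          rwa [e] at hs
    intro α hα
    obtain ⟨n, hn⟩ := exists_nat_ge ((α + (K:ℝ) + 1) / (β₀/2))
    refine hind n α hα ?_
    rw [div_le_iff₀ (by linarith)] at hn
    linarith
  -- conclusion
  intro α hα
  have hsurj := hsurjAll α hα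
  refine ⟨⟨hinj α hα, hsurj⟩, ?_⟩
  intro u v
  set g := Function.invFun (fun x => T x - α • x) with hg
  have hright : ∀ u, T (g u) - α • (g u) = u := fun u =>
    Function.rightInverse_invFun hsurj u
  have h1 := key α hα (g u) (g v)
  rw [hright, hright] at h1
  rw [div_mul_eq_mul_div, one_mul, le_div_iff₀ hβ₀]
  nlinarith [norm_nonneg (g u - g v)]
end

section
/- Let X be a Banach space, T : X → X a Lipschitz map with T(0)=0, and suppose there exist α₁ ∈ ℝ and β₁ > 0 such that ‖Tx − Ty − α(x − y)‖ ≥ β₁‖x − y‖ for all x, y ∈ X and all real α ≤ α₁. Then for every real α < α₁ + β₁, the map x ↦ Tx − αx is bijective with Lipschitz inverse. -/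
open Function

section Aux

variable {X : Type*} [NormedAddCommGroup X] [NormedSpace ℝ X] [CompleteSpace X]

lemma exp_inj {f : X → X} {c : ℝ} (hc : 0 < c)
    (hexp : ∀ x y : X, c * ‖x - y‖ ≤ ‖f x - f y‖) : Function.Injective f := by
  intro x y h
  by_contra hne
  have h1 : 0 < ‖x - y‖ := by rw [norm_pos_iff, sub_ne_zero]; exact hne
  have h2 := hexp x y
  rw [h, sub_self, norm_zero] at h2
  nlinarith

lemma inv_bound {f : X → X} {c : ℝ} (hc : 0 < c)
    (hexp : ∀ x y : X, c * ‖x - y‖ ≤ ‖f x - f y‖) (hsurj : Function.Surjective f)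
    (u v : X) : ‖invFun f u - invFun f v‖ ≤ c⁻¹ * ‖u - v‖ := by
  have hu : f (invFun f u) = u := rightInverse_invFun hsurj u
  have hv : f (invFun f v) = v := rightInverse_invFun hsurj v
  have h2 := hexp (invFun f u) (invFun f v)
  rw [hu, hv] at h2
  calc ‖invFun f u - invFun f v‖ ≤ ‖u - v‖ / c := (le_div_iff₀' hc).2 h2
    _ = c⁻¹ * ‖u - v‖ := by ring

lemma surj_perturb {S g : X → X} {c k : ℝ} (hc : 0 < c)
    (hexp : ∀ x y : X, c * ‖x - y‖ ≤ ‖S x - S y‖) (hsurj : Function.Surjective S)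
    (hk : 0 ≤ k) (hkc : k < c) (hg : ∀ x y : X, ‖g x - g y‖ ≤ k * ‖x - y‖) :
    Function.Surjective (fun x => S x + g x) := by
  intro y
  set F : X → X := fun x => invFun S (y - g x) with hF
  have hlip : LipschitzWith ⟨k / c, by positivity⟩ F := by
    apply LipschitzWith.of_dist_le_mul
    intro x x'
    simp only [dist_eq_norm, NNReal.coe_mk, hF]
    calc ‖invFun S (y - g x) - invFun S (y - g x')‖
        ≤ c⁻¹ * ‖(y - g x) - (y - g x')‖ := inv_bound hc hexp hsurj _ _
      _ = c⁻¹ * ‖g x' - g x‖ := by congr 1; abel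
      _ ≤ c⁻¹ * (k * ‖x' - x‖) := by
          apply mul_le_mul_of_nonneg_left (hg x' x) (by positivity)
      _ = (k / c) * ‖x - x'‖ := by rw [norm_sub_rev]; ring
  have hcontr : ContractingWith ⟨k / c, by positivity⟩ F := by
    refine ⟨?_, hlip⟩
    apply NNReal.coe_lt_coe.1
    exact (div_lt_one hc).2 hkc
  have : Nonempty X := ⟨0⟩
  obtain ⟨x, hx⟩ : ∃ x, Function.IsFixedPt F x := ⟨_, hcontr.fixedPoint_isFixedPt⟩
  refine ⟨x, ?_⟩
  have : S (invFun S (y - g x)) = S x := congrArg S hx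
  rw [rightInverse_invFun hsurj] at this
  simp only []
  rw [← this]; abel

end Aux

theorem stmt4 {X : Type*} [NormedAddCommGroup X] [NormedSpace ℝ X] [CompleteSpace X]
    (T : X → X) (hT0 : T 0 = 0) (hTlip : ∃ K : NNReal, LipschitzWith K T)
    (α₁ β₁ : ℝ) (hβ₁ : 0 < β₁)
    (hyp : ∀ α : ℝ, α ≤ α₁ → ∀ x y : X, β₁ * ‖x - y‖ ≤ ‖T x - T y - α • (x - y)‖) :
    ∀ α : ℝ, α < α₁ + β₁ →
      Function.Bijective (fun x => T x - α • x) ∧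
      ∃ K : NNReal, LipschitzWith K (Function.invFun (fun x => T x - α • x)) := by
  obtain ⟨K, hK⟩ := hTlip
  have hTnorm : ∀ x y : X, ‖T x - T y‖ ≤ K * ‖x - y‖ := by
    intro x y
    have := hK.dist_le_mul x y
    simpa [dist_eq_norm] using this
  -- rewriting S_α differences
  have hdiff : ∀ (α : ℝ) (x y : X), (T x - α • x) - (T y - α • y) = T x - T y - α • (x - y) := by
    intro α x y
    rw [smul_sub]; abel
  -- expansivity for α ≤ α₁
  have hexp1 : ∀ α : ℝ, α ≤ α₁ → ∀ x y : X,
      β₁ * ‖x - y‖ ≤ ‖(T x - α • x) - (T y - α • y)‖ := by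
    intro α hα x y
    rw [hdiff]; exact hyp α hα x y
  -- expansivity for α₁ < α < α₁ + β₁
  have hexp2 : ∀ α : ℝ, α₁ ≤ α → α < α₁ + β₁ → ∀ x y : X,
      (β₁ - (α - α₁)) * ‖x - y‖ ≤ ‖(T x - α • x) - (T y - α • y)‖ := by
    intro α hα hα' x y
    rw [hdiff]
    have h1 : T x - T y - α • (x - y) = (T x - T y - α₁ • (x - y)) - (α - α₁) • (x - y) := by
      rw [sub_smul]; abel
    have h2 := hyp α₁ le_rfl x y
    have h3 : ‖(α - α₁) • (x - y)‖ = (α - α₁) * ‖x - y‖ := by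
      rw [norm_smul, Real.norm_eq_abs, abs_of_nonneg (by linarith)]
    calc (β₁ - (α - α₁)) * ‖x - y‖
        = β₁ * ‖x - y‖ - (α - α₁) * ‖x - y‖ := by ring
      _ ≤ ‖T x - T y - α₁ • (x - y)‖ - ‖(α - α₁) • (x - y)‖ := by rw [h3]; linarith
      _ ≤ ‖(T x - T y - α₁ • (x - y)) - (α - α₁) • (x - y)‖ := by
          exact norm_sub_norm_le _ _ |>.trans (le_refl _) -- fix
      _ = ‖T x - T y - α • (x - y)‖ := by rw [h1]
  -- step lemma for surjectivity
  have step : ∀ α : ℝ, α ≤ α₁ → Function.Surjective (fun x => T x - α • x) →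
      ∀ α' : ℝ, |α' - α| < β₁ → Function.Surjective (fun x => T x - α' • x) := by
    intro α hα hsurj α' hα'
    have h := surj_perturb (S := fun x => T x - α • x) (g := fun x => (α - α') • x)
      (c := β₁) (k := |α' - α|) hβ₁ (hexp1 α hα) hsurj (abs_nonneg _) hα' ?_
    · have heq : (fun x : X => (T x - α • x) + (α - α') • x) = (fun x => T x - α' • x) := by
        funext x
        rw [sub_smul]; abel
      rwa [heq] at h
    · intro x y
      have : (α - α') • x - (α - α') • y = (α - α') • (x - y) := by rw [smul_sub]
      rw [this, norm_smul, Real.norm_eq_abs, abs_sub_comm]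
  -- base case
  have base : ∀ α : ℝ, α < -(K : ℝ) - 1 → Function.Surjective (fun x => T x - α • x) := by
    intro α hα
    have hαneg : α < 0 := by
      have : (0:ℝ) ≤ K := K.coe_nonneg
      linarith
    have h := surj_perturb (S := fun x : X => (-α) • x) (g := T)
      (c := -α) (k := (K : ℝ)) (by linarith) ?_ ?_ K.coe_nonneg (by linarith) hTnorm
    · have heq : (fun x : X => (-α) • x + T x) = (fun x => T x - α • x) := by
        funext x
        rw [neg_smul]; abel
      rwa [heq] at h
    · intro x y
      rw [← smul_sub, norm_smul, Real.norm_eq_abs, abs_of_pos (by linarith)]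
    · intro z
      refine ⟨(-α)⁻¹ • z, ?_⟩
      simp only [smul_smul]
      rw [mul_inv_cancel₀ (by linarith), one_smul]
  -- induction
  have ind : ∀ n : ℕ, ∀ α : ℝ, α ≤ α₁ → α < -(K : ℝ) - 1 + n * (β₁ / 2) →
      Function.Surjective (fun x => T x - α • x) := by
    intro n
    induction n with
    | zero => intro α _ hα; exact base α (by simpa using hα)
    | succ n ih =>
      intro α hα hαn
      by_cases h : α < -(K : ℝ) - 1 + n * (β₁ / 2)
      · exact ih α hα h
      · push_neg at h
        have hα' : α - β₁ / 2 ≤ α₁ := by linarith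
        have hα'n : α - β₁ / 2 < -(K : ℝ) - 1 + n * (β₁ / 2) := by
          push_cast at hαn ⊢
          nlinarith [hαn]
        exact step (α - β₁ / 2) hα' (ih (α - β₁ / 2) (by linarith) hα'n) α
          (by rw [abs_of_pos (by linarith)]; linarith)
  have surj_le : ∀ α : ℝ, α ≤ α₁ → Function.Surjective (fun x => T x - α • x) := by
    intro α hα
    obtain ⟨n, hn⟩ := exists_nat_gt ((α + (K : ℝ) + 1) / (β₁ / 2))
    apply ind n α hα
    have h2 : α + (K : ℝ) + 1 < n * (β₁ / 2) := by
      rw [div_lt_iff₀ (by linarith)] at hn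
      linarith
    linarith
  -- main
  intro α hα
  have hc : 0 < min β₁ (α₁ + β₁ - α) := lt_min hβ₁ (by linarith)
  set c := min β₁ (α₁ + β₁ - α) with hcdef
  have hexp : ∀ x y : X, c * ‖x - y‖ ≤ ‖(T x - α • x) - (T y - α • y)‖ := by
    intro x y
    by_cases h : α ≤ α₁
    · calc c * ‖x - y‖ ≤ β₁ * ‖x - y‖ := by
            apply mul_le_mul_of_nonneg_right (min_le_left _ _) (norm_nonneg _)
        _ ≤ _ := hexp1 α h x y
    · push_neg at h
      calc c * ‖x - y‖ ≤ (β₁ - (α - α₁)) * ‖x - y‖ := by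
            apply mul_le_mul_of_nonneg_right _ (norm_nonneg _)
            have := min_le_right β₁ (α₁ + β₁ - α)
            linarith [this]
        _ ≤ _ := hexp2 α h.le hα x y
  have hsurj : Function.Surjective (fun x => T x - α • x) := by
    by_cases h : α ≤ α₁
    · exact surj_le α h
    · push_neg at h
      exact step α₁ le_rfl (surj_le α₁ le_rfl) α
        (by rw [abs_of_pos (by linarith)]; linarith)
  have hinj : Function.Injective (fun x => T x - α • x) := exp_inj hc hexp
  refine ⟨⟨hinj, hsurj⟩, ⟨⟨c⁻¹, by positivity⟩, ?_⟩⟩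
  apply LipschitzWith.of_dist_le_mul
  intro u v
  simp only [dist_eq_norm, NNReal.coe_mk]
  exact inv_bound hc hexp hsurj u v
end

section
/- Let X and Y be Banach spaces, S : X → Y a bijective Lipschitz map with Lipschitz inverse, and T : X → Y a map such that there exist λ₁, λ₂ ∈ [0,1) with ‖Tx − Ty − (Sx − Sy)‖ ≤ λ₁‖Sx − Sy‖ + λ₂‖Tx − Ty‖ for all x, y ∈ X. Then T is bijective and ((1−λ₁)/(1+λ₂))‖Sx − Sy‖ ≤ ‖Tx − Ty‖ ≤ ((1+λ₁)/(1−λ₂))‖Sx − Sy‖ for all x, y ∈ X. -/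
set_option maxHeartbeats 2000000 in
theorem stmt5 {X Y : Type*} [NormedAddCommGroup X] [NormedSpace ℝ X] [CompleteSpace X]
    [NormedAddCommGroup Y] [NormedSpace ℝ Y] [CompleteSpace Y]
    (S T : X → Y) (hSbij : Function.Bijective S)
    (hSlip : ∃ K : NNReal, LipschitzWith K S)
    (hSinv : ∃ K : NNReal, LipschitzWith K (Function.invFun S))
    (l1 l2 : ℝ)
    (hl1 : l1 ∈ Set.Ico (0 : ℝ) 1) (hl2 : l2 ∈ Set.Ico (0 : ℝ) 1)
    (hyp : ∀ x y : X, ‖T x - T y - (S x - S y)‖ ≤ l1 * ‖S x - S y‖ + l2 * ‖T x - T y‖) :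
    Function.Bijective T ∧
    ∀ x y : X,
      (1 - l1) / (1 + l2) * ‖S x - S y‖ ≤ ‖T x - T y‖ ∧
      ‖T x - T y‖ ≤ (1 + l1) / (1 - l2) * ‖S x - S y‖ := by
  obtain ⟨hl1n, hl1lt⟩ := hl1
  obtain ⟨hl2n, hl2lt⟩ := hl2
  -- triangle inequalities
  have hBA : ∀ x y : X, ‖T x - T y‖ ≤ ‖S x - S y‖ + ‖T x - T y - (S x - S y)‖ := by
    intro x y
    have h : T x - T y = (S x - S y) + (T x - T y - (S x - S y)) := by abel
    nth_rewrite 1 [h]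
    exact norm_add_le _ _
  have hAB : ∀ x y : X, ‖S x - S y‖ ≤ ‖T x - T y‖ + ‖T x - T y - (S x - S y)‖ := by
    intro x y
    have h : S x - S y = (T x - T y) - (T x - T y - (S x - S y)) := by abel
    nth_rewrite 1 [h]
    exact norm_sub_le _ _
  -- the two norm inequalities of the conclusion
  have hub : ∀ x y : X, ‖T x - T y‖ ≤ (1 + l1) / (1 - l2) * ‖S x - S y‖ := by
    intro x y
    have h1 := hyp x y
    have h2 := hBA x y
    rw [div_mul_eq_mul_div, le_div_iff₀ (by linarith)]
    nlinarith [norm_nonneg (S x - S y), norm_nonneg (T x - T y)]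
  have hlb : ∀ x y : X, (1 - l1) / (1 + l2) * ‖S x - S y‖ ≤ ‖T x - T y‖ := by
    intro x y
    have h1 := hyp x y
    have h2 := hAB x y
    rw [div_mul_eq_mul_div, div_le_iff₀ (by linarith : (0:ℝ) < 1 + l2)]
    nlinarith [norm_nonneg (S x - S y), norm_nonneg (T x - T y)]
  -- T is injective
  have Tinj : Function.Injective T := by
    intro x y h
    have h1 := hlb x y
    rw [h, sub_self, norm_zero] at h1
    have hpos : 0 < (1 - l1) / (1 + l2) := div_pos (by linarith) (by linarith)
    have h5 : ‖S x - S y‖ ≤ 0 := by nlinarith [norm_nonneg (S x - S y)]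
    exact hSbij.1 (sub_eq_zero.mp (norm_le_zero_iff.mp h5))
  rcases isEmpty_or_nonempty X with hX | hX
  · refine ⟨⟨Tinj, ?_⟩, ?_⟩
    · intro y
      obtain ⟨x, -⟩ := hSbij.2 y
      exact (hX.false x).elim
    · intro x
      exact (hX.false x).elim
  -- main case : X nonempty
  obtain ⟨K, hK⟩ := hSlip
  obtain ⟨K', hK'⟩ := hSinv
  have hSA : ∀ x y : X, ‖S x - S y‖ ≤ (K : ℝ) * ‖x - y‖ := by
    intro x y
    have := hK.dist_le_mul x y
    simpa [dist_eq_norm] using this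
  have hXle : ∀ x y : X, ‖x - y‖ ≤ (K' : ℝ) * ‖S x - S y‖ := by
    intro x y
    have h := hK'.dist_le_mul (S x) (S y)
    rw [dist_eq_norm, dist_eq_norm, Function.leftInverse_invFun hSbij.1 x,
      Function.leftInverse_invFun hSbij.1 y] at h
    exact h
  set m : ℝ := max l1 l2 with hmdef
  clear_value m
  have hm0 : 0 ≤ m := hmdef ▸ le_trans hl1n (le_max_left _ _)
  have hm1 : m < 1 := hmdef ▸ max_lt hl1lt hl2lt
  have h1m : (0:ℝ) < 1 - m := by linarith
  set L : ℝ := (l1 + l2) / (1 - l2) * (K : ℝ) + 1 with hLdef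
  clear_value L
  have hLpos : (0:ℝ) < L := by
    rw [hLdef]
    have : 0 ≤ (l1 + l2) / (1 - l2) * (K : ℝ) :=
      mul_nonneg (div_nonneg (by linarith) (by linarith)) K.coe_nonneg
    linarith
  -- T - S is Lipschitz with constant L
  have hD : ∀ x y : X, ‖(T x - S x) - (T y - S y)‖ ≤ L * ‖x - y‖ := by
    intro x y
    have heq : (T x - S x) - (T y - S y) = T x - T y - (S x - S y) := by abel
    rw [heq]
    have h1 := hyp x y
    have h2 := hBA x y
    have hEA : (1 - l2) * ‖T x - T y - (S x - S y)‖ ≤ (l1 + l2) * ‖S x - S y‖ := by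
      nlinarith [mul_le_mul_of_nonneg_left h2 hl2n]
    have hAx := hSA x y
    have h4 : ‖T x - T y - (S x - S y)‖ ≤ (l1 + l2) / (1 - l2) * ‖S x - S y‖ := by
      rw [div_mul_eq_mul_div, le_div_iff₀ (by linarith)]
      linarith
    have h3 : (l1 + l2) / (1 - l2) * ‖S x - S y‖ ≤ (l1 + l2) / (1 - l2) * ((K:ℝ) * ‖x - y‖) :=
      mul_le_mul_of_nonneg_left hAx (div_nonneg (by linarith) (by linarith))
    have h5 := norm_nonneg (x - y)
    nlinarith
  -- the homotopy
  obtain ⟨TT, hTTapp⟩ : ∃ TT : ℝ → X → Y, ∀ s (x : X), TT s x = S x + s • (T x - S x) :=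
    ⟨fun s x => S x + s • (T x - S x), fun _ _ => rfl⟩
  have hTTd : ∀ (s : ℝ) (x y : X),
      TT s x - TT s y = (S x - S y) + s • (T x - T y - (S x - S y)) := by
    intro s x y
    rw [hTTapp, hTTapp]
    module
  -- uniform lower bound along the homotopy
  have hlow : ∀ (s : ℝ), 0 ≤ s → s ≤ 1 → ∀ x y : X,
      (1 - m) / 2 * ‖S x - S y‖ ≤ ‖TT s x - TT s y‖ := by
    intro s hs0 hs1 x y
    have hE := hyp x y
    have ha1 : ‖S x - S y‖ ≤ ‖TT s x - TT s y‖ + s * ‖T x - T y - (S x - S y)‖ := by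
      have h : S x - S y = (TT s x - TT s y) - s • (T x - T y - (S x - S y)) := by
        rw [hTTd]; abel
      calc ‖S x - S y‖ = ‖(TT s x - TT s y) - s • (T x - T y - (S x - S y))‖ := by rw [← h]
        _ ≤ ‖TT s x - TT s y‖ + ‖s • (T x - T y - (S x - S y))‖ := norm_sub_le _ _
        _ = ‖TT s x - TT s y‖ + s * ‖T x - T y - (S x - S y)‖ := by
            rw [norm_smul, Real.norm_eq_abs, abs_of_nonneg hs0]
    have ha2 : ‖T x - T y‖ ≤ ‖TT s x - TT s y‖ + (1 - s) * ‖T x - T y - (S x - S y)‖ := by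
      have h : T x - T y = (TT s x - TT s y) + (1 - s) • (T x - T y - (S x - S y)) := by
        rw [hTTd]; module
      calc ‖T x - T y‖
          = ‖(TT s x - TT s y) + (1 - s) • (T x - T y - (S x - S y))‖ := by rw [← h]
        _ ≤ ‖TT s x - TT s y‖ + ‖(1 - s) • (T x - T y - (S x - S y))‖ := norm_add_le _ _
        _ = ‖TT s x - TT s y‖ + (1 - s) * ‖T x - T y - (S x - S y)‖ := by
            rw [norm_smul, Real.norm_eq_abs, abs_of_nonneg (by linarith)]
    have hα : (0:ℝ) ≤ 1 - (1 - s) * l2 := by nlinarith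
    have h1 := mul_le_mul_of_nonneg_left ha1 hα
    have h2 := mul_le_mul_of_nonneg_left ha2 (mul_nonneg hs0 hl2n)
    have h3 := mul_le_mul_of_nonneg_left hE hs0
    have h4 : ((1 - s) * l2 + s * l1) * ‖S x - S y‖ ≤ m * ‖S x - S y‖ := by
      apply mul_le_mul_of_nonneg_right _ (norm_nonneg _)
      nlinarith [le_max_left l1 l2, le_max_right l1 l2]
    have h5 : (1 - (1 - s) * l2 + s * l2) * ‖TT s x - TT s y‖ ≤ 2 * ‖TT s x - TT s y‖ := by
      apply mul_le_mul_of_nonneg_right _ (norm_nonneg _)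
      nlinarith
    nlinarith [h1, h2, h3, h4, h5]
  -- constants for the continuation
  set δ : ℝ := (1 - m) / (4 * ((K' : ℝ) + 1) * L) with hδdef
  clear_value δ
  have hδ : 0 < δ := by
    rw [hδdef]
    apply div_pos h1m
    have : (0:ℝ) < (K' : ℝ) + 1 := by positivity
    positivity
  -- the openness/step lemma
  have step : ∀ s : ℝ, 0 ≤ s → s ≤ 1 → ∀ s' : ℝ, |s' - s| ≤ δ →
      Function.Surjective (TT s) → Function.Surjective (TT s') := by
    intro s hs0 hs1 s' hss hsurj y
    set g := Function.invFun (TT s) with hgdef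
    have hginv : ∀ u, TT s (g u) = u := fun u => Function.rightInverse_invFun hsurj u
    clear_value g
    have hglip : ∀ u v : Y, (1 - m) * ‖g u - g v‖ ≤ 2 * (K' : ℝ) * ‖u - v‖ := by
      intro u v
      have h1 := hXle (g u) (g v)
      have h2 := hlow s hs0 hs1 (g u) (g v)
      rw [hginv u, hginv v] at h2
      nlinarith [mul_le_mul_of_nonneg_left h1 (le_of_lt h1m),
        mul_le_mul_of_nonneg_left h2 (by positivity : (0:ℝ) ≤ 2 * (K' : ℝ))]
    set Φ : X → X := fun x => g (y - (s' - s) • (T x - S x)) with hΦdef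
    clear_value Φ
    have hΦlip : ∀ a b : X, ‖Φ a - Φ b‖ ≤ (1/2) * ‖a - b‖ := by
      intro a b
      have hu : ‖(y - (s' - s) • (T a - S a)) - (y - (s' - s) • (T b - S b))‖
          ≤ δ * (L * ‖a - b‖) := by
        have heq : (y - (s' - s) • (T a - S a)) - (y - (s' - s) • (T b - S b))
            = (s' - s) • ((T b - S b) - (T a - S a)) := by module
        rw [heq, norm_smul, Real.norm_eq_abs]
        have hd := hD b a
        rw [norm_sub_rev b a] at hd
        exact mul_le_mul hss hd (norm_nonneg _) (le_of_lt hδ)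
      have h2 := hglip (y - (s' - s) • (T a - S a)) (y - (s' - s) • (T b - S b))
      have hΦab : Φ a - Φ b
          = g (y - (s' - s) • (T a - S a)) - g (y - (s' - s) • (T b - S b)) := by
        rw [hΦdef]
      have hkey : 2 * (K' : ℝ) * (δ * (L * ‖a - b‖)) ≤ (1 - m) * ((1/2) * ‖a - b‖) := by
        have hc : 2 * (K' : ℝ) * δ * L ≤ (1 - m) * (1/2) := by
          have hDpos : (0:ℝ) < 4 * ((K' : ℝ) + 1) * L := by positivity
          rw [hδdef, show 2 * (K' : ℝ) * ((1 - m) / (4 * ((K' : ℝ) + 1) * L)) * L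
            = (2 * (K' : ℝ) * (1 - m) * L) / (4 * ((K' : ℝ) + 1) * L) from by ring,
            div_le_iff₀ hDpos]
          nlinarith [mul_pos h1m hLpos, K'.coe_nonneg, mul_nonneg (mul_nonneg
            (le_of_lt h1m) (le_of_lt hLpos)) K'.coe_nonneg]
        nlinarith [mul_le_mul_of_nonneg_right hc (norm_nonneg (a - b))]
      rw [hΦab]
      have h3 : (1 - m) * ‖g (y - (s' - s) • (T a - S a)) - g (y - (s' - s) • (T b - S b))‖
          ≤ (1 - m) * ((1/2) * ‖a - b‖) := by
        nlinarith [mul_le_mul_of_nonneg_left hu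
          (by positivity : (0:ℝ) ≤ 2 * (K' : ℝ))]
      exact le_of_mul_le_mul_left h3 h1m
    have hlip : LipschitzWith (1/2 : NNReal) Φ := by
      apply LipschitzWith.of_dist_le_mul
      intro a b
      have hc : ((1/2 : NNReal) : ℝ) = 1/2 := by norm_num
      rw [hc, dist_eq_norm, dist_eq_norm]
      exact hΦlip a b
    have hcontr : ContractingWith (1/2 : NNReal) Φ :=
      ⟨by rw [← NNReal.coe_lt_coe]; norm_num, hlip⟩
    set x₀ := ContractingWith.fixedPoint Φ hcontr with hx₀
    have hfix : Φ x₀ = x₀ := ContractingWith.fixedPoint_isFixedPt hcontr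
    clear_value x₀
    refine ⟨x₀, ?_⟩
    have h7 : TT s (Φ x₀) = TT s x₀ := congrArg (TT s) hfix
    rw [hΦdef] at h7
    simp only at h7
    rw [hginv] at h7
    have h8 : y = TT s x₀ + (s' - s) • (T x₀ - S x₀) := eq_add_of_sub_eq h7
    rw [hTTapp] at h8 ⊢
    rw [h8]
    module
  -- induction along the homotopy
  have main : ∀ n : ℕ, Function.Surjective (TT (min ((n : ℝ) * δ) 1)) := by
    intro n
    induction n with
    | zero =>
      have h0 : min ((0 : ℕ) * δ : ℝ) 1 = 0 := by
        simp
      rw [h0]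
      intro y
      obtain ⟨x, hx⟩ := hSbij.2 y
      refine ⟨x, ?_⟩
      rw [hTTapp, zero_smul, add_zero]
      exact hx
    | succ n ih =>
      have hsn0 : (0:ℝ) ≤ min ((n : ℝ) * δ) 1 :=
        le_min (mul_nonneg (Nat.cast_nonneg n) (le_of_lt hδ)) zero_le_one
      have hsn1 : min ((n : ℝ) * δ) 1 ≤ 1 := min_le_right _ _
      apply step (min ((n : ℝ) * δ) 1) hsn0 hsn1 _ _ ih
      rw [abs_le]
      constructor
      · have : min ((n : ℝ) * δ) 1 ≤ min (((n : ℕ) + 1 : ℝ) * δ) 1 := by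
          apply min_le_min _ le_rfl
          nlinarith [le_of_lt hδ]
        push_cast at this ⊢
        linarith
      · rcases le_total ((n : ℝ) * δ) 1 with h | h
        · have h1 : min (((n : ℕ) + 1 : ℝ) * δ) 1 ≤ ((n : ℝ) + 1) * δ := by
            push_cast
            exact min_le_left _ _
          rw [min_eq_left h]
          push_cast at h1 ⊢
          linarith
        · rw [min_eq_right h]
          have h1 : min (((n : ℕ) + 1 : ℝ) * δ) 1 ≤ 1 := min_le_right _ _
          push_cast at h1 ⊢
          linarith [le_of_lt hδ]
  -- conclusion
  have Tsurj : Function.Surjective T := by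
    obtain ⟨n, hn⟩ := exists_nat_ge (1 / δ)
    have h1n : 1 ≤ (n : ℝ) * δ := by
      rw [div_le_iff₀ hδ] at hn
      linarith
    have hmn := main n
    rw [min_eq_right h1n] at hmn
    intro y
    obtain ⟨x, hx⟩ := hmn y
    refine ⟨x, ?_⟩
    rw [← hx, hTTapp]
    module
  exact ⟨⟨Tinj, Tsurj⟩, fun x y => ⟨hlb x y, hub x y⟩⟩
end

section
/- Let X, Y be Banach spaces, S : X → Y a bijective Lipschitz map with Lipschitz inverse, and T : X → Y a map satisfying ‖Tx − Ty − (Sx − Sy)‖ ≤ λ₁‖Sx − Sy‖ + λ₂‖Tx − Ty‖ for all x, y ∈ X, with λ₁, λ₂ ∈ [0,1). Then T is bijective and for all u, v ∈ Y, ((1−λ₂)/(1+λ₁))·(1/Lip(S))·‖u − v‖ ≤ ‖T⁻¹u − T⁻¹v‖ ≤ ((1+λ₂)/(1−λ₁))·Lip(S⁻¹)·‖u − v‖. -/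
/-- The optimal Lipschitz constant of a map between normed spaces. -/
noncomputable def lipConst {X Y : Type*} [NormedAddCommGroup X] [NormedAddCommGroup Y]
    (f : X → Y) : ℝ :=
  sInf {K : ℝ | 0 ≤ K ∧ ∀ x y : X, ‖f x - f y‖ ≤ K * ‖x - y‖}

lemma lipConst_spec {X Y : Type*} [NormedAddCommGroup X] [NormedAddCommGroup Y]
    (f : X → Y) (hK : ∃ K : NNReal, LipschitzWith K f) :
    0 ≤ lipConst f ∧ ∀ x y : X, ‖f x - f y‖ ≤ lipConst f * ‖x - y‖ := by
  rw [lipConst]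
  set A := {K : ℝ | 0 ≤ K ∧ ∀ x y : X, ‖f x - f y‖ ≤ K * ‖x - y‖} with hA
  obtain ⟨K, hKf⟩ := hK
  have hne : (A : Set ℝ).Nonempty := ⟨K, K.coe_nonneg, fun x y => by
    simpa [dist_eq_norm] using hKf.dist_le_mul x y⟩
  have h0 : 0 ≤ sInf A := le_csInf hne fun k hk => hk.1
  refine ⟨h0, fun x y => ?_⟩
  rcases eq_or_ne x y with rfl | hxy
  · simp
  · have hpos : 0 < ‖x - y‖ := by
      rw [norm_pos_iff, sub_ne_zero]; exact hxy
    have : ‖f x - f y‖ / ‖x - y‖ ≤ sInf A := by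
      apply le_csInf hne
      intro k hk
      rw [div_le_iff₀ hpos]
      exact hk.2 x y
    calc ‖f x - f y‖ = ‖f x - f y‖ / ‖x - y‖ * ‖x - y‖ := by field_simp
    _ ≤ sInf A * ‖x - y‖ := by gcongr

open Function in

set_option maxHeartbeats 1000000 in
lemma surj_aux {Y : Type*} [NormedAddCommGroup Y] [NormedSpace ℝ Y] [CompleteSpace Y]
    (g : Y → Y) (l1 l2 : ℝ) (h10 : 0 ≤ l1) (h11 : l1 < 1) (h20 : 0 ≤ l2) (h21 : l2 < 1)
    (hg : ∀ u v : Y, ‖g u - g v - (u - v)‖ ≤ l1 * ‖u - v‖ + l2 * ‖g u - g v‖) :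
    Function.Surjective g := by
  set m := max l1 l2 with hm
  have hm0 : 0 ≤ m := le_trans h10 (le_max_left _ _)
  have hm1 : m < 1 := max_lt h11 h21
  set c := (1 - m) / (1 + l2) with hc
  have hl2p : (0:ℝ) < 1 + l2 := by linarith
  have hcpos : 0 < c := div_pos (by linarith) hl2p
  set μ := l1 + l2 * (1 + l1) / (1 - l2) with hμ
  have hμ0 : 0 ≤ μ := by
    rw [hμ]
    have : 0 ≤ l2 * (1 + l1) / (1 - l2) :=
      div_nonneg (mul_nonneg h20 (by linarith)) (by linarith)
    linarith
  set δ := c / (2 * (μ + 1)) with hδ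
  have hδpos : 0 < δ := by
    rw [hδ]
    positivity
  clear_value m c μ δ
  -- upper Lipschitz bound for g
  have hgD : ∀ u v : Y, ‖g u - g v‖ ≤ (1 + l1) / (1 - l2) * ‖u - v‖ := by
    intro u v
    have h := hg u v
    have h2 : ‖g u - g v‖ ≤ ‖g u - g v - (u - v)‖ + ‖u - v‖ := by
      have := norm_add_le (g u - g v - (u - v)) (u - v)
      simpa using this
    rw [div_mul_eq_mul_div, le_div_iff₀ (by linarith)]
    nlinarith [norm_nonneg (g u - g v), norm_nonneg (u - v)]
  -- F2 : g - id is μ-Lipschitz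
  have hF2 : ∀ u v : Y, ‖(g u - u) - (g v - v)‖ ≤ μ * ‖u - v‖ := by
    intro u v
    have hid : (g u - u) - (g v - v) = g u - g v - (u - v) := by abel
    rw [hid]
    have h := hg u v
    have h2 := hgD u v
    calc ‖g u - g v - (u - v)‖ ≤ l1 * ‖u - v‖ + l2 * ‖g u - g v‖ := h
    _ ≤ l1 * ‖u - v‖ + l2 * ((1 + l1) / (1 - l2) * ‖u - v‖) := by nlinarith
    _ = μ * ‖u - v‖ := by rw [hμ]; ring
  -- the homotopy
  set h : ℝ → Y → Y := fun t u => u + t • (g u - u) with hh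
  -- F1 : lower bound
  have hF1 : ∀ t, 0 ≤ t → t ≤ 1 → ∀ u v : Y, c * ‖u - v‖ ≤ ‖h t u - h t v‖ := by
    intro t ht0 ht1 u v
    set d := ‖u - v‖
    set D := ‖g u - g v‖
    set Dt := ‖h t u - h t v‖ with hDt
    have key1 : h t u - h t v = (u - v) + t • (g u - g v - (u - v)) := by
      simp only [hh]
      module
    -- t * D ≤ Dt + (1 - t) * d
    have key2 : t • (g u - g v) = (h t u - h t v) - (1 - t) • (u - v) := by
      simp only [hh]
      module
    have htD : t * D ≤ Dt + (1 - t) * d := by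
      have : ‖t • (g u - g v)‖ ≤ Dt + ‖(1 - t) • (u - v)‖ := by
        rw [key2]; exact norm_sub_le _ _
      rw [norm_smul, norm_smul, Real.norm_eq_abs, Real.norm_eq_abs,
        abs_of_nonneg ht0, abs_of_nonneg (by linarith : (0:ℝ) ≤ 1 - t)] at this
      exact this
    have htr : ‖t • (g u - g v - (u - v))‖ ≤ t * (l1 * d + l2 * D) := by
      rw [norm_smul, Real.norm_eq_abs, abs_of_nonneg ht0]
      exact mul_le_mul_of_nonneg_left (hg u v) ht0
    have hd : d ≤ Dt + t * (l1 * d + l2 * D) := by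
      have : d ≤ Dt + ‖t • (g u - g v - (u - v))‖ := by
        have : ‖(u - v)‖ ≤ ‖h t u - h t v‖ + ‖t • (g u - g v - (u - v))‖ := by
          nth_rewrite 1 [show (u - v) = (h t u - h t v) - t • (g u - g v - (u - v)) by rw [key1]; abel]
          exact norm_sub_le _ _
        exact this
      linarith
    -- combine : d ≤ Dt + t*l1*d + l2*(t*D) ≤ Dt + t*l1*d + l2*(Dt + (1-t)*d)
    have hDt0 : 0 ≤ Dt := norm_nonneg _
    have hd0 : 0 ≤ d := norm_nonneg _
    have hcomb : d ≤ (1 + l2) * Dt + (t * l1 + (1 - t) * l2) * d := by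
      nlinarith [mul_le_mul_of_nonneg_left htD h20]
    have hmix : t * l1 + (1 - t) * l2 ≤ m := by
      have h1 : l1 ≤ m := by rw [hm]; exact le_max_left _ _
      have h2 : l2 ≤ m := by rw [hm]; exact le_max_right _ _
      nlinarith
    have hfin : (1 - m) * d ≤ (1 + l2) * Dt := by
      nlinarith [mul_le_mul_of_nonneg_right hmix hd0]
    rw [hc, div_mul_eq_mul_div, div_le_iff₀ hl2p]
    linarith
  -- F3 : stepping
  have hF3 : ∀ t s, 0 ≤ t → t ≤ 1 → 0 ≤ s → s ≤ 1 → |s - t| ≤ δ →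
      Function.Surjective (h t) → Function.Surjective (h s) := by
    intro t s ht0 ht1 hs0 hs1 hst hsurj
    intro w
    set invT := Function.invFun (h t) with hinvT
    have hri : ∀ a : Y, h t (invT a) = a := fun a => Function.invFun_eq (hsurj a)
    have hinvlip : ∀ a b : Y, ‖invT a - invT b‖ ≤ (1 / c) * ‖a - b‖ := by
      intro a b
      have h1 := hF1 t ht0 ht1 (invT a) (invT b)
      rw [hri, hri] at h1
      rw [one_div, inv_mul_eq_div, le_div_iff₀ hcpos]
      linarith [h1]
    set Φ : Y → Y := fun u => invT (w - (s - t) • (g u - u)) with hΦ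
    have hΦlip : ∀ u v : Y, ‖Φ u - Φ v‖ ≤ (1 / 2) * ‖u - v‖ := by
      intro u v
      have h1 : ‖Φ u - Φ v‖ ≤ (1 / c) * ‖(w - (s - t) • (g u - u)) - (w - (s - t) • (g v - v))‖ :=
        hinvlip _ _
      have h2 : (w - (s - t) • (g u - u)) - (w - (s - t) • (g v - v))
          = (s - t) • ((g v - v) - (g u - u)) := by
        module
      rw [h2, norm_smul, Real.norm_eq_abs] at h1
      have h3 : ‖(g v - v) - (g u - u)‖ ≤ μ * ‖u - v‖ := by
        have := hF2 v u
        rwa [norm_sub_rev v u] at this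
      have h4 : |s - t| * ‖(g v - v) - (g u - u)‖ ≤ δ * (μ * ‖u - v‖) := by
        apply mul_le_mul hst h3 (norm_nonneg _) (le_of_lt hδpos)
      have h5 : (1 / c) * (δ * (μ * ‖u - v‖)) ≤ (1 / 2) * ‖u - v‖ := by
        rw [hδ]
        have hμ1 : (0:ℝ) < μ + 1 := by linarith
        have hcne : c ≠ 0 := ne_of_gt hcpos
        have heq : (1 / c) * (c / (2 * (μ + 1)) * (μ * ‖u - v‖))
            = (μ * ‖u - v‖) / (2 * (μ + 1)) := by
          field_simp
        rw [heq, div_le_iff₀ (by linarith : (0:ℝ) < 2 * (μ + 1))]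
        nlinarith [norm_nonneg (u - v)]
      calc ‖Φ u - Φ v‖ ≤ (1 / c) * (|s - t| * ‖(g v - v) - (g u - u)‖) := h1
      _ ≤ (1 / c) * (δ * (μ * ‖u - v‖)) := by
          apply mul_le_mul_of_nonneg_left h4 (le_of_lt (one_div_pos.mpr hcpos))
      _ ≤ (1 / 2) * ‖u - v‖ := h5
    have hcontr : ContractingWith (1/2 : NNReal) Φ := by
      constructor
      · rw [show (1/2 : NNReal) = 2⁻¹ by norm_num]
        rw [← NNReal.coe_lt_coe]
        norm_num
      · apply LipschitzWith.of_dist_le_mul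
        intro u v
        rw [dist_eq_norm, dist_eq_norm]
        have := hΦlip u v
        push_cast
        linarith
    set u := ContractingWith.fixedPoint Φ hcontr with hu_def
    have hu : Φ u = u := hcontr.fixedPoint_isFixedPt
    refine ⟨u, ?_⟩
    have h1 : h t u = w - (s - t) • (g u - u) := by
      have : h t (Φ u) = w - (s - t) • (g u - u) := hri _
      rwa [hu] at this
    have h2 : h s u = h t u + (s - t) • (g u - u) := by
      simp only [hh]
      module
    rw [h2, h1]
    abel
  -- F4 : induction
  have hF4 : ∀ n : ℕ, Function.Surjective (h (min 1 (n * δ))) := by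
    intro n
    induction n with
    | zero =>
      intro w
      refine ⟨w, ?_⟩
      simp [hh]
    | succ n ih =>
      apply hF3 (min 1 (n * δ)) (min 1 ((n+1 : ℕ) * δ)) _ _ _ _ _ ih
      · exact le_min (by norm_num) (mul_nonneg (Nat.cast_nonneg _) (le_of_lt hδpos))
      · exact min_le_left _ _
      · exact le_min (by norm_num) (mul_nonneg (Nat.cast_nonneg _) (le_of_lt hδpos))
      · exact min_le_left _ _
      · rw [abs_of_nonneg]
        · push_cast
          rcases le_total 1 ((n:ℝ) * δ) with hle | hle
          · rw [min_eq_left hle, min_eq_left (by nlinarith [hδpos, Nat.cast_nonneg (α := ℝ) n])]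
            simp [le_of_lt hδpos]
          · rw [min_eq_right hle]
            rcases le_total 1 (((n:ℝ)+1) * δ) with hle2 | hle2
            · rw [min_eq_left hle2]; nlinarith [hδpos, Nat.cast_nonneg (α := ℝ) n]
            · rw [min_eq_right hle2]; nlinarith [hδpos, Nat.cast_nonneg (α := ℝ) n]
        · push_cast
          apply sub_nonneg.mpr
          apply le_min_iff.mpr
          constructor
          · exact min_le_left _ _
          · rcases le_total 1 ((n:ℝ) * δ) with hle | hle
            · calc min 1 ((n:ℝ)*δ) ≤ (n:ℝ)*δ := min_le_right _ _
              _ ≤ ((n:ℝ)+1)*δ := by nlinarith [hδpos]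
            · calc min 1 ((n:ℝ)*δ) = (n:ℝ)*δ := min_eq_right hle
              _ ≤ ((n:ℝ)+1)*δ := by nlinarith [hδpos]
  obtain ⟨n, hn⟩ := exists_nat_ge (1 / δ)
  have h1n : (1:ℝ) ≤ n * δ := by
    rw [div_le_iff₀ hδpos] at hn
    linarith
  have := hF4 n
  rw [min_eq_left h1n] at this
  intro w
  obtain ⟨u, hu⟩ := this w
  refine ⟨u, ?_⟩
  simp only [hh, one_smul] at hu
  rw [← hu]; abel

theorem stmt6 {X Y : Type*} [NormedAddCommGroup X] [NormedSpace ℝ X] [CompleteSpace X]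
    [NormedAddCommGroup Y] [NormedSpace ℝ Y] [CompleteSpace Y]
    (S T : X → Y) (hSbij : Function.Bijective S)
    (hSlip : ∃ K : NNReal, LipschitzWith K S)
    (hSinv : ∃ K : NNReal, LipschitzWith K (Function.invFun S))
    (hSpos : 0 < lipConst S)
    (l1 l2 : ℝ)
    (hl1 : l1 ∈ Set.Ico (0 : ℝ) 1) (hl2 : l2 ∈ Set.Ico (0 : ℝ) 1)
    (hyp : ∀ x y : X, ‖T x - T y - (S x - S y)‖ ≤ l1 * ‖S x - S y‖ + l2 * ‖T x - T y‖) :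
    Function.Bijective T ∧
    ∀ u v : Y,
      (1 - l2) / (1 + l1) * (1 / lipConst S) * ‖u - v‖
          ≤ ‖Function.invFun T u - Function.invFun T v‖ ∧
      ‖Function.invFun T u - Function.invFun T v‖
          ≤ (1 + l2) / (1 - l1) * lipConst (Function.invFun S) * ‖u - v‖ := by
  obtain ⟨h10, h11⟩ := hl1
  obtain ⟨h20, h21⟩ := hl2
  obtain ⟨hL0, hLb⟩ := lipConst_spec S hSlip
  obtain ⟨hL'0, hL'b⟩ := lipConst_spec (Function.invFun S) hSinv
  have hSleft : ∀ x : X, Function.invFun S (S x) = x :=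
    fun x => Function.leftInverse_invFun hSbij.1 x
  have hSright : ∀ u : Y, S (Function.invFun S u) = u :=
    fun u => Function.invFun_eq (hSbij.2 u)
  -- the conjugated map g = T ∘ S⁻¹
  set g : Y → Y := fun u => T (Function.invFun S u) with hgdef
  have hg : ∀ u v : Y, ‖g u - g v - (u - v)‖ ≤ l1 * ‖u - v‖ + l2 * ‖g u - g v‖ := by
    intro u v
    have := hyp (Function.invFun S u) (Function.invFun S v)
    rwa [hSright u, hSright v] at this
  have hgsurj : Function.Surjective g := surj_aux g l1 l2 h10 h11 h20 h21 hg
  -- T is surjective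
  have hTsurj : Function.Surjective T := by
    intro w
    obtain ⟨u, hu⟩ := hgsurj w
    exact ⟨Function.invFun S u, hu⟩
  -- T is injective
  have hTinj : Function.Injective T := by
    intro x y hxy
    have h := hyp x y
    rw [hxy] at h
    simp only [sub_self, norm_zero, mul_zero, add_zero, zero_sub, norm_neg] at h
    have : ‖S x - S y‖ = 0 := by nlinarith [norm_nonneg (S x - S y)]
    have hS : S x = S y := by
      rwa [norm_eq_zero, sub_eq_zero] at this
    exact hSbij.1 hS
  refine ⟨⟨hTinj, hTsurj⟩, fun u v => ?_⟩
  set x := Function.invFun T u with hx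
  set y := Function.invFun T v with hy
  have hTx : T x = u := Function.invFun_eq (hTsurj u)
  have hTy : T y = v := Function.invFun_eq (hTsurj v)
  have h := hyp x y
  rw [hTx, hTy] at h
  have hA : (1 - l2) * ‖u - v‖ ≤ (1 + l1) * ‖S x - S y‖ := by
    have h1 : ‖u - v‖ ≤ ‖u - v - (S x - S y)‖ + ‖S x - S y‖ := by
      have := norm_add_le (u - v - (S x - S y)) (S x - S y)
      simpa using this
    nlinarith [norm_nonneg (u - v), norm_nonneg (S x - S y)]
  have hB : (1 - l1) * ‖S x - S y‖ ≤ (1 + l2) * ‖u - v‖ := by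
    have h1 : ‖S x - S y‖ ≤ ‖u - v‖ + ‖u - v - (S x - S y)‖ := by
      have := norm_sub_le (u - v) (u - v - (S x - S y))
      simpa using this
    nlinarith [norm_nonneg (u - v), norm_nonneg (S x - S y)]
  have hSxy : ‖S x - S y‖ ≤ lipConst S * ‖x - y‖ := hLb x y
  have hxyS : ‖x - y‖ ≤ lipConst (Function.invFun S) * ‖S x - S y‖ := by
    have := hL'b (S x) (S y)
    rwa [hSleft x, hSleft y] at this
  constructor
  · -- lower bound
    have hl1p : (0:ℝ) < 1 + l1 := by linarith
    rw [show (1 - l2) / (1 + l1) * (1 / lipConst S) * ‖u - v‖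
        = ((1 - l2) * ‖u - v‖) / ((1 + l1) * lipConst S) by
      field_simp]
    rw [div_le_iff₀ (mul_pos hl1p hSpos)]
    nlinarith [mul_le_mul_of_nonneg_left hSxy (le_of_lt hl1p), norm_nonneg (x - y)]
  · -- upper bound
    have hl1m : (0:ℝ) < 1 - l1 := by linarith
    rw [show (1 + l2) / (1 - l1) * lipConst (Function.invFun S) * ‖u - v‖
        = ((1 + l2) * lipConst (Function.invFun S) * ‖u - v‖) / (1 - l1) by ring]
    rw [le_div_iff₀ hl1m]
    nlinarith [mul_le_mul_of_nonneg_left hB hL'0, norm_nonneg (S x - S y),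
      mul_le_mul_of_nonneg_left hxyS (le_of_lt hl1m)]
end

section
/- Let X, Y be Banach spaces, S : X → Y a bijective Lipschitz map with Lipschitz inverse, and T : X → Y a map satisfying ‖Tx − Ty − (Sx − Sy)‖ ≤ λ₁‖Sx − Sy‖ + λ₂‖Tx − Ty‖ for all x, y ∈ X with λ₁, λ₂ ∈ [0,1). Then for every real α < (1−λ₁)/(1+λ₂), the map x ↦ αSx − Tx is bijective. -/
lemma fixaux {X : Type*} [NormedAddCommGroup X] [CompleteSpace X]
    (f : X → X) (C : ℝ) (hC : C < 1)
    (h : ∀ x y, ‖f x - f y‖ ≤ C * ‖x - y‖) : ∃ x, f x = x := by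
  set C' := max C 0 with hC'def
  have hC'0 : 0 ≤ C' := le_max_right _ _
  have hC'1 : C' < 1 := max_lt hC one_pos
  have hlip : LipschitzWith C'.toNNReal f := by
    apply LipschitzWith.of_dist_le_mul
    intro x y
    rw [dist_eq_norm, dist_eq_norm]
    calc ‖f x - f y‖ ≤ C * ‖x - y‖ := h x y
      _ ≤ C' * ‖x - y‖ :=
          mul_le_mul_of_nonneg_right (le_max_left _ _) (norm_nonneg _)
      _ = C'.toNNReal * ‖x - y‖ := by rw [Real.coe_toNNReal _ hC'0]
  have hcoe : (C'.toNNReal : ℝ) < 1 := by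
    rw [Real.coe_toNNReal _ hC'0]; exact hC'1
  have hcontr : ContractingWith C'.toNNReal f := ⟨by exact_mod_cast hcoe, hlip⟩
  obtain ⟨y, hy, -⟩ := hcontr.exists_fixedPoint 0 (edist_ne_top _ _)
  exact ⟨y, hy⟩

set_option maxHeartbeats 2000000 in
theorem stmt7 {X Y : Type*} [NormedAddCommGroup X] [NormedSpace ℝ X] [CompleteSpace X]
    [NormedAddCommGroup Y] [NormedSpace ℝ Y] [CompleteSpace Y]
    (S T : X → Y) (hSbij : Function.Bijective S)
    (hSlip : ∃ K : NNReal, LipschitzWith K S)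
    (hSinv : ∃ K : NNReal, LipschitzWith K (Function.invFun S))
    (l1 l2 : ℝ)
    (hl1 : l1 ∈ Set.Ico (0 : ℝ) 1) (hl2 : l2 ∈ Set.Ico (0 : ℝ) 1)
    (hyp : ∀ x y : X, ‖T x - T y - (S x - S y)‖ ≤ l1 * ‖S x - S y‖ + l2 * ‖T x - T y‖) :
    ∀ α : ℝ, α < (1 - l1) / (1 + l2) →
      Function.Bijective (fun x => α • S x - T x) := by
  obtain ⟨KS, hKS⟩ := hSlip
  obtain ⟨KI, hKI⟩ := hSinv
  obtain ⟨hl10, hl11⟩ := hl1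
  obtain ⟨hl20, hl21⟩ := hl2
  intro α hα
  have hl2p : (0:ℝ) < 1 + l2 := by linarith
  have hl2p' : (0:ℝ) < 1 - l2 := by linarith
  have hKS0 : (0:ℝ) ≤ KS := KS.coe_nonneg
  have hKI0 : (0:ℝ) ≤ KI := KI.coe_nonneg
  have hα1 : α < 1 := by
    have : (1 - l1) / (1 + l2) ≤ 1 := by
      rw [div_le_one hl2p]; linarith
    linarith
  -- basic estimates on S
  have hS_lip : ∀ x y : X, ‖S x - S y‖ ≤ KS * ‖x - y‖ := by
    intro x y
    have := hKS.dist_le_mul x y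
    simpa [dist_eq_norm] using this
  have hSinj := hSbij.injective
  have hS_low : ∀ x y : X, ‖x - y‖ ≤ KI * ‖S x - S y‖ := by
    intro x y
    have := hKI.dist_le_mul (S x) (S y)
    simpa [Function.leftInverse_invFun hSinj x, Function.leftInverse_invFun hSinj y,
      dist_eq_norm] using this
  have hS_right : ∀ v : Y, S (Function.invFun S v) = v :=
    Function.rightInverse_invFun hSbij.surjective
  -- the uniform lower bound constant
  set δ : ℝ := (1 - α - l1 - l2 * |α|) / (1 + l2) with hδdef
  have hnum : 0 < 1 - α - l1 - l2 * |α| := by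
    rcases le_or_gt 0 α with h0 | h0
    · rw [abs_of_nonneg h0]
      have := (lt_div_iff₀ hl2p).mp hα
      nlinarith
    · rw [abs_of_neg h0]
      nlinarith
  have hδ : 0 < δ := div_pos hnum hl2p
  have hδeq : δ * (1 + l2) = 1 - α - l1 - l2 * |α| := by
    rw [hδdef, div_mul_cancel₀ _ hl2p.ne']
  -- key uniform lower bound: for a ≤ α,
  -- δ * ‖S x - S y‖ ≤ ‖(a • S x - T x) - (a • S y - T y)‖
  clear_value δ
  have key : ∀ a : ℝ, a ≤ α → ∀ x y : X,
      δ * ‖S x - S y‖ ≤ ‖(a • S x - T x) - (a • S y - T y)‖ := by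
    intro a ha x y
    have h1 := hyp x y
    have hid1 : T x - T y = a • (S x - S y) - ((a • S x - T x) - (a • S y - T y)) := by
      rw [smul_sub]; abel
    have h2 : ‖T x - T y‖ ≤ |a| * ‖S x - S y‖ + ‖(a • S x - T x) - (a • S y - T y)‖ := by
      rw [hid1]
      calc ‖a • (S x - S y) - ((a • S x - T x) - (a • S y - T y))‖
          ≤ ‖a • (S x - S y)‖ + ‖(a • S x - T x) - (a • S y - T y)‖ := norm_sub_le _ _
        _ = |a| * ‖S x - S y‖ + ‖(a • S x - T x) - (a • S y - T y)‖ := by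
            rw [norm_smul, Real.norm_eq_abs]
    have hid2 : T x - T y - (S x - S y)
        = (a - 1) • (S x - S y) - ((a • S x - T x) - (a • S y - T y)) := by
      rw [sub_smul, one_smul, smul_sub]; abel
    have h3 : (1 - a) * ‖S x - S y‖ - ‖(a • S x - T x) - (a • S y - T y)‖
        ≤ ‖T x - T y - (S x - S y)‖ := by
      rw [hid2]
      have := norm_sub_norm_le ((a - 1) • (S x - S y)) ((a • S x - T x) - (a • S y - T y))
      rw [norm_smul, Real.norm_eq_abs, abs_of_nonpos (by linarith : a - 1 ≤ 0)] at this
      linarith [this]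
    -- combine
    have hB : 0 ≤ ‖S x - S y‖ := norm_nonneg _
    have hmono : 1 - α - l1 - l2 * |α| ≤ 1 - a - l1 - l2 * |a| := by
      have h4 : |a| - |α| ≤ |a - α| := abs_sub_abs_le_abs_sub a α
      have h5 : |a - α| = α - a := by rw [abs_sub_comm, abs_of_nonneg (by linarith)]
      nlinarith
    have hmain : (1 - a - l1 - l2 * |a|) * ‖S x - S y‖
        ≤ (1 + l2) * ‖(a • S x - T x) - (a • S y - T y)‖ := by
      nlinarith [mul_le_mul_of_nonneg_left h2 hl20]
    nlinarith [mul_le_mul_of_nonneg_right hmono hB]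
  -- injectivity
  have hinj : Function.Injective (fun x => α • S x - T x) := by
    intro x y hxy
    simp only at hxy
    have := key α le_rfl x y
    rw [hxy, sub_self, norm_zero] at this
    have hS0 : ‖S x - S y‖ ≤ 0 := by nlinarith [norm_nonneg (S x - S y)]
    have : S x - S y = 0 := by
      have := norm_nonneg (S x - S y)
      have h0 : ‖S x - S y‖ = 0 := le_antisymm hS0 this
      exact norm_eq_zero.mp h0
    exact hSinj (sub_eq_zero.mp this)
  -- surjectivity by continuation in the parameter a
  -- estimate for g = T - S
  set μ : ℝ := (l1 + l2) / (1 - l2) with hμdef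
  have hμ0 : 0 ≤ μ := div_nonneg (by linarith) (by linarith)
  have hg : ∀ x y : X, ‖(T x - S x) - (T y - S y)‖ ≤ μ * ‖S x - S y‖ := by
    intro x y
    have h1 := hyp x y
    have hid : (T x - S x) - (T y - S y) = T x - T y - (S x - S y) := by abel
    rw [hid]
    have h2 : ‖T x - T y‖ ≤ ‖S x - S y‖ + ‖T x - T y - (S x - S y)‖ := by
      calc ‖T x - T y‖ = ‖(S x - S y) + (T x - T y - (S x - S y))‖ := by congr 1; abel
        _ ≤ _ := norm_add_le _ _
    rw [hμdef, div_mul_eq_mul_div, le_div_iff₀ hl2p']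
    nlinarith [mul_le_mul_of_nonneg_left h2 hl20]
  clear_value μ
  -- base point
  set a0 : ℝ := min α (-(KI * KS * μ)) with ha0def
  have ha0α : a0 ≤ α := min_le_left _ _
  have ha0m : a0 ≤ -(KI * KS * μ) := min_le_right _ _
  have ha01 : a0 < 1 := lt_of_le_of_lt ha0α hα1
  clear_value a0
  have hbase : Function.Surjective (fun x => a0 • S x - T x) := by
    intro u
    set Φ : X → X := fun x => Function.invFun S ((a0 - 1)⁻¹ • (u + (T x - S x))) with hΦdef
    have hKKμ : (0:ℝ) ≤ KI * KS * μ := by positivity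
    have hC : KI * KS * μ / (1 - a0) < 1 := by
      rw [div_lt_one (by linarith)]
      linarith
    have hlip : ∀ x y, ‖Φ x - Φ y‖ ≤ (KI * KS * μ / (1 - a0)) * ‖x - y‖ := by
      intro x y
      have e1 : ‖Φ x - Φ y‖ ≤ KI * ‖S (Φ x) - S (Φ y)‖ := hS_low _ _
      have e2 : S (Φ x) - S (Φ y) = (a0 - 1)⁻¹ • ((T x - S x) - (T y - S y)) := by
        rw [hΦdef]
        simp only
        rw [hS_right, hS_right, ← smul_sub]
        congr 1
        abel
      have e3 : ‖S (Φ x) - S (Φ y)‖ = (1 - a0)⁻¹ * ‖(T x - S x) - (T y - S y)‖ := by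
        rw [e2, norm_smul, Real.norm_eq_abs, abs_inv,
          abs_of_neg (show a0 - 1 < 0 by linarith), neg_sub]
      have e4 : ‖(T x - S x) - (T y - S y)‖ ≤ μ * (KS * ‖x - y‖) :=
        le_trans (hg x y) (mul_le_mul_of_nonneg_left (hS_lip x y) hμ0)
      have hia : (0:ℝ) < (1 - a0)⁻¹ := inv_pos.mpr (by linarith)
      calc ‖Φ x - Φ y‖ ≤ KI * ‖S (Φ x) - S (Φ y)‖ := e1
        _ = KI * ((1 - a0)⁻¹ * ‖(T x - S x) - (T y - S y)‖) := by rw [e3]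
        _ ≤ KI * ((1 - a0)⁻¹ * (μ * (KS * ‖x - y‖))) := by
            apply mul_le_mul_of_nonneg_left _ hKI0
            exact mul_le_mul_of_nonneg_left e4 hia.le
        _ = (KI * KS * μ / (1 - a0)) * ‖x - y‖ := by
            rw [div_eq_mul_inv]
            ring
    obtain ⟨x0, hx0⟩ := fixaux Φ _ hC hlip
    refine ⟨x0, ?_⟩
    have h4 : S x0 = (a0 - 1)⁻¹ • (u + (T x0 - S x0)) := by
      conv_lhs => rw [← hx0]
      rw [hΦdef]
      simp only
      rw [hS_right]
    have hne : a0 - 1 ≠ 0 := by intro h; linarith [sub_eq_zero.mp h]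
    have h5 : (a0 - 1) • S x0 = u + (T x0 - S x0) := by
      conv_lhs => rw [h4]
      rw [smul_inv_smul₀ hne]
    rw [sub_smul, one_smul] at h5
    show a0 • S x0 - T x0 = u
    calc a0 • S x0 - T x0 = (a0 • S x0 - S x0) - (T x0 - S x0) := by abel
      _ = (u + (T x0 - S x0)) - (T x0 - S x0) := by rw [h5]
      _ = u := by abel
  -- step size
  set ε : ℝ := δ / (KI * KS + KI * KS + 1) with hεdef
  have hden : (0:ℝ) < KI * KS + KI * KS + 1 := by positivity
  have hε : 0 < ε := div_pos hδ hden
  have hεδ : ε * (KI * KS + KI * KS + 1) = δ := by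
    rw [hεdef]
    exact div_mul_cancel₀ δ hden.ne'
  clear_value ε
  have hstep : ∀ a b : ℝ, a ≤ b → b ≤ α → b - a ≤ ε →
      Function.Surjective (fun x => a • S x - T x) →
      Function.Surjective (fun x => b • S x - T x) := by
    intro a b hab hbα hbae hs u
    choose inv hinv using hs
    set Φ : X → X := fun x => inv (u - (b - a) • S x) with hΦdef
    have hKK0 : (0:ℝ) ≤ KI * KS := mul_nonneg hKI0 hKS0
    have hC : KI * ((b - a) * KS) / δ < 1 := by
      rw [div_lt_one hδ]
      have h1 : (b - a) * (KI * KS) ≤ ε * (KI * KS) :=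
        mul_le_mul_of_nonneg_right hbae hKK0
      have h2 : (0:ℝ) ≤ ε * (KI * KS) := mul_nonneg hε.le hKK0
      calc KI * ((b - a) * KS) = (b - a) * (KI * KS) := by ring
        _ ≤ ε * (KI * KS) := h1
        _ < ε * (KI * KS) + (ε * (KI * KS) + ε) := by linarith
        _ = ε * (KI * KS + KI * KS + 1) := by ring
        _ = δ := hεδ
    have hlip : ∀ x y, ‖Φ x - Φ y‖ ≤ (KI * ((b - a) * KS) / δ) * ‖x - y‖ := by
      intro x y
      set p : Y := u - (b - a) • S x with hpdef
      set q : Y := u - (b - a) • S y with hqdef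
      have hp : a • S (inv p) - T (inv p) = p := hinv p
      have hq : a • S (inv q) - T (inv q) = q := hinv q
      have k1 : δ * ‖S (inv p) - S (inv q)‖ ≤ ‖p - q‖ := by
        have := key a (le_trans hab hbα) (inv p) (inv q)
        rwa [hp, hq] at this
      have k2 : ‖p - q‖ = (b - a) * ‖S x - S y‖ := by
        have hpq : p - q = (b - a) • (S y - S x) := by
          rw [hpdef, hqdef, smul_sub]
          abel
        rw [hpq, norm_smul, Real.norm_eq_abs, abs_of_nonneg (by linarith : (0:ℝ) ≤ b - a),
          norm_sub_rev]
      have k3 : ‖S x - S y‖ ≤ KS * ‖x - y‖ := hS_lip x y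
      have k4 : ‖Φ x - Φ y‖ ≤ KI * ‖S (inv p) - S (inv q)‖ := hS_low _ _
      clear_value p q
      rw [div_mul_eq_mul_div, le_div_iff₀ hδ]
      calc ‖Φ x - Φ y‖ * δ ≤ (KI * ‖S (inv p) - S (inv q)‖) * δ :=
            mul_le_mul_of_nonneg_right k4 hδ.le
        _ = KI * (δ * ‖S (inv p) - S (inv q)‖) := by ring
        _ ≤ KI * ‖p - q‖ := mul_le_mul_of_nonneg_left k1 hKI0
        _ = KI * ((b - a) * ‖S x - S y‖) := by rw [k2]
        _ ≤ KI * ((b - a) * (KS * ‖x - y‖)) := by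
            apply mul_le_mul_of_nonneg_left _ hKI0
            exact mul_le_mul_of_nonneg_left k3 (by linarith : (0:ℝ) ≤ b - a)
        _ = KI * ((b - a) * KS) * ‖x - y‖ := by ring
    obtain ⟨x0, hx0⟩ := fixaux Φ _ hC hlip
    refine ⟨x0, ?_⟩
    have h1 : a • S x0 - T x0 = u - (b - a) • S x0 := by
      conv_lhs => rw [← hx0]
      exact hinv _
    show b • S x0 - T x0 = u
    calc b • S x0 - T x0 = (a • S x0 - T x0) + (b - a) • S x0 := by
          rw [sub_smul]; abel
      _ = (u - (b - a) • S x0) + (b - a) • S x0 := by rw [h1]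
      _ = u := by abel
  -- induction along the chain a0, a0 + ε, ...
  have hchain : ∀ n : ℕ, Function.Surjective (fun x => (min (a0 + n * ε) α) • S x - T x) := by
    intro n
    induction n with
    | zero =>
      have : min (a0 + (0:ℕ) * ε) α = a0 := by
        push_cast
        rw [zero_mul, add_zero]
        exact min_eq_left ha0α
      rw [this]
      exact hbase
    | succ n ih =>
      refine hstep (min (a0 + n * ε) α) (min (a0 + (n+1 : ℕ) * ε) α) ?_ (min_le_right _ _) ?_ ih
      · apply min_le_min _ le_rfl
        push_cast
        nlinarith [hε]
      · rcases le_total (a0 + n * ε) α with h | h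
        · rw [min_eq_left h]
          have : min (a0 + (n+1 : ℕ) * ε) α ≤ a0 + (n+1 : ℕ) * ε := min_le_left _ _
          push_cast at this ⊢
          linarith
        · rw [min_eq_right h]
          have : min (a0 + (n+1 : ℕ) * ε) α ≤ α := min_le_right _ _
          linarith [hε]
  obtain ⟨n, hn⟩ := exists_nat_ge ((α - a0) / ε)
  have hαn : α ≤ a0 + n * ε := by
    rw [div_le_iff₀ hε] at hn
    linarith
  have hsurj := hchain n
  rw [min_eq_right hαn] at hsurj
  exact ⟨hinj, hsurj⟩
end

section
/- Let p ≥ 1, X, Y Banach spaces, S : X → Y a bijective Lipschitz map with Lipschitz inverse, and T : X → Y a map such that ‖Tx − Ty − (Sx − Sy)‖ ≤ ((λ₁‖Sx − Sy‖)^p + (λ₂‖Tx − Ty‖)^p)^{1/p} for all x, y ∈ X, where λ₁, λ₂ ∈ [0,1). Then T is bijective and ((1−λ₁)/(1+λ₂))‖Sx − Sy‖ ≤ ‖Tx − Ty‖ ≤ ((1+λ₁)/(1−λ₂))‖Sx − Sy‖ for all x, y ∈ X. -/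
lemma keyA (r s p : ℝ) (hr : 0 ≤ r) (hs : 0 ≤ s) (hp : 1 ≤ p) :
    (r ^ p + s ^ p) ^ (1 / p) ≤ r + s := by
  have h := NNReal.rpow_add_rpow_le_add r.toNNReal s.toNNReal hp
  have := NNReal.coe_le_coe.mpr h
  simpa [NNReal.coe_rpow, Real.coe_toNNReal _ hr, Real.coe_toNNReal _ hs] using this


lemma algLow (l1 l2 t c0 A1 B1 E Bb : ℝ)
    (hl10 : 0 ≤ l1) (hl11 : l1 < 1) (hl20 : 0 ≤ l2) (hl21 : l2 < 1)
    (ht0 : 0 ≤ t) (ht1 : t ≤ 1)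
    (hc0 : 0 < c0) (hc1 : 2 * c0 ≤ 1 - l1) (hc2 : 2 * c0 ≤ 1 - l2)
    (hA1 : 0 ≤ A1) (hB1 : 0 ≤ B1) (hE : 0 ≤ E)
    (he : E ≤ l1 * A1 + l2 * Bb)
    (hbt : Bb ≤ B1 + (1 - t) * E)
    (hat : A1 ≤ B1 + t * E) :
    c0 * A1 ≤ B1 := by
  have h1 : E * (1 - l2 * (1 - t)) ≤ l1 * A1 + l2 * B1 := by nlinarith
  have hpos1 : 0 ≤ 1 - l2 * (1 - t) := by nlinarith
  have s1 : (A1 - B1) * (1 - l2 * (1 - t)) ≤ (t * E) * (1 - l2 * (1 - t)) :=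
    mul_le_mul_of_nonneg_right (by linarith) hpos1
  have s2 : t * (E * (1 - l2 * (1 - t))) ≤ t * (l1 * A1 + l2 * B1) :=
    mul_le_mul_of_nonneg_left h1 ht0
  have h2 : A1 * ((1 - t) * (1 - l2) + t * (1 - l1)) ≤ B1 * (1 - l2 + 2 * t * l2) := by
    nlinarith [s1, s2]
  have h3 : 2 * c0 ≤ (1 - t) * (1 - l2) + t * (1 - l1) := by nlinarith
  have h4 : 1 - l2 + 2 * t * l2 ≤ 2 := by nlinarith
  nlinarith [mul_le_mul_of_nonneg_left h3 hA1, mul_le_mul_of_nonneg_left h4 hB1]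

lemma algStep (K K' M c0 δ P Q R D : ℝ) (hK : 0 ≤ K) (hK' : 0 ≤ K') (hM : 0 ≤ M)
    (hc0 : 0 < c0) (hδ : 0 ≤ δ) (hsmall : K' * (δ * (M * K)) * 2 ≤ c0)
    (hP : 0 ≤ P) (hQ : 0 ≤ Q) (hR : 0 ≤ R) (hD : 0 ≤ D)
    (h1 : P ≤ K' * Q)
    (h2 : c0 * Q ≤ δ * (M * R))
    (h3 : R ≤ K * D) : P ≤ 1 / 2 * D := by
  have e1 : c0 * P ≤ K' * (c0 * Q) := by nlinarith
  have e2 : K' * (c0 * Q) ≤ K' * (δ * (M * R)) := by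
    apply mul_le_mul_of_nonneg_left h2 hK'
  have e3 : K' * (δ * (M * R)) ≤ K' * (δ * (M * (K * D))) := by
    have h4 : M * R ≤ M * (K * D) := mul_le_mul_of_nonneg_left h3 hM
    have h5 : δ * (M * R) ≤ δ * (M * (K * D)) := mul_le_mul_of_nonneg_left h4 hδ
    exact mul_le_mul_of_nonneg_left h5 hK'
  have e4 : K' * (δ * (M * (K * D))) * 2 ≤ c0 * D :=  by
    nlinarith [mul_le_mul_of_nonneg_right hsmall hD]
  have : c0 * P ≤ c0 * (1 / 2 * D) := by nlinarith
  exact le_of_mul_le_mul_left this hc0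

lemma surjAux {X Y : Type*} [NormedAddCommGroup X] [CompleteSpace X]
    [NormedAddCommGroup Y] [NormedSpace ℝ Y]
    (S T : X → Y) (hS : Function.Surjective S)
    (K K' : ℝ) (hK : 0 ≤ K) (hK' : 0 ≤ K')
    (hSK : ∀ x y, ‖S x - S y‖ ≤ K * ‖x - y‖)
    (hSK' : ∀ x y, ‖x - y‖ ≤ K' * ‖S x - S y‖)
    (l1 l2 : ℝ) (hl10 : 0 ≤ l1) (hl11 : l1 < 1) (hl20 : 0 ≤ l2) (hl21 : l2 < 1)
    (key : ∀ x y, ‖T x - T y - (S x - S y)‖ ≤ l1 * ‖S x - S y‖ + l2 * ‖T x - T y‖) :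
    Function.Surjective T := by
  obtain ⟨c0, hc0pos, hc1, hc2⟩ :
      ∃ c0 : ℝ, 0 < c0 ∧ 2 * c0 ≤ 1 - l1 ∧ 2 * c0 ≤ 1 - l2 := by
    refine ⟨min (1 - l1) (1 - l2) / 2, ?_, ?_, ?_⟩
    · have := lt_min (show (0:ℝ) < 1 - l1 by linarith) (show (0:ℝ) < 1 - l2 by linarith)
      linarith
    · have := min_le_left (1 - l1) (1 - l2); linarith
    · have := min_le_right (1 - l1) (1 - l2); linarith
  obtain ⟨M, hMnn, hd⟩ :
      ∃ M : ℝ, 0 ≤ M ∧ ∀ x y, ‖(T x - S x) - (T y - S y)‖ ≤ M * ‖S x - S y‖ := by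
    refine ⟨(l1 + l2) / (1 - l2), div_nonneg (by linarith) (by linarith), fun x y => ?_⟩
    have hk := key x y
    have he : (T x - S x) - (T y - S y) = T x - T y - (S x - S y) := by abel
    rw [he]
    have hb : ‖T x - T y‖ ≤ ‖T x - T y - (S x - S y)‖ + ‖S x - S y‖ := by
      have := norm_add_le (T x - T y - (S x - S y)) (S x - S y)
      simpa using this
    rw [div_mul_eq_mul_div, le_div_iff₀ (by linarith)]
    nlinarith [norm_nonneg (S x - S y), norm_nonneg (T x - T y - (S x - S y))]
  obtain ⟨δ, hδpos, hδsmall⟩ :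
      ∃ δ : ℝ, 0 < δ ∧ K' * (δ * (M * K)) * 2 ≤ c0 := by
    refine ⟨c0 / (2 * ((K + 1) * ((K' + 1) * (M + 1)))), by positivity, ?_⟩
    have hD : (0:ℝ) < 2 * ((K + 1) * ((K' + 1) * (M + 1))) := by positivity
    have hrw : K' * (c0 / (2 * ((K + 1) * ((K' + 1) * (M + 1)))) * (M * K)) * 2
        = c0 * (K' * (M * K) * 2) / (2 * ((K + 1) * ((K' + 1) * (M + 1)))) := by ring
    rw [hrw, div_le_iff₀ hD]
    apply mul_le_mul_of_nonneg_left _ hc0pos.le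
    nlinarith
  set A : ℝ → X → Y := fun t x => S x + t • (T x - S x) with hA
  have hlow : ∀ t : ℝ, 0 ≤ t → t ≤ 1 → ∀ x y,
      c0 * ‖S x - S y‖ ≤ ‖A t x - A t y‖ := by
    intro t ht0 ht1 x y
    have hAe : A t x - A t y = (S x - S y) + t • ((T x - T y) - (S x - S y)) := by
      simp only [hA]
      module
    rw [hAe]
    have he : ‖(T x - T y) - (S x - S y)‖ ≤ l1 * ‖S x - S y‖ + l2 * ‖T x - T y‖ := by
      have := key x y
      have h : T x - T y - (S x - S y) = (T x - T y) - (S x - S y) := by abel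
      rwa [h] at this
    have hbt : ‖T x - T y‖ ≤ ‖(S x - S y) + t • ((T x - T y) - (S x - S y))‖
        + (1 - t) * ‖(T x - T y) - (S x - S y)‖ := by
      have hb2 : T x - T y = ((S x - S y) + t • ((T x - T y) - (S x - S y)))
          + (1 - t) • ((T x - T y) - (S x - S y)) := by module
      calc ‖T x - T y‖ = ‖((S x - S y) + t • ((T x - T y) - (S x - S y)))
            + (1 - t) • ((T x - T y) - (S x - S y))‖ := by rw [← hb2]
        _ ≤ _ + ‖(1 - t) • ((T x - T y) - (S x - S y))‖ := norm_add_le _ _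
        _ = _ + (1 - t) * ‖(T x - T y) - (S x - S y)‖ := by
            rw [norm_smul, Real.norm_eq_abs, abs_of_nonneg (by linarith)]
    have hat : ‖S x - S y‖ ≤ ‖(S x - S y) + t • ((T x - T y) - (S x - S y))‖
        + t * ‖(T x - T y) - (S x - S y)‖ := by
      have ha2 : S x - S y = ((S x - S y) + t • ((T x - T y) - (S x - S y)))
          - t • ((T x - T y) - (S x - S y)) := by module
      calc ‖S x - S y‖ = ‖((S x - S y) + t • ((T x - T y) - (S x - S y)))
            - t • ((T x - T y) - (S x - S y))‖ := by rw [← ha2]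
        _ ≤ _ + ‖t • ((T x - T y) - (S x - S y))‖ := norm_sub_le _ _
        _ = _ + t * ‖(T x - T y) - (S x - S y)‖ := by
            rw [norm_smul, Real.norm_eq_abs, abs_of_nonneg ht0]
    exact algLow l1 l2 t c0 _ _ _ _ hl10 hl11 hl20 hl21 ht0 ht1 hc0pos hc1 hc2
      (norm_nonneg _) (norm_nonneg _) (norm_nonneg _) he hbt hat
  have hstep : ∀ s t : ℝ, 0 ≤ s → s ≤ 1 → 0 ≤ t → t ≤ 1 → |s - t| ≤ δ →
      Function.Surjective (A s) → Function.Surjective (A t) := by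
    intro s t hs0 hs1 ht0 ht1 hst hsurj z
    have hNE : Nonempty X := by obtain ⟨x, _⟩ := hsurj z; exact ⟨x⟩
    set g := Function.surjInv hsurj with hg
    have hgA : ∀ y, A s (g y) = y := fun y => Function.surjInv_eq hsurj y
    set Φ : X → X := fun x => g (z + (A s x - A t x)) with hΦ
    have hΦA : ∀ x, A s (Φ x) = z + (A s x - A t x) := fun x => hgA _
    have hdiff : ∀ x y : X,
        (A s x - A t x) - (A s y - A t y) = (s - t) • ((T x - S x) - (T y - S y)) := by
      intro x y; simp only [hA]; module
    have hcontr : LipschitzWith (1/2 : NNReal) Φ := by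
      apply LipschitzWith.of_dist_le_mul
      intro x y
      rw [dist_eq_norm, dist_eq_norm]
      have hco : ((1/2 : NNReal) : ℝ) = 1/2 := by norm_num
      rw [hco]
      have e1 : c0 * ‖S (Φ x) - S (Φ y)‖ ≤ ‖A s (Φ x) - A s (Φ y)‖ := hlow s hs0 hs1 _ _
      have e2 : A s (Φ x) - A s (Φ y) = (s - t) • ((T x - S x) - (T y - S y)) := by
        rw [hΦA x, hΦA y, add_sub_add_left_eq_sub, hdiff]
      have e3 : ‖A s (Φ x) - A s (Φ y)‖ ≤ δ * (M * ‖S x - S y‖) := by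
        rw [e2, norm_smul, Real.norm_eq_abs]
        exact mul_le_mul hst (hd x y) (norm_nonneg _) hδpos.le
      exact algStep K K' M c0 δ _ _ _ _ hK hK' hMnn hc0pos hδpos.le hδsmall
        (norm_nonneg _) (norm_nonneg _) (norm_nonneg _) (norm_nonneg _)
        (hSK' _ _) (e1.trans e3) (hSK x y)
    have hCW : ContractingWith (1/2 : NNReal) Φ := ⟨one_half_lt_one, hcontr⟩
    refine ⟨hCW.fixedPoint Φ, ?_⟩
    have hfx : Φ (hCW.fixedPoint Φ) = hCW.fixedPoint Φ := hCW.fixedPoint_isFixedPt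
    have h := hΦA (hCW.fixedPoint Φ)
    rw [hfx] at h
    have h3 := congrArg
      (fun w => w - (A s (hCW.fixedPoint Φ) - A t (hCW.fixedPoint Φ))) h
    simp only [sub_sub_cancel, add_sub_cancel_right] at h3
    exact h3
  set N : ℕ := ⌈1 / δ⌉₊ with hN
  have hN1 : 1 ≤ N := Nat.one_le_ceil_iff.mpr (by positivity)
  have hNpos : (0:ℝ) < N := by exact_mod_cast Nat.lt_of_lt_of_le Nat.zero_lt_one hN1
  have hinv : (1:ℝ) / N ≤ δ := by
    rw [div_le_iff₀ hNpos]
    have hceil := Nat.le_ceil (1 / δ)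
    rw [← hN] at hceil
    calc (1:ℝ) = δ * (1 / δ) := by field_simp
      _ ≤ δ * N := mul_le_mul_of_nonneg_left hceil hδpos.le
  have claim : ∀ k : ℕ, k ≤ N → Function.Surjective (A ((k : ℝ) / N)) := by
    intro k
    induction k with
    | zero =>
      intro _ z
      obtain ⟨x, hx⟩ := hS z
      exact ⟨x, by simp [hA, hx]⟩
    | succ k ih =>
      intro hk
      have hk' : k ≤ N := Nat.le_of_succ_le hk
      have hcast : ((k + 1 : ℕ) : ℝ) = (k : ℝ) + 1 := by push_cast; ring
      apply hstep ((k : ℝ) / N) (((k : ℕ) + 1 : ℕ) / N)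
      · positivity
      · rw [div_le_one hNpos]; exact_mod_cast hk'
      · positivity
      · rw [div_le_one hNpos]; exact_mod_cast hk
      · rw [hcast, div_sub_div_same]
        have : (k:ℝ) - ((k:ℝ) + 1) = -1 := by ring
        rw [this, neg_div, abs_neg, abs_div, abs_one, abs_of_pos hNpos]
        exact hinv
      · exact ih hk'
  have hfin := claim N le_rfl
  have hNN : (N : ℝ) / N = 1 := div_self (ne_of_gt hNpos)
  rw [hNN] at hfin
  intro z
  obtain ⟨x, hx⟩ := hfin z
  refine ⟨x, ?_⟩
  rw [← hx]
  simp only [hA, one_smul]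
  abel

theorem stmt8 {X Y : Type*} [NormedAddCommGroup X] [NormedSpace ℝ X] [CompleteSpace X]
    [NormedAddCommGroup Y] [NormedSpace ℝ Y] [CompleteSpace Y]
    (p : ℝ) (hp : 1 ≤ p)
    (S T : X → Y) (hSbij : Function.Bijective S)
    (hSlip : ∃ K : NNReal, LipschitzWith K S)
    (hSinv : ∃ K : NNReal, LipschitzWith K (Function.invFun S))
    (l1 l2 : ℝ)
    (hl1 : l1 ∈ Set.Ico (0 : ℝ) 1) (hl2 : l2 ∈ Set.Ico (0 : ℝ) 1)
    (hyp : ∀ x y : X, ‖T x - T y - (S x - S y)‖ ≤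
      ((l1 * ‖S x - S y‖) ^ p + (l2 * ‖T x - T y‖) ^ p) ^ (1 / p)) :
    Function.Bijective T ∧
    ∀ x y : X,
      (1 - l1) / (1 + l2) * ‖S x - S y‖ ≤ ‖T x - T y‖ ∧
      ‖T x - T y‖ ≤ (1 + l1) / (1 - l2) * ‖S x - S y‖ := by
  obtain ⟨hl10, hl11⟩ := hl1
  obtain ⟨hl20, hl21⟩ := hl2
  obtain ⟨KS, hKS⟩ := hSlip
  obtain ⟨KI, hKI⟩ := hSinv
  have key : ∀ x y : X, ‖T x - T y - (S x - S y)‖ ≤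
      l1 * ‖S x - S y‖ + l2 * ‖T x - T y‖ := by
    intro x y
    exact (hyp x y).trans (keyA _ _ p (by positivity) (by positivity) hp)
  have hSK : ∀ x y : X, ‖S x - S y‖ ≤ (KS : ℝ) * ‖x - y‖ := by
    intro x y
    have := hKS.dist_le_mul x y
    rwa [dist_eq_norm, dist_eq_norm] at this
  have hSK' : ∀ x y : X, ‖x - y‖ ≤ (KI : ℝ) * ‖S x - S y‖ := by
    intro x y
    have := hKI.dist_le_mul (S x) (S y)
    rw [Function.leftInverse_invFun hSbij.1 x, Function.leftInverse_invFun hSbij.1 y] at this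
    rwa [dist_eq_norm, dist_eq_norm] at this
  have hbounds : ∀ x y : X,
      (1 - l1) / (1 + l2) * ‖S x - S y‖ ≤ ‖T x - T y‖ ∧
      ‖T x - T y‖ ≤ (1 + l1) / (1 - l2) * ‖S x - S y‖ := by
    intro x y
    have hk := key x y
    have ha : ‖S x - S y‖ ≤ ‖T x - T y‖ + ‖T x - T y - (S x - S y)‖ := by
      have := norm_sub_le (T x - T y) (T x - T y - (S x - S y))
      simpa using this
    have hb : ‖T x - T y‖ ≤ ‖S x - S y‖ + ‖T x - T y - (S x - S y)‖ := by
      have := norm_add_le (T x - T y - (S x - S y)) (S x - S y)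
      simpa [add_comm] using this
    constructor
    · rw [div_mul_eq_mul_div, div_le_iff₀ (by linarith)]
      nlinarith [norm_nonneg (S x - S y), norm_nonneg (T x - T y),
        norm_nonneg (T x - T y - (S x - S y))]
    · rw [div_mul_eq_mul_div, le_div_iff₀ (by linarith)]
      nlinarith [norm_nonneg (S x - S y), norm_nonneg (T x - T y),
        norm_nonneg (T x - T y - (S x - S y))]
  have hinj : Function.Injective T := by
    intro x y hxy
    have h := (hbounds x y).1
    rw [hxy] at h
    simp only [sub_self, norm_zero] at h
    have hpos : 0 < (1 - l1) / (1 + l2) := by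
      apply div_pos <;> linarith
    have hle : ‖S x - S y‖ ≤ 0 := by nlinarith [norm_nonneg (S x - S y)]
    have hS0 : S x = S y := by
      rw [← sub_eq_zero]
      exact norm_le_zero_iff.mp hle
    exact hSbij.1 hS0
  have hsurj : Function.Surjective T :=
    surjAux S T hSbij.2 KS KI KS.coe_nonneg KI.coe_nonneg hSK hSK' l1 l2 hl10 hl11 hl20 hl21 key
  exact ⟨⟨hinj, hsurj⟩, hbounds⟩
end

section
/- Let 0 < p < 1, X, Y Banach spaces, S : X → Y a bijective Lipschitz map with Lipschitz inverse, and T : X → Y a map such that ‖Tx − Ty − (Sx − Sy)‖ ≤ ((λ₁‖Sx − Sy‖)^p + (λ₂‖Tx − Ty‖)^p)^{1/p} for all x, y ∈ X, where λ₁, λ₂ ∈ [0, 2^{1−1/p}). Then T is bijective and ((1 − 2^{1/p−1}λ₁)/(1 + 2^{1/p−1}λ₂))‖Sx − Sy‖ ≤ ‖Tx − Ty‖ ≤ ((1 + 2^{1/p−1}λ₁)/(1 − 2^{1/p−1}λ₂))‖Sx − Sy‖ for all x, y ∈ X. -/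
open scoped NNReal
lemma aux_rpow {p : ℝ} (hp0 : 0 < p) (hp1 : p ≤ 1) {r s : ℝ} (hr : 0 ≤ r) (hs : 0 ≤ s) :
    (r ^ p + s ^ p) ^ (1/p) ≤ 2 ^ (1/p - 1) * (r + s) := by
  lift r to ℝ≥0 using hr
  lift s to ℝ≥0 using hs
  have hq : 1 ≤ 1/p := (one_le_div hp0).mpr hp1
  have h := NNReal.rpow_add_le_mul_rpow_add_rpow (r ^ p) (s ^ p) hq
  have hrr : (r ^ p) ^ (1/p) = r := by
    rw [← NNReal.rpow_mul, mul_one_div, div_self hp0.ne', NNReal.rpow_one]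
  have hss : (s ^ p) ^ (1/p) = s := by
    rw [← NNReal.rpow_mul, mul_one_div, div_self hp0.ne', NNReal.rpow_one]
  rw [hrr, hss] at h
  have := NNReal.coe_le_coe.mpr h
  push_cast [NNReal.coe_rpow] at this ⊢
  convert this using 2


open Function

section Key
variable {Y : Type*} [NormedAddCommGroup Y] [NormedSpace ℝ Y] [CompleteSpace Y]

lemma key_surj (g : Y → Y) (a b : ℝ) (ha : 0 ≤ a) (ha1 : a < 1) (hb : 0 ≤ b) (hb1 : b < 1)
    (hg : ∀ u v, ‖g u - g v‖ ≤ a * ‖u - v‖ + b * ‖u - v + (g u - g v)‖) :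
    Function.Surjective (fun u => u + g u) := by
  -- Lipschitz constant of g
  obtain ⟨k, hk⟩ : ∃ k : ℝ, k = (a + b) / (1 - b) := ⟨_, rfl⟩
  have hb1' : (0:ℝ) < 1 - b := by linarith
  have hk0 : 0 ≤ k := hk ▸ div_nonneg (by linarith) hb1'.le
  have hglip : ∀ u v, ‖g u - g v‖ ≤ k * ‖u - v‖ := by
    intro u v
    have h1 := hg u v
    have h2 : ‖u - v + (g u - g v)‖ ≤ ‖u - v‖ + ‖g u - g v‖ := norm_add_le _ _
    rw [hk, div_mul_eq_mul_div, le_div_iff₀ hb1']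
    nlinarith [norm_nonneg (g u - g v), norm_nonneg (u - v)]
  -- uniform lower bound for f t = id + t • g
  obtain ⟨m, hm⟩ : ∃ m : ℝ, m = min (1 - a) (1 - b) := ⟨_, rfl⟩
  obtain ⟨c, hc⟩ : ∃ c : ℝ, c = m / (1 + b) := ⟨_, rfl⟩
  have hm0 : 0 < m := hm ▸ lt_min (by linarith) (by linarith)
  have hc0 : 0 < c := hc ▸ div_pos hm0 (by linarith)
  have hlow : ∀ t : ℝ, 0 ≤ t → t ≤ 1 → ∀ u v : Y,
      c * ‖u - v‖ ≤ ‖(u + t • g u) - (v + t • g v)‖ := by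
    intro t ht0 ht1 u v
    obtain ⟨d, hd⟩ : ∃ d : ℝ, d = ‖u - v‖ := ⟨_, rfl⟩
    obtain ⟨G, hG⟩ : ∃ G : ℝ, G = ‖g u - g v‖ := ⟨_, rfl⟩
    obtain ⟨Ft, hFt⟩ : ∃ F : ℝ, F = ‖(u + t • g u) - (v + t • g v)‖ := ⟨_, rfl⟩
    obtain ⟨F, hF⟩ : ∃ F : ℝ, F = ‖u - v + (g u - g v)‖ := ⟨_, rfl⟩
    have h1 : G ≤ a * d + b * F := by rw [hG, hd, hF]; exact hg u v
    have e2 : u - v + (g u - g v) = ((u + t • g u) - (v + t • g v)) + (1 - t) • (g u - g v) := by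
      module
    have h2 : F ≤ Ft + (1 - t) * G := by
      rw [hF, hFt, hG, e2]
      calc ‖((u + t • g u) - (v + t • g v)) + (1 - t) • (g u - g v)‖
          ≤ ‖(u + t • g u) - (v + t • g v)‖ + ‖(1 - t) • (g u - g v)‖ := norm_add_le _ _
        _ = _ := by
            rw [norm_smul, Real.norm_eq_abs, abs_of_nonneg (by linarith : (0:ℝ) ≤ 1 - t)]
    have e3 : u - v = ((u + t • g u) - (v + t • g v)) - t • (g u - g v) := by
      module
    have h3 : d ≤ Ft + t * G := by
      rw [hd, hFt, hG, e3]
      calc ‖((u + t • g u) - (v + t • g v)) - t • (g u - g v)‖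
          ≤ ‖(u + t • g u) - (v + t • g v)‖ + ‖t • (g u - g v)‖ := norm_sub_le _ _
        _ = _ := by rw [norm_smul, Real.norm_eq_abs, abs_of_nonneg ht0]
    have hG4 : G * (1 - b + b * t) ≤ a * d + b * Ft := by nlinarith
    have hmd : m * d ≤ (1 + b) * Ft := by
      have hma : m ≤ 1 - b + t * (b - a) := by
        have h5 := min_le_left (1 - a) (1 - b)
        have h6 := min_le_right (1 - a) (1 - b)
        rw [← hm] at h5 h6
        nlinarith
      have hFt0 : 0 ≤ Ft := hFt ▸ norm_nonneg _
      have hd0 : 0 ≤ d := hd ▸ norm_nonneg _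
      have hG0 : 0 ≤ G := hG ▸ norm_nonneg _
      have hD : (0:ℝ) < 1 - b + b * t := by nlinarith
      nlinarith [mul_le_mul_of_nonneg_right hG4 ht0,
        mul_le_mul_of_nonneg_left h3 hD.le,
        mul_le_mul_of_nonneg_right hma hd0,
        mul_nonneg (mul_nonneg hb (sub_nonneg.mpr ht1)) hFt0]
    rw [← hd, ← hFt, hc, div_mul_eq_mul_div, div_le_iff₀ (by linarith : (0:ℝ) < 1 + b)]
    linarith
  -- step lemma
  obtain ⟨δ, hδ⟩ : ∃ δ : ℝ, δ = c / (2 * (k + 1)) := ⟨_, rfl⟩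
  have hδ0 : 0 < δ := hδ ▸ div_pos hc0 (by linarith)
  have step : ∀ t s : ℝ, 0 ≤ t → t ≤ 1 → 0 ≤ s → s ≤ 1 → |s - t| ≤ δ →
      Function.Surjective (fun u : Y => u + t • g u) →
      Function.Surjective (fun u : Y => u + s • g u) := by
    intro t s ht0 ht1 hs0 hs1 hst hsurj
    intro w
    obtain ⟨ft, hft⟩ : ∃ ft : Y → Y, ft = fun u => u + t • g u := ⟨_, rfl⟩
    have hri : ∀ y, ft (Function.invFun ft y) = y := by
      rw [hft]; exact fun y => Function.rightInverse_invFun hsurj y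
    obtain ⟨φ, hφ⟩ : ∃ φ : Y → Y, φ = fun u => Function.invFun ft (w - (s - t) • g u) := ⟨_, rfl⟩
    have hcon : ∀ u v, ‖φ u - φ v‖ ≤ (1/2) * ‖u - v‖ := by
      intro u v
      have h1 : c * ‖φ u - φ v‖ ≤ ‖ft (φ u) - ft (φ v)‖ := by
        rw [hft]; exact hlow t ht0 ht1 _ _
      have h2 : ft (φ u) - ft (φ v) = (s - t) • (g v - g u) := by
        rw [hφ]; simp only [hri]; module
      have h3 : ‖ft (φ u) - ft (φ v)‖ ≤ δ * (k * ‖u - v‖) := by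
        rw [h2, norm_smul, Real.norm_eq_abs]
        have : ‖g v - g u‖ ≤ k * ‖u - v‖ := by
          calc ‖g v - g u‖ ≤ k * ‖v - u‖ := hglip v u
            _ = k * ‖u - v‖ := by rw [norm_sub_rev]
        have h4 : |s - t| * ‖g v - g u‖ ≤ δ * (k * ‖u - v‖) := by
          apply mul_le_mul hst this (norm_nonneg _) hδ0.le
        exact h4
      have hδk : δ * k ≤ c / 2 := by
        rw [hδ]
        rw [div_mul_eq_mul_div, div_le_div_iff₀ (by linarith) (by norm_num)]
        nlinarith
      have : c * ‖φ u - φ v‖ ≤ (c / 2) * ‖u - v‖ := by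
        calc c * ‖φ u - φ v‖ ≤ δ * (k * ‖u - v‖) := le_trans h1 h3
          _ = (δ * k) * ‖u - v‖ := by ring
          _ ≤ (c / 2) * ‖u - v‖ := by
              apply mul_le_mul_of_nonneg_right hδk (norm_nonneg _)
      have h10 : c * ‖φ u - φ v‖ ≤ c * ((1/2) * ‖u - v‖) := by
        calc c * ‖φ u - φ v‖ ≤ (c / 2) * ‖u - v‖ := this
          _ = c * ((1/2) * ‖u - v‖) := by ring
      exact le_of_mul_le_mul_left h10 hc0
    have hlip : LipschitzWith (1/2) φ := by
      apply LipschitzWith.of_dist_le_mul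
      intro u v
      rw [dist_eq_norm, dist_eq_norm]
      simpa using hcon u v
    have hcw : ContractingWith (1/2) φ := ⟨by exact_mod_cast (by norm_num : (1/2:ℝ) < 1), hlip⟩
    have : Nonempty Y := ⟨0⟩
    set u := ContractingWith.fixedPoint φ hcw with hu
    have hfix : φ u = u := hcw.fixedPoint_isFixedPt
    refine ⟨u, ?_⟩
    have h5 : ft u = w - (s - t) • g u := by
      conv_lhs => rw [← hfix, hφ]
      exact hri _
    simp only [hft] at h5
    show u + s • g u = w
    have h7 : s • g u = t • g u + (s - t) • g u := by module
    rw [h7, ← add_assoc, h5, sub_add_cancel]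
  have main : ∀ n : ℕ, ∀ t : ℝ, 0 ≤ t → t ≤ 1 → t ≤ n * δ →
      Function.Surjective (fun u : Y => u + t • g u) := by
    intro n
    induction n with
    | zero =>
      intro t ht0 ht1 htn
      have ht : t = 0 := le_antisymm (by simpa using htn) ht0
      subst ht
      intro w
      exact ⟨w, by simp⟩
    | succ n ih =>
      intro t ht0 ht1 htn
      rcases le_or_gt t (n * δ) with h | h
      · exact ih t ht0 ht1 h
      · have hn1 : (0:ℝ) ≤ n * δ := by positivity
        rcases le_or_gt ((n:ℝ) * δ) 1 with h1 | h1
        · refine step ((n:ℝ) * δ) t hn1 h1 ht0 ht1 ?_ (ih ((n:ℝ) * δ) hn1 h1 le_rfl)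
          rw [abs_of_nonneg (by linarith)]
          push_cast at htn
          linarith
        · linarith
  obtain ⟨n, hn⟩ := exists_nat_ge (1/δ)
  have h1n : (1:ℝ) ≤ n * δ := by
    rw [div_le_iff₀ hδ0] at hn
    linarith
  intro w
  obtain ⟨u, hu⟩ := main n 1 zero_le_one le_rfl h1n w
  exact ⟨u, by simpa using hu⟩

end Key

theorem stmt9 {X Y : Type*} [NormedAddCommGroup X] [NormedSpace ℝ X] [CompleteSpace X]
    [NormedAddCommGroup Y] [NormedSpace ℝ Y] [CompleteSpace Y]
    (p : ℝ) (hp0 : 0 < p) (hp1 : p < 1)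
    (S T : X → Y) (hSbij : Function.Bijective S)
    (hSlip : ∃ K : NNReal, LipschitzWith K S)
    (hSinv : ∃ K : NNReal, LipschitzWith K (Function.invFun S))
    (l1 l2 : ℝ)
    (hl1 : l1 ∈ Set.Ico (0 : ℝ) ((2 : ℝ) ^ (1 - 1 / p)))
    (hl2 : l2 ∈ Set.Ico (0 : ℝ) ((2 : ℝ) ^ (1 - 1 / p)))
    (hyp : ∀ x y : X, ‖T x - T y - (S x - S y)‖ ≤
      ((l1 * ‖S x - S y‖) ^ p + (l2 * ‖T x - T y‖) ^ p) ^ (1 / p)) :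
    Function.Bijective T ∧
    ∀ x y : X,
      (1 - (2 : ℝ) ^ (1 / p - 1) * l1) / (1 + (2 : ℝ) ^ (1 / p - 1) * l2) * ‖S x - S y‖
          ≤ ‖T x - T y‖ ∧
      ‖T x - T y‖ ≤
        (1 + (2 : ℝ) ^ (1 / p - 1) * l1) / (1 - (2 : ℝ) ^ (1 / p - 1) * l2) * ‖S x - S y‖ := by
  obtain ⟨hl10, hl1u⟩ := hl1
  obtain ⟨hl20, hl2u⟩ := hl2
  have h2p : (0:ℝ) < (2:ℝ) ^ (1/p - 1) := Real.rpow_pos_of_pos two_pos _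
  have hmul1 : ((2:ℝ) ^ (1/p - 1)) * ((2:ℝ) ^ (1 - 1/p)) = 1 := by
    rw [← Real.rpow_add two_pos]
    norm_num
  obtain ⟨A, hA⟩ : ∃ A : ℝ, A = (2:ℝ) ^ (1/p - 1) * l1 := ⟨_, rfl⟩
  obtain ⟨B, hB⟩ : ∃ B : ℝ, B = (2:ℝ) ^ (1/p - 1) * l2 := ⟨_, rfl⟩
  have hA0 : 0 ≤ A := hA ▸ mul_nonneg h2p.le hl10
  have hB0 : 0 ≤ B := hB ▸ mul_nonneg h2p.le hl20
  have hA1 : A < 1 := by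
    have h := mul_lt_mul_of_pos_left hl1u h2p
    rw [hmul1] at h
    exact hA ▸ h
  have hB1 : B < 1 := by
    have h := mul_lt_mul_of_pos_left hl2u h2p
    rw [hmul1] at h
    exact hB ▸ h
  have hlin : ∀ x y : X, ‖T x - T y - (S x - S y)‖ ≤
      A * ‖S x - S y‖ + B * ‖T x - T y‖ := by
    intro x y
    calc ‖T x - T y - (S x - S y)‖
        ≤ ((l1 * ‖S x - S y‖) ^ p + (l2 * ‖T x - T y‖) ^ p) ^ (1/p) := by
          have := hyp x y
          rwa [show (1:ℝ)/p = 1/p from rfl] at this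
      _ ≤ 2 ^ (1/p - 1) * (l1 * ‖S x - S y‖ + l2 * ‖T x - T y‖) :=
          aux_rpow hp0 hp1.le (mul_nonneg hl10 (norm_nonneg _))
            (mul_nonneg hl20 (norm_nonneg _))
      _ = A * ‖S x - S y‖ + B * ‖T x - T y‖ := by rw [hA, hB]; ring
  have hbnd : ∀ x y : X,
      (1 - A) / (1 + B) * ‖S x - S y‖ ≤ ‖T x - T y‖ ∧
      ‖T x - T y‖ ≤ (1 + A) / (1 - B) * ‖S x - S y‖ := by
    intro x y
    have h := hlin x y
    have e1 : T x - T y = (S x - S y) + (T x - T y - (S x - S y)) := by abel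
    have e2 : S x - S y = (T x - T y) - (T x - T y - (S x - S y)) := by abel
    have t1 : ‖T x - T y‖ ≤ ‖S x - S y‖ + ‖T x - T y - (S x - S y)‖ := by
      conv_lhs => rw [e1]
      exact norm_add_le _ _
    have t2 : ‖S x - S y‖ ≤ ‖T x - T y‖ + ‖T x - T y - (S x - S y)‖ := by
      conv_lhs => rw [e2]
      exact norm_sub_le _ _
    constructor
    · rw [div_mul_eq_mul_div, div_le_iff₀ (by linarith : (0:ℝ) < 1 + B)]
      nlinarith [norm_nonneg (T x - T y), norm_nonneg (S x - S y)]
    · rw [div_mul_eq_mul_div, le_div_iff₀ (by linarith : (0:ℝ) < 1 - B)]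
      nlinarith [norm_nonneg (T x - T y), norm_nonneg (S x - S y)]
  have hTinj : Function.Injective T := by
    intro x y hxy
    apply hSbij.1
    have h1 := (hbnd x y).1
    rw [hxy, sub_self, norm_zero] at h1
    have hc : 0 < (1 - A) / (1 + B) := div_pos (by linarith) (by linarith)
    have : ‖S x - S y‖ ≤ 0 := by
      nlinarith [norm_nonneg (S x - S y)]
    have : S x - S y = 0 := norm_le_zero_iff.mp this
    exact sub_eq_zero.mp this
  have hTsurj : Function.Surjective T := by
    have hg : ∀ u v : Y, ‖(T (Function.invFun S u) - u) - (T (Function.invFun S v) - v)‖ ≤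
        A * ‖u - v‖ + B * ‖u - v + ((T (Function.invFun S u) - u) - (T (Function.invFun S v) - v))‖ := by
      intro u v
      have hx : S (Function.invFun S u) = u := Function.rightInverse_invFun hSbij.2 u
      have hy : S (Function.invFun S v) = v := Function.rightInverse_invFun hSbij.2 v
      obtain ⟨x, hx'⟩ : ∃ x : X, x = Function.invFun S u := ⟨_, rfl⟩
      obtain ⟨y, hy'⟩ : ∃ y : X, y = Function.invFun S v := ⟨_, rfl⟩
      rw [← hx'] at hx ⊢
      rw [← hy'] at hy ⊢
      rw [← hx, ← hy]
      have e1 : (T x - S x) - (T y - S y) = T x - T y - (S x - S y) := by abel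
      have e2 : S x - S y + ((T x - S x) - (T y - S y)) = T x - T y := by abel
      rw [e2, e1]
      exact hlin x y
    have hks := key_surj (fun u => T (Function.invFun S u) - u) A B hA0 hA1 hB0 hB1 hg
    intro w
    obtain ⟨u, hu⟩ := hks w
    simp only at hu
    exact ⟨Function.invFun S u, by rw [← hu]; abel⟩
  refine ⟨⟨hTinj, hTsurj⟩, ?_⟩
  simp only [← hA, ← hB]
  exact hbnd
end

section
/- Let X, Y be Banach spaces, S : X → Y a bijective Lipschitz map with Lipschitz inverse, and T : X → Y a map such that there exists λ ∈ [0,1) with ‖Tx − Ty − (Sx − Sy)‖ ≤ λ‖Sx − Sy‖ + ‖Tx − Ty‖ for all x, y ∈ X. If T∘S⁻¹ is Lipschitz with Lip(T∘S⁻¹) > 0, then T is bijective with Lipschitz inverse and Lip(T⁻¹) ≤ (2/(1−λ))·Lip(S⁻¹). -/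
set_option maxHeartbeats 2000000 in
theorem stmt11 {X Y : Type*} [NormedAddCommGroup X] [NormedSpace ℝ X] [CompleteSpace X]
    [NormedAddCommGroup Y] [NormedSpace ℝ Y] [CompleteSpace Y]
    (S T : X → Y) (hSbij : Function.Bijective S)
    (hSlip : ∃ K : NNReal, LipschitzWith K S)
    (hSinv : ∃ K : NNReal, LipschitzWith K (Function.invFun S))
    (lam : ℝ) (hlam : lam ∈ Set.Ico (0 : ℝ) 1)
    (hyp : ∀ x y : X, ‖T x - T y - (S x - S y)‖ ≤ lam * ‖S x - S y‖ + ‖T x - T y‖)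
    (hTS : ∃ K : NNReal, LipschitzWith K (T ∘ Function.invFun S))
    (hTSpos : 0 < lipConst (T ∘ Function.invFun S)) :
    Function.Bijective T ∧
    (∃ K : NNReal, LipschitzWith K (Function.invFun T)) ∧
    lipConst (Function.invFun T) ≤ 2 / (1 - lam) * lipConst (Function.invFun S) := by
  classical
  obtain ⟨hlam0, hlam1⟩ := hlam
  have hSinj := hSbij.1
  have hSsurj := hSbij.2
  have hSL : Function.LeftInverse (Function.invFun S) S := Function.leftInverse_invFun hSinj
  obtain ⟨K0, hK0⟩ := hTS
  obtain ⟨Ki0, hKi0⟩ := hSinv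
  obtain ⟨Ks0, hKs0⟩ := hSlip
  set K : ℝ := max (K0 : ℝ) 1 with hKdef
  set Ki : ℝ := max (Ki0 : ℝ) 1 with hKidef
  set Ks : ℝ := max (Ks0 : ℝ) 1 with hKsdef
  have hK1 : (1 : ℝ) ≤ K := le_max_right _ _
  have hKi1 : (1 : ℝ) ≤ Ki := le_max_right _ _
  have hKs1 : (1 : ℝ) ≤ Ks := le_max_right _ _
  have hK : ∀ x y : X, ‖T x - T y‖ ≤ K * ‖S x - S y‖ := by
    intro x y
    have h := hK0.dist_le_mul (S x) (S y)
    simp only [Function.comp_apply, hSL x, hSL y, dist_eq_norm] at h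
    calc ‖T x - T y‖ ≤ (K0 : ℝ) * ‖S x - S y‖ := h
      _ ≤ K * ‖S x - S y‖ := by
          apply mul_le_mul_of_nonneg_right (le_max_left _ _) (norm_nonneg _)
  have hKi : ∀ x y : X, ‖x - y‖ ≤ Ki * ‖S x - S y‖ := by
    intro x y
    have h := hKi0.dist_le_mul (S x) (S y)
    simp only [hSL x, hSL y, dist_eq_norm] at h
    calc ‖x - y‖ ≤ (Ki0 : ℝ) * ‖S x - S y‖ := h
      _ ≤ Ki * ‖S x - S y‖ := by
          apply mul_le_mul_of_nonneg_right (le_max_left _ _) (norm_nonneg _)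
  have hKs : ∀ x y : X, ‖S x - S y‖ ≤ Ks * ‖x - y‖ := by
    intro x y
    have h := hKs0.dist_le_mul x y
    simp only [dist_eq_norm] at h
    calc ‖S x - S y‖ ≤ (Ks0 : ℝ) * ‖x - y‖ := h
      _ ≤ Ks * ‖x - y‖ := by
          apply mul_le_mul_of_nonneg_right (le_max_left _ _) (norm_nonneg _)
  -- Step A : lower bound for T
  have hA : ∀ x y : X, (1 - lam) * ‖S x - S y‖ ≤ 2 * ‖T x - T y‖ := by
    intro x y
    have h := hyp x y
    have h2 := abs_norm_sub_norm_le (T x - T y) (S x - S y)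
    rw [abs_le] at h2
    linarith [h2.1]
  have hTinj : Function.Injective T := by
    intro x y hxy
    have h := hA x y
    rw [hxy, sub_self, norm_zero] at h
    have : ‖S x - S y‖ = 0 := le_antisymm (by nlinarith) (norm_nonneg _)
    have : S x - S y = 0 := by rwa [norm_eq_zero] at this
    exact hSinj (sub_eq_zero.mp this)
  -- the epsilon
  set ε : ℝ := (1 - lam) / (2 + K) with hεdef
  have hε : 0 < ε := div_pos (by linarith) (by linarith)
  have hεK : ε * (2 + K) = 1 - lam := by
    rw [hεdef]; field_simp
  have hε1 : ε ≤ 1 := by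
    rw [hεdef, div_le_one (by linarith)]; linarith
  have hlam_eq : lam = 1 - 2 * ε - ε * K := by
    have h := hεK; ring_nf at h ⊢; linarith
  -- the homotopy
  set V : ℝ → X → Y := fun t x => S x + t • (T x - S x) with hV
  have hlow : ∀ t, 0 ≤ t → t ≤ 1 → ∀ x y : X,
      ε * ‖S x - S y‖ ≤ 2 * ‖V t x - V t y‖ := by
    intro t ht0 ht1 x y
    have h1 := hyp x y
    have h2 := hK x y
    have h3 : ‖S x - S y‖ ≤ ‖V t x - V t y‖ + t * ‖T x - T y - (S x - S y)‖ := by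
      have e : S x - S y = (V t x - V t y) - t • (T x - T y - (S x - S y)) := by
        simp only [hV]; module
      calc ‖S x - S y‖ = ‖(V t x - V t y) - t • (T x - T y - (S x - S y))‖ := by rw [← e]
        _ ≤ ‖V t x - V t y‖ + ‖t • (T x - T y - (S x - S y))‖ := norm_sub_le _ _
        _ = ‖V t x - V t y‖ + t * ‖T x - T y - (S x - S y)‖ := by
            rw [norm_smul, Real.norm_eq_abs, abs_of_nonneg ht0]
    have h4 : ‖T x - T y‖ ≤ ‖V t x - V t y‖ + (1 - t) * ‖T x - T y - (S x - S y)‖ := by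
      have e : T x - T y = (V t x - V t y) + (1 - t) • (T x - T y - (S x - S y)) := by
        simp only [hV]; module
      calc ‖T x - T y‖ = ‖(V t x - V t y) + (1 - t) • (T x - T y - (S x - S y))‖ := by rw [← e]
        _ ≤ ‖V t x - V t y‖ + ‖(1 - t) • (T x - T y - (S x - S y))‖ := norm_add_le _ _
        _ = ‖V t x - V t y‖ + (1 - t) * ‖T x - T y - (S x - S y)‖ := by
            rw [norm_smul, Real.norm_eq_abs, abs_of_nonneg (by linarith)]
    set a := ‖S x - S y‖ with ha'
    set b := ‖T x - T y‖ with hb'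
    set d := ‖T x - T y - (S x - S y)‖ with hd'
    set v := ‖V t x - V t y‖ with hv'
    have ha : 0 ≤ a := norm_nonneg _
    have hb : 0 ≤ b := norm_nonneg _
    have hd : 0 ≤ d := norm_nonneg _
    have hv : 0 ≤ v := norm_nonneg _
    have h5 : (ε + t - ε * t) * d ≤ (lam + ε * K) * a + (1 - ε) * v := by
      nlinarith [mul_le_mul_of_nonneg_left h2 hε.le,
        mul_le_mul_of_nonneg_left h4 (by linarith : (0:ℝ) ≤ 1 - ε)]
    have h6 : t * ((ε + t - ε * t) * d) ≤ t * ((lam + ε * K) * a + (1 - ε) * v) :=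
      mul_le_mul_of_nonneg_left h5 ht0
    have h7 : (ε + t - ε * t) * a ≤ (ε + t - ε * t) * (v + t * d) :=
      mul_le_mul_of_nonneg_left h3 (by nlinarith)
    rw [hlam_eq] at h6
    have h8 : 0 ≤ (2 - ε - 2 * t + 2 * ε * t) * v := by
      apply mul_nonneg _ hv
      nlinarith [mul_nonneg (sub_nonneg.2 ht1) (sub_nonneg.2 hε1)]
    linarith [h6, h7, h8, mul_nonneg (mul_nonneg hε.le ht0) ha]
  -- uniform lower bound in terms of ‖x - y‖
  set m : ℝ := ε / (2 * Ki) with hmdef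
  have hm : 0 < m := div_pos hε (by linarith)
  have hlow2 : ∀ t, 0 ≤ t → t ≤ 1 → ∀ x y : X, m * ‖x - y‖ ≤ ‖V t x - V t y‖ := by
    intro t ht0 ht1 x y
    have h1 := hlow t ht0 ht1 x y
    have h2 := hKi x y
    rw [hmdef, div_mul_eq_mul_div, div_le_iff₀ (by linarith : (0:ℝ) < 2 * Ki)]
    nlinarith [mul_le_mul_of_nonneg_left h2 hε.le,
      mul_le_mul_of_nonneg_left h1 (by linarith : (0:ℝ) ≤ Ki)]
  -- Lipschitz bound for T - S
  set c : ℝ := (lam + K) * Ks with hcdef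
  have hc : 0 < c := by nlinarith
  have hW : ∀ x y : X, ‖(T x - S x) - (T y - S y)‖ ≤ c * ‖x - y‖ := by
    intro x y
    have e : (T x - S x) - (T y - S y) = T x - T y - (S x - S y) := by abel
    rw [e]
    have h1 := hyp x y
    have h2 := hK x y
    have h3 := hKs x y
    nlinarith [norm_nonneg (x - y), mul_le_mul_of_nonneg_left h3 (by linarith : (0:ℝ) ≤ lam + K)]
  set δ : ℝ := m / (2 * c) with hδdef
  have hδ : 0 < δ := div_pos hm (by linarith)
  -- homotopy step
  have hstep : ∀ s t : ℝ, 0 ≤ s → s ≤ 1 → 0 ≤ t → t ≤ 1 → |t - s| ≤ δ →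
      Function.Surjective (V s) → Function.Surjective (V t) := by
    intro s t hs0 hs1 ht0 ht1 hts hVs
    intro w
    set F : X → X := fun x => Function.invFun (V s) (w - (t - s) • (T x - S x)) with hF
    have hVsr : Function.RightInverse (Function.invFun (V s)) (V s) :=
      Function.rightInverse_invFun hVs
    have hcontr : ∀ x y : X, dist (F x) (F y) ≤ (1/2 : ℝ) * dist x y := by
      intro x y
      have h1 := hlow2 s hs0 hs1 (F x) (F y)
      have h2 : V s (F x) = w - (t - s) • (T x - S x) := hVsr _
      have h3 : V s (F y) = w - (t - s) • (T y - S y) := hVsr _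
      have h4 : ‖V s (F x) - V s (F y)‖ ≤ |t - s| * (c * ‖x - y‖) := by
        rw [h2, h3]
        have e : (w - (t - s) • (T x - S x)) - (w - (t - s) • (T y - S y))
            = (t - s) • ((T y - S y) - (T x - S x)) := by module
        rw [e, norm_smul, Real.norm_eq_abs, norm_sub_rev]
        exact mul_le_mul_of_nonneg_left (hW x y) (abs_nonneg _)
      have h5 : |t - s| * (c * ‖x - y‖) ≤ δ * (c * ‖x - y‖) :=
        mul_le_mul_of_nonneg_right hts (by positivity)
      have hδc : δ * c = m / 2 := by
        rw [hδdef]; field_simp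
      rw [dist_eq_norm, dist_eq_norm]
      have h6 : m * ‖F x - F y‖ ≤ m * ((1/2 : ℝ) * ‖x - y‖) := by
        calc m * ‖F x - F y‖ ≤ ‖V s (F x) - V s (F y)‖ := h1
          _ ≤ δ * (c * ‖x - y‖) := le_trans h4 h5
          _ = m * ((1/2 : ℝ) * ‖x - y‖) := by rw [← mul_assoc, hδc]; ring
      exact le_of_mul_le_mul_left h6 hm
    have hco : ((1/2 : NNReal) : ℝ) = 1/2 := by
      rw [NNReal.coe_div]; norm_num
    have hFc : ContractingWith (1/2 : NNReal) F := by
      constructor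
      · have h : ((1/2 : NNReal) : ℝ) < ((1 : NNReal) : ℝ) := by rw [hco]; norm_num
        exact_mod_cast h
      · apply LipschitzWith.of_dist_le_mul
        intro x y
        rw [hco]
        exact hcontr x y
    set x : X := ContractingWith.fixedPoint F hFc with hx
    have hfix : F x = x := hFc.fixedPoint_isFixedPt
    refine ⟨x, ?_⟩
    have h7 : V s x = w - (t - s) • (T x - S x) := by
      conv_lhs => rw [← hfix]
      exact hVsr _
    calc V t x = V s x + (t - s) • (T x - S x) := by simp only [hV]; module
      _ = w := by rw [h7]; abel
  -- induction along the homotopy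
  have hind : ∀ n : ℕ, ∀ t : ℝ, 0 ≤ t → t ≤ 1 → t ≤ n * δ → Function.Surjective (V t) := by
    intro n
    induction n with
    | zero =>
      intro t ht0 ht1 htn
      have ht : t = 0 := le_antisymm (by simpa using htn) ht0
      subst ht
      intro w
      obtain ⟨x, hx⟩ := hSsurj w
      exact ⟨x, by simp [hV, hx]⟩
    | succ n ih =>
      intro t ht0 ht1 htn
      by_cases h : t ≤ n * δ
      · exact ih t ht0 ht1 h
      · push_neg at h
        set s : ℝ := max (t - δ) 0 with hsdef
        have hs0 : 0 ≤ s := le_max_right _ _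
        have hst : s ≤ t := max_le (by linarith) ht0
        have hs1 : s ≤ 1 := le_trans hst ht1
        have hsn : s ≤ n * δ := by
          apply max_le
          · push_cast at htn; linarith
          · positivity
        have hts : |t - s| ≤ δ := by
          rw [abs_le]
          constructor
          · linarith
          · have : t - δ ≤ s := le_max_left _ _
            linarith
        exact hstep s t hs0 hs1 ht0 ht1 hts (ih s hs0 hs1 hsn)
  have hTsurj : Function.Surjective T := by
    obtain ⟨n, hn⟩ := exists_nat_ge (1 / δ)
    have h1 : (1 : ℝ) ≤ n * δ := by
      rw [div_le_iff₀ hδ] at hn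
      linarith
    have h2 := hind n 1 zero_le_one le_rfl h1
    intro w
    obtain ⟨x, hx⟩ := h2 w
    refine ⟨x, ?_⟩
    simpa [hV] using hx
  -- inverse bounds
  have hTr : Function.RightInverse (Function.invFun T) T := Function.rightInverse_invFun hTsurj
  have hμ : 0 < 2 / (1 - lam) := div_pos (by norm_num) (by linarith)
  have hinvT : ∀ u v : Y, ‖Function.invFun T u - Function.invFun T v‖
      ≤ Ki * (2 / (1 - lam)) * ‖u - v‖ := by
    intro u v
    set x := Function.invFun T u with hxdef
    set y := Function.invFun T v with hydef
    have hx : T x = u := hTr u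
    have hy : T y = v := hTr v
    have h1 : ‖x - y‖ ≤ Ki * ‖S x - S y‖ := hKi x y
    have h2 : (1 - lam) * ‖S x - S y‖ ≤ 2 * ‖T x - T y‖ := hA x y
    have h3 : ‖S x - S y‖ ≤ 2 / (1 - lam) * ‖T x - T y‖ := by
      rw [div_mul_eq_mul_div, le_div_iff₀ (by linarith : (0:ℝ) < 1 - lam)]
      linarith
    calc ‖x - y‖ ≤ Ki * ‖S x - S y‖ := h1
      _ ≤ Ki * (2 / (1 - lam) * ‖T x - T y‖) :=
          mul_le_mul_of_nonneg_left h3 (by linarith)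
      _ = Ki * (2 / (1 - lam)) * ‖T x - T y‖ := by ring
      _ = Ki * (2 / (1 - lam)) * ‖u - v‖ := by rw [hx, hy]
  have hCnn : 0 ≤ Ki * (2 / (1 - lam)) := mul_nonneg (by linarith) hμ.le
  refine ⟨⟨hTinj, hTsurj⟩, ?_, ?_⟩
  · refine ⟨(Ki * (2 / (1 - lam))).toNNReal, ?_⟩
    apply LipschitzWith.of_dist_le_mul
    intro u v
    rw [Real.coe_toNNReal _ hCnn, dist_eq_norm, dist_eq_norm]
    exact hinvT u v
  · -- lipConst estimate
    set A : Set ℝ := {Ka : ℝ | 0 ≤ Ka ∧ ∀ u v : Y,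
        ‖Function.invFun S u - Function.invFun S v‖ ≤ Ka * ‖u - v‖} with hAdef
    have hAne : A.Nonempty := by
      refine ⟨(Ki0 : ℝ), Ki0.coe_nonneg, fun u v => ?_⟩
      have h := hKi0.dist_le_mul u v
      simpa [dist_eq_norm] using h
    have hkey : ∀ Ka ∈ A, lipConst (Function.invFun T) ≤ 2 / (1 - lam) * Ka := by
      intro Ka hKa
      obtain ⟨hKa0, hKa2⟩ := hKa
      apply csInf_le
      · exact ⟨0, fun z hz => hz.1⟩
      · refine ⟨mul_nonneg hμ.le hKa0, fun u v => ?_⟩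
        set x := Function.invFun T u with hxdef
        set y := Function.invFun T v with hydef
        have hx : T x = u := hTr u
        have hy : T y = v := hTr v
        have h1 : ‖x - y‖ ≤ Ka * ‖S x - S y‖ := by
          have h := hKa2 (S x) (S y)
          simpa [hSL x, hSL y] using h
        have h3 : ‖S x - S y‖ ≤ 2 / (1 - lam) * ‖T x - T y‖ := by
          rw [div_mul_eq_mul_div, le_div_iff₀ (by linarith : (0:ℝ) < 1 - lam)]
          linarith [hA x y]
        calc ‖x - y‖ ≤ Ka * ‖S x - S y‖ := h1
          _ ≤ Ka * (2 / (1 - lam) * ‖T x - T y‖) := mul_le_mul_of_nonneg_left h3 hKa0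
          _ = 2 / (1 - lam) * Ka * ‖T x - T y‖ := by ring
          _ = 2 / (1 - lam) * Ka * ‖u - v‖ := by rw [hx, hy]
    have hkey2 : ∀ Ka ∈ A, (1 - lam) / 2 * lipConst (Function.invFun T) ≤ Ka := by
      intro Ka hKa
      have h := hkey Ka hKa
      have h2 : (1 - lam) / 2 * lipConst (Function.invFun T)
          ≤ (1 - lam) / 2 * (2 / (1 - lam) * Ka) :=
        mul_le_mul_of_nonneg_left h (by linarith)
      have h3 : (1 - lam) / 2 * (2 / (1 - lam) * Ka) = Ka := by
        have hne : (1 : ℝ) - lam ≠ 0 := by linarith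
        field_simp
      linarith
    have hInf : (1 - lam) / 2 * lipConst (Function.invFun T) ≤ sInf A :=
      le_csInf hAne hkey2
    have hfin : lipConst (Function.invFun T)
        = 2 / (1 - lam) * ((1 - lam) / 2 * lipConst (Function.invFun T)) := by
      have hne : (1 : ℝ) - lam ≠ 0 := by linarith
      field_simp
    calc lipConst (Function.invFun T)
        = 2 / (1 - lam) * ((1 - lam) / 2 * lipConst (Function.invFun T)) := hfin
      _ ≤ 2 / (1 - lam) * sInf A := mul_le_mul_of_nonneg_left hInf hμ.le
      _ = 2 / (1 - lam) * lipConst (Function.invFun S) := rfl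
end

section
/- Let X, Y be Banach spaces, S : X → Y a bijective Lipschitz map with Lipschitz inverse, and T : X → Y a Lipschitz map with ‖Tx − Ty − (Sx − Sy)‖ ≤ λ₁‖Sx − Sy‖ + λ₂‖Tx − Ty‖ for all x, y ∈ X, where λ₁ ∈ [0,1) and λ₂ ∈ [0,1]. Then T is bijective, and for every ε > 0 with 1 > λ₂ − ε > 0 and λ₁ + ε·Lip(T∘S⁻¹) < 1, one has ((1 − λ₁ − ε·Lip(TS⁻¹))/(1 + λ₂ − ε))‖Sx − Sy‖ ≤ ‖Tx − Ty‖ ≤ ((1 + λ₁ + ε·Lip(TS⁻¹))/(1 − λ₂ + ε))‖Sx − Sy‖ for all x, y ∈ X. -/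
lemma lipConst_nonneg {X Y : Type*} [NormedAddCommGroup X] [NormedAddCommGroup Y]
    (f : X → Y) (hf : ∃ K : NNReal, LipschitzWith K f) : 0 ≤ lipConst f := by
  obtain ⟨K, hK⟩ := hf
  refine le_csInf ⟨(K : ℝ), ?_⟩ fun k hk => hk.1
  exact ⟨K.coe_nonneg, fun x y => by simpa [dist_eq_norm] using hK.dist_le_mul x y⟩

lemma lipConst_bound {X Y : Type*} [NormedAddCommGroup X] [NormedAddCommGroup Y]
    (f : X → Y) (hf : ∃ K : NNReal, LipschitzWith K f) :
    ∀ x y : X, ‖f x - f y‖ ≤ lipConst f * ‖x - y‖ := by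
  obtain ⟨K, hK⟩ := hf
  have hmem : (K : ℝ) ∈ {K : ℝ | 0 ≤ K ∧ ∀ x y : X, ‖f x - f y‖ ≤ K * ‖x - y‖} :=
    ⟨K.coe_nonneg, fun x y => by simpa [dist_eq_norm] using hK.dist_le_mul x y⟩
  intro x y
  rcases eq_or_ne x y with h | h
  · simp [h]
  · have hxy : 0 < ‖x - y‖ := by rwa [norm_pos_iff, sub_ne_zero]
    rw [← div_le_iff₀ hxy]
    refine le_csInf ⟨_, hmem⟩ fun k hk => ?_
    rw [div_le_iff₀ hxy]
    exact hk.2 x y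

set_option maxHeartbeats 1000000 in
lemma surj_key {Y : Type*} [NormedAddCommGroup Y] [NormedSpace ℝ Y] [CompleteSpace Y]
    (f : Y → Y) (a b L : ℝ) (ha0 : 0 ≤ a) (ha1 : a < 1) (hb0 : 0 ≤ b) (hb1 : b < 1)
    (hL : 0 ≤ L) (hLb : ∀ u v, ‖f u - f v‖ ≤ L * ‖u - v‖)
    (hab : ∀ u v, ‖f u - f v - (u - v)‖ ≤ a * ‖u - v‖ + b * ‖f u - f v‖) :
    Function.Surjective f := by
  set κ : ℝ := (1 - a) * (1 - b) / 2 with hκdef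
  have hκ : 0 < κ := by
    have h1a : (0:ℝ) < 1 - a := by linarith
    have h1b : (0:ℝ) < 1 - b := by linarith
    rw [hκdef]; positivity
  set g : ℝ → Y → Y := fun t u => u + t • (f u - u) with hg
  -- expansiveness
  have hexp : ∀ t : ℝ, 0 ≤ t → t ≤ 1 → ∀ u v : Y, κ * ‖u - v‖ ≤ ‖g t u - g t v‖ := by
    intro t ht0 ht1 u v
    have hdiff : g t u - g t v = (u - v) + t • (f u - f v - (u - v)) := by
      simp only [hg]; module
    have h1 : ‖u - v‖ ≤ ‖g t u - g t v‖ + t * (a * ‖u - v‖ + b * ‖f u - f v‖) := by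
      have : u - v = (g t u - g t v) - t • (f u - f v - (u - v)) := by
        rw [hdiff]; abel
      calc ‖u - v‖ = ‖(g t u - g t v) - t • (f u - f v - (u - v))‖ := by rw [← this]
        _ ≤ ‖g t u - g t v‖ + ‖t • (f u - f v - (u - v))‖ := norm_sub_le _ _
        _ ≤ ‖g t u - g t v‖ + t * (a * ‖u - v‖ + b * ‖f u - f v‖) := by
            rw [norm_smul, Real.norm_eq_abs, abs_of_nonneg ht0]
            exact add_le_add_right (mul_le_mul_of_nonneg_left (hab u v) ht0) _
    have h2 : ‖f u - f v‖ ≤ ‖g t u - g t v‖ + (1 - t) * (a * ‖u - v‖ + b * ‖f u - f v‖) := by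
      have : f u - f v = (g t u - g t v) + (1 - t) • (f u - f v - (u - v)) := by
        rw [hdiff]; module
      calc ‖f u - f v‖ = ‖(g t u - g t v) + (1 - t) • (f u - f v - (u - v))‖ := by rw [← this]
        _ ≤ ‖g t u - g t v‖ + ‖(1 - t) • (f u - f v - (u - v))‖ := norm_add_le _ _
        _ ≤ _ := by
            rw [norm_smul, Real.norm_eq_abs, abs_of_nonneg (by linarith)]
            exact add_le_add_right (mul_le_mul_of_nonneg_left (hab u v) (by linarith)) _
    have hA : (0:ℝ) ≤ ‖u - v‖ := norm_nonneg _
    have hB : (0:ℝ) ≤ ‖f u - f v‖ := norm_nonneg _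
    have hm : (0:ℝ) ≤ ‖g t u - g t v‖ := norm_nonneg _
    have ht1' : (0:ℝ) ≤ 1 - t := by linarith
    have hp : (0:ℝ) ≤ 1 - (1-t)*b := by nlinarith
    nlinarith [mul_le_mul_of_nonneg_left h1 hp,
      mul_le_mul_of_nonneg_left h2 (mul_nonneg ht0 hb0),
      mul_nonneg (mul_nonneg (mul_nonneg ht1' ha0) (by linarith : (0:ℝ) ≤ 1 - b)) hA,
      mul_nonneg (mul_nonneg (mul_nonneg ht0 hb0) (by linarith : (0:ℝ) ≤ 1 - a)) hA,
      mul_nonneg (mul_nonneg ht0 hb0) hm,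
      mul_nonneg (mul_nonneg ht1' hb0) hm]
  have hM : ∀ u v : Y, ‖(f u - u) - (f v - v)‖ ≤ (L + 1) * ‖u - v‖ := by
    intro u v
    have : (f u - u) - (f v - v) = (f u - f v) - (u - v) := by abel
    rw [this]
    calc ‖(f u - f v) - (u - v)‖ ≤ ‖f u - f v‖ + ‖u - v‖ := norm_sub_le _ _
      _ ≤ L * ‖u - v‖ + 1 * ‖u - v‖ := by
          refine add_le_add (hLb u v) (by rw [one_mul])
      _ = (L + 1) * ‖u - v‖ := by ring
  have hL1 : (0:ℝ) < L + 1 := by linarith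
  set δ : ℝ := κ / (2 * (L + 1)) with hδdef
  have hδ : 0 < δ := by positivity
  -- step lemma
  have step : ∀ t : ℝ, 0 ≤ t → t ≤ 1 → Function.Surjective (g t) →
      ∀ s : ℝ, 0 ≤ s → s ≤ 1 → |s - t| ≤ δ → Function.Surjective (g s) := by
    intro t ht0 ht1 hsurj s hs0 hs1 hst y
    have hginj : Function.Injective (g t) := by
      intro u v huv
      have := hexp t ht0 ht1 u v
      rw [huv, sub_self, norm_zero] at this
      have : ‖u - v‖ ≤ 0 := by
        by_contra h
        push_neg at h
        nlinarith
      rw [← sub_eq_zero]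
      simpa [norm_le_zero_iff] using this
    set inv := Function.invFun (g t) with hinv
    have hgi : ∀ z, g t (inv z) = z := fun z => Function.invFun_eq (hsurj z)
    have hinvlip : ∀ z w, ‖inv z - inv w‖ ≤ κ⁻¹ * ‖z - w‖ := by
      intro z w
      have h := hexp t ht0 ht1 (inv z) (inv w)
      rw [hgi, hgi] at h
      rw [← mul_le_mul_iff_right₀ hκ]
      calc κ * ‖inv z - inv w‖ ≤ ‖z - w‖ := h
        _ = κ * (κ⁻¹ * ‖z - w‖) := by field_simp
    set Φ : Y → Y := fun u => inv (y + (t - s) • (f u - u)) with hΦ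
    have hcontr : ∀ u v, ‖Φ u - Φ v‖ ≤ (1/2 : ℝ) * ‖u - v‖ := by
      intro u v
      calc ‖Φ u - Φ v‖ ≤ κ⁻¹ * ‖(y + (t - s) • (f u - u)) - (y + (t - s) • (f v - v))‖ :=
            hinvlip _ _
        _ = κ⁻¹ * (|t - s| * ‖(f u - u) - (f v - v)‖) := by
            rw [show (y + (t - s) • (f u - u)) - (y + (t - s) • (f v - v))
                = (t - s) • ((f u - u) - (f v - v)) by module, norm_smul, Real.norm_eq_abs]
        _ ≤ κ⁻¹ * (δ * ((L + 1) * ‖u - v‖)) := by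
            refine mul_le_mul_of_nonneg_left ?_ (by positivity)
            refine mul_le_mul ?_ (hM u v) (norm_nonneg _) (le_of_lt hδ)
            rw [abs_sub_comm]; exact hst
        _ = (1/2 : ℝ) * ‖u - v‖ := by
            rw [hδdef]; field_simp
    have hlip : LipschitzWith (1/2 : NNReal) Φ := by
      apply LipschitzWith.of_dist_le_mul
      intro u v
      rw [dist_eq_norm, dist_eq_norm]
      simpa using hcontr u v
    have hcw : ContractingWith (1/2 : NNReal) Φ :=
      ⟨by exact_mod_cast (by norm_num : ((1:ℝ)/2) < 1), hlip⟩
    have : Nonempty Y := ⟨0⟩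
    obtain ⟨u, hu⟩ : ∃ u, Φ u = u := ⟨hcw.fixedPoint Φ, hcw.fixedPoint_isFixedPt⟩
    refine ⟨u, ?_⟩
    have : g t u = y + (t - s) • (f u - u) := by
      conv_lhs => rw [← hu]
      exact hgi _
    have : u + t • (f u - u) = y + (t - s) • (f u - u) := this
    have : g s u = y := by
      simp only [hg]
      linear_combination (norm := module) this
    exact this
  -- induction along the interval
  have main : ∀ n : ℕ, Function.Surjective (g (min ((n : ℝ) * δ) 1)) := by
    intro n
    induction n with
    | zero =>
        simp only [Nat.cast_zero, zero_mul]
        rw [min_eq_left (by norm_num)]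
        intro y; exact ⟨y, by simp [hg]⟩
    | succ n ih =>
        set t := min ((n : ℝ) * δ) 1 with htdef
        set s := min (((n : ℝ) + 1) * δ) 1 with hsdef
        have ht0 : 0 ≤ t := le_min (by positivity) (by norm_num)
        have ht1 : t ≤ 1 := min_le_right _ _
        have hs0 : 0 ≤ s := le_min (by positivity) (by norm_num)
        have hs1 : s ≤ 1 := min_le_right _ _
        have hts : t ≤ s := min_le_min (by nlinarith [hδ.le]) le_rfl
        have hsub : s - t ≤ δ := by
          rcases le_or_gt 1 ((n : ℝ) * δ) with h | h
          · have : t = 1 := min_eq_right h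
            have : s ≤ t := by rw [this]; exact hs1
            linarith
          · have htv : t = (n : ℝ) * δ := min_eq_left h.le
            have : s ≤ ((n : ℝ) + 1) * δ := min_le_left _ _
            rw [htv]; nlinarith
        have habs : |s - t| ≤ δ := by
          rw [abs_of_nonneg (by linarith)]; exact hsub
        have : Function.Surjective (g s) := step t ht0 ht1 ih s hs0 hs1 habs
        simpa [hsdef, Nat.cast_succ] using this
  obtain ⟨n, hn⟩ := exists_nat_ge (1 / δ)
  have h1 : (1:ℝ) ≤ (n : ℝ) * δ := by
    rw [div_le_iff₀ hδ] at hn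
    linarith
  have := main n
  rw [min_eq_right h1] at this
  intro y
  obtain ⟨u, hu⟩ := this y
  refine ⟨u, ?_⟩
  simpa [hg] using hu

theorem stmt12 {X Y : Type*} [NormedAddCommGroup X] [NormedSpace ℝ X] [CompleteSpace X]
    [NormedAddCommGroup Y] [NormedSpace ℝ Y] [CompleteSpace Y]
    (S T : X → Y) (hSbij : Function.Bijective S)
    (hSlip : ∃ K : NNReal, LipschitzWith K S)
    (hSinv : ∃ K : NNReal, LipschitzWith K (Function.invFun S))
    (hTlip : ∃ K : NNReal, LipschitzWith K T)
    (l1 l2 : ℝ) (hl1 : l1 ∈ Set.Ico (0 : ℝ) 1) (hl2 : l2 ∈ Set.Icc (0 : ℝ) 1)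
    (hyp : ∀ x y : X, ‖T x - T y - (S x - S y)‖ ≤ l1 * ‖S x - S y‖ + l2 * ‖T x - T y‖) :
    Function.Bijective T ∧
    ∀ ε : ℝ, 0 < ε → 0 < l2 - ε → l2 - ε < 1 →
      l1 + ε * lipConst (T ∘ Function.invFun S) < 1 →
      ∀ x y : X,
        (1 - l1 - ε * lipConst (T ∘ Function.invFun S)) / (1 + l2 - ε) * ‖S x - S y‖
            ≤ ‖T x - T y‖ ∧
        ‖T x - T y‖ ≤
          (1 + l1 + ε * lipConst (T ∘ Function.invFun S)) / (1 - l2 + ε) * ‖S x - S y‖ := by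
  obtain ⟨hl10, hl11⟩ := hl1
  obtain ⟨hl20, hl21⟩ := hl2
  obtain ⟨KT, hKT⟩ := hTlip
  obtain ⟨KSi, hKSi⟩ := hSinv
  have hXne : Nonempty X := ⟨0⟩
  set Sinv := Function.invFun S with hSinvdef
  have hrinv : Function.RightInverse Sinv S := Function.rightInverse_invFun hSbij.2
  have hlinv : Function.LeftInverse Sinv S := Function.leftInverse_invFun hSbij.1
  set f : Y → Y := T ∘ Sinv with hf
  have hflip : ∃ K : NNReal, LipschitzWith K f := ⟨KT * KSi, hKT.comp hKSi⟩
  set L : ℝ := lipConst f with hLdef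
  have hL0 : 0 ≤ L := lipConst_nonneg f hflip
  have hLb : ∀ u v : Y, ‖f u - f v‖ ≤ L * ‖u - v‖ := lipConst_bound f hflip
  have hfhyp : ∀ u v : Y, ‖f u - f v - (u - v)‖ ≤ l1 * ‖u - v‖ + l2 * ‖f u - f v‖ := by
    intro u v
    have := hyp (Sinv u) (Sinv v)
    simpa only [hf, Function.comp_apply, hrinv u, hrinv v] using this
  have hfS : ∀ x : X, f (S x) = T x := by
    intro x
    simp only [hf, Function.comp_apply, hlinv x]
  -- reduce to strict constants
  obtain ⟨a, b, ha0, ha1, hb0, hb1, habf⟩ :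
      ∃ a b : ℝ, 0 ≤ a ∧ a < 1 ∧ 0 ≤ b ∧ b < 1 ∧
        ∀ u v : Y, ‖f u - f v - (u - v)‖ ≤ a * ‖u - v‖ + b * ‖f u - f v‖ := by
    rcases lt_or_ge l2 1 with h | h
    · exact ⟨l1, l2, hl10, hl11, hl20, h, hfhyp⟩
    · have hl2e : l2 = 1 := le_antisymm hl21 h
      set ε : ℝ := (1 - l1) / (2 * (L + 1)) with hεdef
      have hε0 : 0 < ε := by
        have : (0:ℝ) < 1 - l1 := by linarith
        positivity
      have hε1 : ε ≤ 1/2 := by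
        rw [hεdef, div_le_iff₀ (by positivity)]
        nlinarith
      refine ⟨l1 + ε * L, 1 - ε, by positivity, ?_, by linarith, by linarith, ?_⟩
      · have : ε * L < (1 - l1) / 2 := by
          rw [hεdef]
          rw [div_mul_eq_mul_div, div_lt_div_iff₀ (by positivity) (by norm_num)]
          nlinarith
        linarith
      · intro u v
        have h0 := hfhyp u v
        rw [hl2e] at h0
        have := hLb u v
        nlinarith [norm_nonneg (f u - f v), norm_nonneg (u - v)]
  have hfsurj : Function.Surjective f := surj_key f a b L ha0 ha1 hb0 hb1 hL0 hLb habf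
  have hfinj : Function.Injective f := by
    intro u v huv
    have h := habf u v
    rw [huv, sub_self] at h
    have h2 : ‖0 - (u - v)‖ = ‖u - v‖ := by rw [zero_sub, norm_neg]
    rw [h2, norm_zero, mul_zero, add_zero] at h
    have : ‖u - v‖ ≤ 0 := by nlinarith [norm_nonneg (u - v)]
    rw [← sub_eq_zero]
    simpa [norm_le_zero_iff] using this
  have hTeq : T = f ∘ S := by
    funext x
    simp [hfS x]
  have hTbij : Function.Bijective T := by
    rw [hTeq]
    exact (Function.Bijective.comp ⟨hfinj, hfsurj⟩ hSbij)
  refine ⟨hTbij, ?_⟩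
  intro ε hε0 hε2 hε21 hεL x y
  have hTL : ‖T x - T y‖ ≤ L * ‖S x - S y‖ := by
    have := hLb (S x) (S y)
    rwa [hfS x, hfS y] at this
  have hyp' := hyp x y
  have htri1 : ‖T x - T y‖ ≤ ‖S x - S y‖ + ‖T x - T y - (S x - S y)‖ := by
    have : T x - T y = (S x - S y) + (T x - T y - (S x - S y)) := by abel
    calc ‖T x - T y‖ = ‖(S x - S y) + (T x - T y - (S x - S y))‖ := by rw [← this]
      _ ≤ _ := norm_add_le _ _
  have htri2 : ‖S x - S y‖ ≤ ‖T x - T y‖ + ‖T x - T y - (S x - S y)‖ := by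
    have : S x - S y = (T x - T y) - (T x - T y - (S x - S y)) := by abel
    calc ‖S x - S y‖ = ‖(T x - T y) - (T x - T y - (S x - S y))‖ := by rw [← this]
      _ ≤ _ := norm_sub_le _ _
  have hsplit : l2 * ‖T x - T y‖ ≤ (l2 - ε) * ‖T x - T y‖ + ε * L * ‖S x - S y‖ := by
    have : l2 * ‖T x - T y‖ = (l2 - ε) * ‖T x - T y‖ + ε * ‖T x - T y‖ := by ring
    rw [this]
    have := mul_le_mul_of_nonneg_left hTL hε0.le
    linarith
  have hAnn : (0:ℝ) ≤ ‖S x - S y‖ := norm_nonneg _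
  have hBnn : (0:ℝ) ≤ ‖T x - T y‖ := norm_nonneg _
  constructor
  · rw [div_mul_eq_mul_div, div_le_iff₀ (by linarith : (0:ℝ) < 1 + l2 - ε)]
    linarith only [htri2, hyp', hsplit]
  · rw [div_mul_eq_mul_div, le_div_iff₀ (by linarith : (0:ℝ) < 1 - l2 + ε)]
    linarith only [htri1, hyp', hsplit]
end

section
/- (Soderlind–Campanato perturbation, nonlinear form) Let X be a real Banach space, A : X → X a map, and suppose there exist α > 0 and 0 ≤ β < 1 such that ‖αAx − αAy − (x − y)‖ ≤ β‖x − y‖ for all x, y ∈ X. Then A is bijective, Lipschitz, and its inverse is Lipschitz with Lip(A⁻¹) ≤ α/(1 − β). -/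
theorem stmt13 {X : Type*} [NormedAddCommGroup X] [NormedSpace ℝ X] [CompleteSpace X]
    (A : X → X) (α β : ℝ) (hα : 0 < α) (hβ0 : 0 ≤ β) (hβ1 : β < 1)
    (hyp : ∀ x y : X, ‖α • A x - α • A y - (x - y)‖ ≤ β * ‖x - y‖) :
    Function.Bijective A ∧
    (∃ K : NNReal, LipschitzWith K A) ∧
    lipConst (Function.invFun A) ≤ α / (1 - β) := by
  have h1β : 0 < 1 - β := by linarith
  set g : X → X := fun x => α • A x with hg
  -- lower bound
  have hlow : ∀ x y : X, (1 - β) * ‖x - y‖ ≤ ‖g x - g y‖ := by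
    intro x y
    have h := hyp x y
    have h2 : ‖x - y‖ - ‖g x - g y‖ ≤ ‖g x - g y - (x - y)‖ := by
      have := norm_sub_norm_le (x - y) (g x - g y)
      rw [← norm_neg ((x - y) - (g x - g y))] at this
      simpa [neg_sub] using this
    nlinarith [norm_nonneg (x - y), norm_nonneg (g x - g y)]
  -- injective
  have hinj : Function.Injective A := by
    intro x y hxy
    have hgeq : g x = g y := by simp [hg, hxy]
    have h := hlow x y
    rw [hgeq, sub_self, norm_zero] at h
    have hzero : ‖x - y‖ = 0 :=
      le_antisymm (by nlinarith [norm_nonneg (x - y)]) (norm_nonneg _)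
    exact sub_eq_zero.mp (norm_eq_zero.mp hzero)
  -- surjective via Banach fixed point
  have hsurj : Function.Surjective A := by
    intro c
    set T : X → X := fun x => x - g x + α • c with hT
    have hlip : LipschitzWith β.toNNReal T := by
      apply LipschitzWith.of_dist_le_mul
      intro x y
      simp only [dist_eq_norm, hT]
      have : x - g x + α • c - (y - g y + α • c) = -(g x - g y - (x - y)) := by abel
      rw [this, norm_neg, Real.coe_toNNReal _ hβ0]
      exact hyp x y
    have hcontr : ContractingWith β.toNNReal T := by
      constructor
      · exact_mod_cast (by rwa [Real.coe_toNNReal _ hβ0] : (β.toNNReal : ℝ) < 1)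
      · exact hlip
    haveI : Nonempty X := ⟨0⟩
    set x := hcontr.fixedPoint T with hxdef
    have hx : Function.IsFixedPt T x := hcontr.fixedPoint_isFixedPt
    have hgx : g x = α • c := by
      have := hx
      simp only [Function.IsFixedPt, hT] at this
      have : x - g x + α • c = x := this
      have h2 : α • c = g x := by linear_combination (norm := abel1) this
      exact h2.symm
    refine ⟨x, ?_⟩
    have : α • A x = α • c := hgx
    exact smul_right_injective X hα.ne' this
  -- Lipschitz for A
  have hKA : ∃ K : NNReal, LipschitzWith K A := by
    refine ⟨⟨(1 + β) / α, by positivity⟩, LipschitzWith.of_dist_le_mul fun x y => ?_⟩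
    have h := hyp x y
    have h2 : ‖g x - g y‖ ≤ (1 + β) * ‖x - y‖ := by
      have h3 : g x - g y = (x - y) + (g x - g y - (x - y)) := by abel
      calc ‖g x - g y‖ = ‖(x - y) + (g x - g y - (x - y))‖ := by rw [← h3]
        _ ≤ ‖x - y‖ + ‖g x - g y - (x - y)‖ := norm_add_le _ _
        _ ≤ ‖x - y‖ + β * ‖x - y‖ := by linarith
        _ = (1 + β) * ‖x - y‖ := by ring
    have hgA : ‖g x - g y‖ = α * ‖A x - A y‖ := by
      rw [hg]; simp only
      rw [← smul_sub, norm_smul, Real.norm_eq_abs, abs_of_pos hα]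
    simp only [dist_eq_norm, NNReal.coe_mk]
    rw [hgA] at h2
    show ‖A x - A y‖ ≤ (1 + β) / α * ‖x - y‖
    rw [div_mul_eq_mul_div, le_div_iff₀ hα]
    nlinarith [norm_nonneg (A x - A y)]
  refine ⟨⟨hinj, hsurj⟩, hKA, ?_⟩
  -- inverse lipschitz constant
  apply csInf_le
  · exact ⟨0, fun K hK => hK.1⟩
  · refine ⟨by positivity, fun u v => ?_⟩
    set x := Function.invFun A u
    set y := Function.invFun A v
    have hau : A x = u := Function.rightInverse_invFun hsurj u
    have hav : A y = v := Function.rightInverse_invFun hsurj v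
    have h := hlow x y
    have hgA : ‖g x - g y‖ = α * ‖u - v‖ := by
      rw [hg]; simp only
      rw [← smul_sub, norm_smul, Real.norm_eq_abs, abs_of_pos hα, hau, hav]
    rw [hgA] at h
    rw [div_mul_eq_mul_div, le_div_iff₀ h1β]
    nlinarith [norm_nonneg (u - v)]
end

section
/- (Barbagallo–Ernst–Théra perturbation, improved) Let X be a real Banach space, A : X → X a map, and suppose there exist α > 0 and 0 ≤ β < 1 such that ‖Ax − Ay − α(x − y)‖ ≤ β‖Ax − Ay‖ for all x, y ∈ X. Then A is bijective, Lipschitz, and Lip(A⁻¹) ≤ (1 + β)/α. -/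
/-- The homotopy between `α • id` and `A`. -/
noncomputable def Tmap {X : Type*} [NormedAddCommGroup X] [NormedSpace ℝ X]
    (A : X → X) (α s : ℝ) (x : X) : X :=
  α • x + s • (A x - α • x)

lemma Tmap_one {X : Type*} [NormedAddCommGroup X] [NormedSpace ℝ X]
    (A : X → X) (α : ℝ) : Tmap A α 1 = A := by
  funext x; simp [Tmap]

set_option maxHeartbeats 1000000 in
lemma surj_aux_s14 {X : Type*} [NormedAddCommGroup X] [NormedSpace ℝ X] [CompleteSpace X]
    (A : X → X) (α β : ℝ) (hα : 0 < α) (hβ0 : 0 ≤ β) (hβ1 : β < 1)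
    (hyp : ∀ x y : X, ‖A x - A y - α • (x - y)‖ ≤ β * ‖A x - A y‖) :
    Function.Surjective A := by
  have h1β : (0:ℝ) < 1 - β := by linarith
  have hns : ∀ t : ℝ, ∀ v : X, 0 ≤ t → ‖t • v‖ = t * ‖v‖ := by
    intro t v ht; rw [norm_smul, Real.norm_eq_abs, abs_of_nonneg ht]
  -- Lipschitz bound on A
  have hALip : ∀ x y : X, ‖A x - A y‖ ≤ (α / (1 - β)) * ‖x - y‖ := by
    intro x y
    have h := hyp x y
    have h2 : ‖A x - A y‖ ≤ ‖A x - A y - α • (x - y)‖ + ‖α • (x - y)‖ := by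
      calc ‖A x - A y‖ = ‖(A x - A y - α • (x - y)) + α • (x - y)‖ := by abel_nf
        _ ≤ _ := norm_add_le _ _
    rw [hns α _ hα.le] at h2
    rw [div_mul_eq_mul_div, le_div_iff₀ h1β]
    nlinarith
  -- Lipschitz bound on the perturbation
  have hPLip : ∀ x y : X, ‖(A x - α • x) - (A y - α • y)‖ ≤ (β * α / (1 - β)) * ‖x - y‖ := by
    intro x y
    have e : (A x - α • x) - (A y - α • y) = A x - A y - α • (x - y) := by module
    rw [e]
    calc ‖A x - A y - α • (x - y)‖ ≤ β * ‖A x - A y‖ := hyp x y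
      _ ≤ β * ((α / (1 - β)) * ‖x - y‖) := mul_le_mul_of_nonneg_left (hALip x y) hβ0
      _ = (β * α / (1 - β)) * ‖x - y‖ := by ring
  -- uniform expansivity of the homotopy
  have hexp : ∀ s : ℝ, 0 ≤ s → s ≤ 1 → ∀ x y : X,
      α * (1 - β) * ‖x - y‖ ≤ ‖Tmap A α s x - Tmap A α s y‖ := by
    intro s hs0 hs1 x y
    set D := ‖Tmap A α s x - Tmap A α s y‖ with hD
    set E := ‖A x - A y‖ with hE
    set N := ‖x - y‖ with hN
    have hDnn : 0 ≤ D := norm_nonneg _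
    have hEnn : 0 ≤ E := norm_nonneg _
    have hNnn : 0 ≤ N := norm_nonneg _
    have e1 : Tmap A α s x - Tmap A α s y - α • (x - y) = s • (A x - A y - α • (x - y)) := by
      simp only [Tmap]; module
    have e2 : (A x - A y) - (Tmap A α s x - Tmap A α s y)
        = (1 - s) • (A x - A y - α • (x - y)) := by
      simp only [Tmap]; module
    -- E ≤ D + (1-s) β E
    have hE2 : E ≤ D + (1 - s) * (β * E) := by
      calc E = ‖(Tmap A α s x - Tmap A α s y) + ((A x - A y) - (Tmap A α s x - Tmap A α s y))‖ := by
            rw [hE]; abel_nf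
        _ ≤ D + ‖(A x - A y) - (Tmap A α s x - Tmap A α s y)‖ := norm_add_le _ _
        _ ≤ D + (1 - s) * (β * E) := by
            rw [e2, hns _ _ (by linarith)]
            have h3 : ‖A x - A y - α • (x - y)‖ ≤ β * E := hyp x y
            nlinarith [norm_nonneg (A x - A y - α • (x - y))]
    -- α N ≤ D + s β E
    have hE1 : α * N ≤ D + s * (β * E) := by
      have e3 : α • (x - y)
          = (Tmap A α s x - Tmap A α s y) - (Tmap A α s x - Tmap A α s y - α • (x - y)) := by
        module
      have h4 := norm_sub_le (Tmap A α s x - Tmap A α s y)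
        (Tmap A α s x - Tmap A α s y - α • (x - y))
      rw [← e3, ← hD] at h4
      rw [e1, hns _ _ hs0, hns α _ hα.le] at h4
      have h3 : ‖A x - A y - α • (x - y)‖ ≤ β * E := hyp x y
      nlinarith [norm_nonneg (A x - A y - α • (x - y))]
    have key1 : β * ((1 - (1 - s) * β) * E) ≤ β * D := by nlinarith
    have key2 : (1 - β) * (s * (β * E)) ≤ β * ((1 - (1 - s) * β) * E) := by
      nlinarith [mul_nonneg (mul_nonneg hβ0 hEnn)
          (mul_nonneg (by linarith : (0:ℝ) ≤ 1 - s) (by linarith : (0:ℝ) ≤ 1 - β)),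
        mul_nonneg (mul_nonneg hβ0 hEnn) (mul_nonneg hs0 hβ0)]
    have key3 : (1 - β) * (α * N) ≤ (1 - β) * D + (1 - β) * (s * (β * E)) := by nlinarith
    nlinarith [key1, key2, key3]
  set c : ℝ := α * (1 - β) with hc
  have hcpos : 0 < c := by positivity
  set M : ℝ := β * α / (1 - β) with hM
  have hMnn : 0 ≤ M := by positivity
  set δ : ℝ := c / (2 * (M + 1)) with hδ
  have hδpos : 0 < δ := by positivity
  clear_value c M δ
  -- continuation step
  have step : ∀ s s' : ℝ, 0 ≤ s → s ≤ 1 → 0 ≤ s' → s' ≤ 1 → |s' - s| ≤ δ →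
      Function.Surjective (Tmap A α s) → Function.Surjective (Tmap A α s') := by
    intro s s' hs0 hs1 hs'0 hs'1 hss hsurj
    intro y
    have hg : ∀ z, Tmap A α s (Function.invFun (Tmap A α s) z) = z :=
      Function.rightInverse_invFun hsurj
    set g := Function.invFun (Tmap A α s) with hgdef
    have hgLip : ∀ z w : X, ‖g z - g w‖ ≤ (1 / c) * ‖z - w‖ := by
      intro z w
      have h5 := hexp s hs0 hs1 (g z) (g w)
      rw [hg z, hg w] at h5
      rw [div_mul_eq_mul_div, le_div_iff₀ hcpos]
      nlinarith
    set Φ : X → X := fun x => g (y - (s' - s) • (A x - α • x)) with hΦ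
    have hΦLip : LipschitzWith (1/2 : NNReal) Φ := by
      apply LipschitzWith.of_dist_le_mul
      intro x x'
      rw [dist_eq_norm, dist_eq_norm]
      have e : (y - (s' - s) • (A x - α • x)) - (y - (s' - s) • (A x' - α • x'))
          = (s' - s) • ((A x' - α • x') - (A x - α • x)) := by module
      have hkey : (1 / c) * (δ * M) ≤ 1 / 2 := by
        have h2 : (1 / c) * (δ * M) = M / (2 * (M + 1)) := by
          rw [hδ]; field_simp
        rw [h2, div_le_iff₀ (by positivity : (0:ℝ) < 2 * (M + 1))]
        linarith
      calc ‖Φ x - Φ x'‖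
          ≤ (1 / c) * ‖(y - (s' - s) • (A x - α • x)) - (y - (s' - s) • (A x' - α • x'))‖ :=
            hgLip _ _
        _ = (1 / c) * (|s' - s| * ‖(A x' - α • x') - (A x - α • x)‖) := by
            rw [e, norm_smul, Real.norm_eq_abs]
        _ ≤ (1 / c) * (δ * (M * ‖x' - x‖)) := by
            apply mul_le_mul_of_nonneg_left _ (by positivity)
            exact mul_le_mul hss (hPLip x' x) (norm_nonneg _) hδpos.le
        _ ≤ ((1/2 : NNReal) : ℝ) * ‖x - x'‖ := by
            push_cast
            rw [norm_sub_rev x' x]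
            nlinarith [norm_nonneg (x - x'),
              mul_nonneg (mul_nonneg (by positivity : (0:ℝ) ≤ 1/c)
                (mul_nonneg hδpos.le hMnn)) (norm_nonneg (x - x'))]
    have hne : Nonempty X := ⟨0⟩
    have hcontr : ContractingWith (1/2 : NNReal) Φ :=
      ⟨by rw [← NNReal.coe_lt_coe]; norm_num, hΦLip⟩
    refine ⟨hcontr.fixedPoint Φ, ?_⟩
    set x := hcontr.fixedPoint Φ with hx
    have hfix : Φ x = x := hcontr.fixedPoint_isFixedPt
    have hTs : Tmap A α s x = y - (s' - s) • (A x - α • x) := by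
      conv_lhs => rw [← hfix]
      exact hg _
    have : Tmap A α s' x = Tmap A α s x + (s' - s) • (A x - α • x) := by
      simp only [Tmap]; module
    rw [this, hTs]; abel
  -- induction along the homotopy
  have key : ∀ n : ℕ, Function.Surjective (Tmap A α (min 1 (n * δ))) := by
    intro n
    induction n with
    | zero =>
        intro y
        refine ⟨α⁻¹ • y, ?_⟩
        simp [Tmap, smul_smul, mul_inv_cancel₀ hα.ne', min_eq_right hδpos.le]
    | succ n ih =>
        have hnd : (0:ℝ) ≤ n * δ := by positivity
        have hnd' : (0:ℝ) ≤ (n + 1 : ℕ) * δ := by positivity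
        refine step (min 1 (n * δ)) (min 1 ((n + 1 : ℕ) * δ))
          (le_min (by norm_num) hnd) (min_le_left _ _)
          (le_min (by norm_num) hnd') (min_le_left _ _) ?_ ih
        have hmono : min 1 ((n:ℝ) * δ) ≤ min 1 ((n + 1 : ℕ) * δ) := by
          apply min_le_min le_rfl
          push_cast; nlinarith
        rw [abs_of_nonneg (by linarith)]
        rcases le_total 1 ((n:ℝ) * δ) with h | h
        · rw [min_eq_left h, min_eq_left (by push_cast; nlinarith)]
          linarith
        · rw [min_eq_right h]
          have : min 1 ((n + 1 : ℕ) * δ) ≤ ((n:ℝ) + 1) * δ := by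
            push_cast; exact min_le_right _ _
          push_cast at this ⊢
          nlinarith
  obtain ⟨n, hn⟩ := exists_nat_ge (1 / δ)
  have hone : min 1 ((n:ℝ) * δ) = 1 := by
    apply min_eq_left
    rw [div_le_iff₀ hδpos] at hn
    linarith
  have := key n
  rw [hone, Tmap_one] at this
  exact this

theorem stmt14 {X : Type*} [NormedAddCommGroup X] [NormedSpace ℝ X] [CompleteSpace X]
    (A : X → X) (α β : ℝ) (hα : 0 < α) (hβ0 : 0 ≤ β) (hβ1 : β < 1)
    (hyp : ∀ x y : X, ‖A x - A y - α • (x - y)‖ ≤ β * ‖A x - A y‖) :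
    Function.Bijective A ∧
    (∃ K : NNReal, LipschitzWith K A) ∧
    lipConst (Function.invFun A) ≤ (1 + β) / α := by
  have h1β : (0:ℝ) < 1 - β := by linarith
  -- expansivity: α ‖x - y‖ ≤ (1 + β) ‖A x - A y‖
  have hlow : ∀ x y : X, α * ‖x - y‖ ≤ (1 + β) * ‖A x - A y‖ := by
    intro x y
    have h := hyp x y
    have e : α • (x - y) = (A x - A y) - (A x - A y - α • (x - y)) := by module
    have h2 := norm_sub_le (A x - A y) (A x - A y - α • (x - y))
    rw [← e] at h2
    rw [norm_smul, Real.norm_eq_abs, abs_of_pos hα] at h2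
    nlinarith
  have hinj : Function.Injective A := by
    intro x y hxy
    have := hlow x y
    rw [hxy, sub_self, norm_zero, mul_zero] at this
    have : ‖x - y‖ ≤ 0 := by nlinarith [norm_nonneg (x - y)]
    have := le_antisymm this (norm_nonneg _)
    rwa [norm_eq_zero, sub_eq_zero] at this
  have hsurj : Function.Surjective A := surj_aux_s14 A α β hα hβ0 hβ1 hyp
  have hALip : ∀ x y : X, ‖A x - A y‖ ≤ (α / (1 - β)) * ‖x - y‖ := by
    intro x y
    have h := hyp x y
    have h2 : ‖A x - A y‖ ≤ ‖A x - A y - α • (x - y)‖ + ‖α • (x - y)‖ := by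
      calc ‖A x - A y‖ = ‖(A x - A y - α • (x - y)) + α • (x - y)‖ := by abel_nf
        _ ≤ _ := norm_add_le _ _
    rw [norm_smul, Real.norm_eq_abs, abs_of_pos hα] at h2
    rw [div_mul_eq_mul_div, le_div_iff₀ h1β]
    nlinarith
  refine ⟨⟨hinj, hsurj⟩, ⟨Real.toNNReal (α / (1 - β)), ?_⟩, ?_⟩
  · apply LipschitzWith.of_dist_le_mul
    intro x y
    rw [dist_eq_norm, dist_eq_norm]
    calc ‖A x - A y‖ ≤ (α / (1 - β)) * ‖x - y‖ := hALip x y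
      _ ≤ (Real.toNNReal (α / (1 - β)) : ℝ) * ‖x - y‖ := by
          apply mul_le_mul_of_nonneg_right _ (norm_nonneg _)
          exact Real.le_coe_toNNReal _
  · apply csInf_le
    · exact ⟨0, fun K hK => hK.1⟩
    · constructor
      · positivity
      · intro u v
        obtain ⟨x, hx⟩ := hsurj u
        obtain ⟨y, hy⟩ := hsurj v
        have hli : Function.LeftInverse (Function.invFun A) A :=
          Function.leftInverse_invFun hinj
        rw [← hx, ← hy, hli x, hli y]
        have := hlow x y
        rw [div_mul_eq_mul_div, le_div_iff₀ hα]
        nlinarith [norm_nonneg (A x - A y)]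
end

section
/- Let X be a Banach space and T : X → X a map satisfying ‖Tx − Ty − (x − y)‖ ≤ λ₁‖x − y‖ + λ₂‖Tx − Ty‖ for all x, y with λ₁, λ₂ ∈ [0,1). Then the optimal Lipschitz constants satisfy (1−λ₁)/(1+λ₂) ≤ Lip(T) ≤ (1+λ₁)/(1−λ₂) and (1−λ₂)/(1+λ₁) ≤ Lip(T⁻¹) ≤ (1+λ₂)/(1−λ₁). -/
open scoped NNReal

lemma lip_aux {X : Type*} [NormedAddCommGroup X] [Nontrivial X]
    (T : X → X) (l1 l2 : ℝ)
    (hl1 : l1 ∈ Set.Ico (0 : ℝ) 1) (hl2 : l2 ∈ Set.Ico (0 : ℝ) 1)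
    (hyp : ∀ x y : X, ‖T x - T y - (x - y)‖ ≤ l1 * ‖x - y‖ + l2 * ‖T x - T y‖) :
    (1 - l1) / (1 + l2) ≤ lipConst T ∧ lipConst T ≤ (1 + l1) / (1 - l2) := by
  have h2 : (0:ℝ) < 1 - l2 := by linarith [hl2.2]
  have h2' : (0:ℝ) < 1 + l2 := by linarith [hl2.1]
  have hM : (1 + l1) / (1 - l2) ∈ {K : ℝ | 0 ≤ K ∧ ∀ x y : X, ‖T x - T y‖ ≤ K * ‖x - y‖} := by
    constructor
    · exact div_nonneg (by linarith [hl1.1]) h2.le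
    · intro x y
      have h := hyp x y
      have h1 : ‖T x - T y‖ - ‖x - y‖ ≤ ‖T x - T y - (x - y)‖ := norm_sub_norm_le _ _
      rw [div_mul_eq_mul_div, le_div_iff₀ h2]
      nlinarith [norm_nonneg (x - y), norm_nonneg (T x - T y)]
  have hlow : ∀ K ∈ {K : ℝ | 0 ≤ K ∧ ∀ x y : X, ‖T x - T y‖ ≤ K * ‖x - y‖},
      (1 - l1) / (1 + l2) ≤ K := by
    rintro K ⟨hK0, hK⟩
    obtain ⟨x, y, hxy⟩ := exists_pair_ne X
    have hpos : (0:ℝ) < ‖x - y‖ := by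
      rw [norm_pos_iff, sub_ne_zero]; exact hxy
    have h := hyp x y
    have h1 : ‖x - y‖ - ‖T x - T y‖ ≤ ‖T x - T y - (x - y)‖ := by
      have := norm_sub_norm_le (x - y) (T x - T y)
      rwa [norm_sub_rev (x - y)] at this
    have hKxy := hK x y
    have key : (1 - l1) * ‖x - y‖ ≤ (1 + l2) * (K * ‖x - y‖) := by
      nlinarith [norm_nonneg (T x - T y)]
    rw [div_le_iff₀ h2']
    have := le_of_mul_le_mul_right (by nlinarith : (1 - l1) * ‖x - y‖ ≤ (K * (1 + l2)) * ‖x - y‖) hpos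
    linarith
  constructor
  · exact le_csInf ⟨_, hM⟩ hlow
  · exact csInf_le ⟨_, hlow⟩ hM

set_option maxHeartbeats 1600000 in
lemma surj_aux_s15 {X : Type*} [NormedAddCommGroup X] [NormedSpace ℝ X] [CompleteSpace X]
    [Nontrivial X]
    (T : X → X) (l1 l2 : ℝ)
    (hl1 : l1 ∈ Set.Ico (0 : ℝ) 1) (hl2 : l2 ∈ Set.Ico (0 : ℝ) 1)
    (hyp : ∀ x y : X, ‖T x - T y - (x - y)‖ ≤ l1 * ‖x - y‖ + l2 * ‖T x - T y‖) :
    Function.Surjective T := by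
  have h2 : (0:ℝ) < 1 - l2 := by linarith [hl2.2]
  have h2' : (0:ℝ) < 1 + l2 := by linarith [hl2.1]
  set mx : ℝ := max l1 l2 with hmx
  have hmx0 : 0 ≤ mx := le_trans hl1.1 (le_max_left _ _)
  have hmx1 : mx < 1 := max_lt hl1.2 hl2.2
  obtain ⟨δ, hδdef⟩ : ∃ d : ℝ, d = (1 - mx) / (1 + l2) := ⟨_, rfl⟩
  have hδ : 0 < δ := by rw [hδdef]; exact div_pos (by linarith) h2'
  obtain ⟨Lg, hLg⟩ : ∃ d : ℝ, d = (l1 + l2) / (1 - l2) := ⟨_, rfl⟩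
  have hLg0 : 0 ≤ Lg := by
    rw [hLg]; apply div_nonneg _ (le_of_lt h2); linarith [hl1.1, hl2.1]
  set F : ℝ → X → X := fun t x => x + t • (T x - x) with hF
  -- g = T - id is Lg-Lipschitz
  have hg : ∀ x y : X, ‖(T x - x) - (T y - y)‖ ≤ Lg * ‖x - y‖ := by
    intro x y
    have h := hyp x y
    have heq : (T x - x) - (T y - y) = T x - T y - (x - y) := by abel
    rw [heq]
    have hb : ‖T x - T y‖ ≤ ‖x - y‖ + ‖T x - T y - (x - y)‖ := by
      have := norm_add_le (x - y) (T x - T y - (x - y))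
      simpa using this
    rw [hLg, div_mul_eq_mul_div, le_div_iff₀ h2]
    nlinarith [norm_nonneg (x - y), norm_nonneg (T x - T y - (x - y)),
      mul_le_mul_of_nonneg_left hb hl2.1]
  -- uniform lower bound along the homotopy
  have hlow : ∀ t ∈ Set.Icc (0:ℝ) 1, ∀ x y : X, δ * ‖x - y‖ ≤ ‖F t x - F t y‖ := by
    rintro t ⟨ht0, ht1⟩ x y
    set e : X := T x - T y - (x - y) with he_def
    set v : X := F t x - F t y with hv_def
    have hv : v = (x - y) + t • e := by
      simp only [hv_def, hF, he_def]
      module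
    have he : ‖e‖ ≤ l1 * ‖x - y‖ + l2 * ‖T x - T y‖ := hyp x y
    have ha : ‖x - y‖ ≤ ‖v‖ + t * ‖e‖ := by
      have : x - y = v - t • e := by rw [hv]; abel
      calc ‖x - y‖ = ‖v - t • e‖ := by rw [this]
        _ ≤ ‖v‖ + ‖t • e‖ := norm_sub_le _ _
        _ = ‖v‖ + t * ‖e‖ := by rw [norm_smul, Real.norm_eq_abs, abs_of_nonneg ht0]
    have hb : ‖T x - T y‖ ≤ ‖v‖ + (1 - t) * ‖e‖ := by
      have : T x - T y = v + (1 - t) • e := by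
        rw [hv, he_def]; module
      calc ‖T x - T y‖ = ‖v + (1 - t) • e‖ := by rw [this]
        _ ≤ ‖v‖ + ‖(1 - t) • e‖ := norm_add_le _ _
        _ = ‖v‖ + (1 - t) * ‖e‖ := by
            rw [norm_smul, Real.norm_eq_abs, abs_of_nonneg (by linarith)]
    have he2 : (1 - (l1 * t + l2 * (1 - t))) * ‖e‖ ≤ (l1 + l2) * ‖v‖ := by
      nlinarith [mul_le_mul_of_nonneg_left ha hl1.1, mul_le_mul_of_nonneg_left hb hl2.1,
        norm_nonneg e, norm_nonneg v]
    have hβ : l1 * t + l2 * (1 - t) ≤ mx := by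
      have h1 : l1 ≤ mx := le_max_left _ _
      have h2'' : l2 ≤ mx := le_max_right _ _
      nlinarith
    have key : (1 - mx) * ‖x - y‖ ≤ (1 + l2) * ‖v‖ := by
      nlinarith [mul_le_mul_of_nonneg_left ha (by linarith : (0:ℝ) ≤ 1 - (l1 * t + l2 * (1 - t))),
        mul_le_mul_of_nonneg_left he2 ht0,
        mul_nonneg (by nlinarith : (0:ℝ) ≤ mx - (l1 * t + l2 * (1 - t))) (norm_nonneg (x - y)),
        mul_nonneg (mul_nonneg hl2.1 (by linarith : (0:ℝ) ≤ 1 - t)) (norm_nonneg v),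
        norm_nonneg e, norm_nonneg v]
    rw [hδdef, div_mul_eq_mul_div, div_le_iff₀ h2']
    linarith
  obtain ⟨r, hr⟩ : ∃ d : ℝ, d = δ / (2 * (Lg + 1)) := ⟨_, rfl⟩
  have hr0 : 0 < r := by rw [hr]; positivity
  -- step lemma
  have step : ∀ t ∈ Set.Icc (0:ℝ) 1, ∀ s ∈ Set.Icc (0:ℝ) 1, |s - t| ≤ r →
      Function.Surjective (F t) → Function.Surjective (F s) := by
    intro t ht s hs hst hsurj
    intro z
    set i := Function.invFun (F t) with hi
    have hri : ∀ w, F t (i w) = w := fun w => Function.rightInverse_invFun hsurj w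
    set Φ : X → X := fun x => i (z - (s - t) • (T x - x)) with hΦdef
    have hΦlip : ∀ x y : X, dist (Φ x) (Φ y) ≤ (1/2 : ℝ) * dist x y := by
      intro x y
      rw [dist_eq_norm, dist_eq_norm]
      have h1 : δ * ‖Φ x - Φ y‖ ≤ ‖F t (Φ x) - F t (Φ y)‖ := hlow t ht _ _
      rw [hΦdef] at h1
      simp only [hri] at h1
      have h2'' : (z - (s - t) • (T x - x)) - (z - (s - t) • (T y - y))
          = (s - t) • ((T y - y) - (T x - x)) := by module
      rw [h2''] at h1
      have h3 : ‖(s - t) • ((T y - y) - (T x - x))‖ ≤ r * (Lg * ‖x - y‖) := by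
        rw [norm_smul, Real.norm_eq_abs]
        have hthis := hg y x
        rw [norm_sub_rev y x] at hthis
        exact mul_le_mul hst hthis (norm_nonneg _) hr0.le
      have h4 : δ * ‖Φ x - Φ y‖ ≤ r * (Lg * ‖x - y‖) := le_trans h1 h3
      have h5 : r * Lg ≤ δ * (1/2) := by
        rw [hr]
        rw [div_mul_eq_mul_div, div_le_iff₀ (by positivity : (0:ℝ) < 2 * (Lg + 1))]
        nlinarith [hδ, hLg0]
      have h6 : δ * ‖Φ x - Φ y‖ ≤ δ * ((1/2) * ‖x - y‖) := by
        nlinarith [norm_nonneg (x - y), mul_le_mul_of_nonneg_right h5 (norm_nonneg (x - y))]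
      exact le_of_mul_le_mul_left h6 hδ
    have hC : ContractingWith (1/2 : ℝ≥0) Φ := by
      constructor
      · rw [← NNReal.coe_lt_coe]; push_cast; norm_num
      · apply LipschitzWith.of_dist_le_mul
        intro x y
        have := hΦlip x y
        push_cast
        linarith
    set x0 := hC.fixedPoint Φ with hx0
    have hfix : Φ x0 = x0 := hC.fixedPoint_isFixedPt
    refine ⟨x0, ?_⟩
    have hFt : F t x0 = z - (s - t) • (T x0 - x0) := by
      conv_lhs => rw [← hfix]
      exact hri _
    show x0 + s • (T x0 - x0) = z
    have : x0 + t • (T x0 - x0) = z - (s - t) • (T x0 - x0) := hFt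
    have goal_eq : x0 + s • (T x0 - x0)
        = (x0 + t • (T x0 - x0)) + (s - t) • (T x0 - x0) := by module
    rw [goal_eq, this]
    abel
  -- induction
  have main : ∀ n : ℕ, ∀ t ∈ Set.Icc (0:ℝ) 1, t ≤ n * r → Function.Surjective (F t) := by
    intro n
    induction n with
    | zero =>
        intro t ht htn
        have : t = 0 := le_antisymm (by simpa using htn) ht.1
        subst this
        intro z
        exact ⟨z, by simp [hF]⟩
    | succ n ih =>
        intro t ht htn
        set t' : ℝ := max (t - r) 0 with ht'
        have ht'mem : t' ∈ Set.Icc (0:ℝ) 1 := by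
          constructor
          · exact le_max_right _ _
          · rw [ht']
            apply max_le (by linarith [ht.2, hr0.le]) (by norm_num)
        have ht'n : t' ≤ n * r := by
          rw [ht']
          apply max_le
          · push_cast at htn ⊢; linarith
          · positivity
        have hdist : |t - t'| ≤ r := by
          rw [ht', abs_le]
          constructor
          · have h1 : max (t - r) 0 ≤ t := max_le (by linarith [hr0.le]) ht.1
            linarith [hr0.le]
          · have : t - r ≤ max (t - r) 0 := le_max_left _ _
            linarith
        exact step t' ht'mem t ht hdist (ih t' ht'mem ht'n)
  obtain ⟨n, hn⟩ := exists_nat_ge (1 / r)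
  have h1r : 1 ≤ n * r := by
    rw [div_le_iff₀ hr0] at hn
    linarith
  have hsurj1 : Function.Surjective (F 1) := main n 1 ⟨by norm_num, le_refl _⟩ h1r
  have : F 1 = T := by
    funext x
    simp [hF]
  rwa [this] at hsurj1

theorem stmt15 {X : Type*} [NormedAddCommGroup X] [NormedSpace ℝ X] [CompleteSpace X]
    [Nontrivial X]
    (T : X → X) (l1 l2 : ℝ)
    (hl1 : l1 ∈ Set.Ico (0 : ℝ) 1) (hl2 : l2 ∈ Set.Ico (0 : ℝ) 1)
    (hyp : ∀ x y : X, ‖T x - T y - (x - y)‖ ≤ l1 * ‖x - y‖ + l2 * ‖T x - T y‖) :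
    (1 - l1) / (1 + l2) ≤ lipConst T ∧ lipConst T ≤ (1 + l1) / (1 - l2) ∧
    (1 - l2) / (1 + l1) ≤ lipConst (Function.invFun T) ∧
    lipConst (Function.invFun T) ≤ (1 + l2) / (1 - l1) := by
  obtain ⟨hT1, hT2⟩ := lip_aux T l1 l2 hl1 hl2 hyp
  have hsurj := surj_aux_s15 T l1 l2 hl1 hl2 hyp
  set S := Function.invFun T with hS
  have hri : ∀ u, T (S u) = u := fun u => Function.rightInverse_invFun hsurj u
  have hyp' : ∀ u v : X, ‖S u - S v - (u - v)‖ ≤ l2 * ‖u - v‖ + l1 * ‖S u - S v‖ := by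
    intro u v
    have h := hyp (S u) (S v)
    rw [hri u, hri v] at h
    have heq : ‖S u - S v - (u - v)‖ = ‖u - v - (S u - S v)‖ := by
      rw [← norm_neg]; congr 1; abel
    rw [heq]
    linarith
  obtain ⟨hS1, hS2⟩ := lip_aux S l2 l1 hl2 hl1 hyp'
  exact ⟨hT1, hT2, hS1, hS2⟩
end

section
/- Let X be a Banach space, M_d a BK-space of scalar sequences, and ({f_n}, S) a metric frame for X with respect to M_d, with frame bounds 0 < a ≤ b: each f_n : X → 𝕂 is Lipschitz, {f_n(x)}_n ∈ M_d for all x, a‖x−y‖ ≤ ‖{f_n(x)−f_n(y)}_n‖ ≤ b‖x−y‖, S : M_d → X is Lipschitz with S({f_n(x)}_n) = x for all x. Let T : M_d → X be a Lipschitz map and λ₁, λ₂, μ ≥ 0 with max{λ₂, λ₁ + μb} < 1 and ‖Sc − Sd − (Tc − Td)‖ ≤ λ₁‖Sc − Sd‖ + λ₂‖Tc − Td‖ + μ‖c − d‖ for all c, d ∈ M_d. Then there exists a family {g_n} of Lipschitz functionals on X such that ({g_n}, T) is a metric frame for X with lower bound a(1−λ₂)/(1+λ₁+μb) and upper bound b(1+λ₂)/(1−(λ₁+μb)).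 -/
-- contraction step: if U_t is surjective and s is close to t, then U_s is surjective
lemma surj_step {X : Type*} [NormedAddCommGroup X] [NormedSpace ℝ X] [CompleteSpace X]
    (U : X → X) (B c : ℝ) (hc : 0 < c) (hB : 0 ≤ B)
    (hUlip : ∀ x y : X, ‖U x - U y‖ ≤ B * ‖x - y‖)
    (hlow : ∀ t : ℝ, 0 ≤ t → t ≤ 1 → ∀ x y : X,
      c * ‖x - y‖ ≤ ‖((1-t) • x + t • U x) - ((1-t) • y + t • U y)‖)
    (t s : ℝ) (ht0 : 0 ≤ t) (ht1 : t ≤ 1)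
    (hst : |s - t| * (B + 1) ≤ c / 2)
    (hsurj : ∀ z : X, ∃ x, (1-t) • x + t • U x = z) :
    ∀ z : X, ∃ x, (1-s) • x + s • U x = z := by
  intro z
  set Φ : X → X := fun x => Classical.choose (hsurj (z - (s-t) • (U x - x))) with hΦdef
  have hΦ : ∀ x : X, (1-t) • (Φ x) + t • U (Φ x) = z - (s-t) • (U x - x) := by
    intro x
    exact Classical.choose_spec (hsurj (z - (s-t) • (U x - x)))
  have key : ∀ x y : X, dist (Φ x) (Φ y) ≤ (1/2) * dist x y := by
    intro x y
    have h1 := hlow t ht0 ht1 (Φ x) (Φ y)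
    have e : ((1-t) • (Φ x) + t • U (Φ x)) - ((1-t) • (Φ y) + t • U (Φ y))
        = (s - t) • ((U y - y) - (U x - x)) := by
      rw [hΦ x, hΦ y]; module
    rw [e] at h1
    have h3 : ‖(U y - y) - (U x - x)‖ ≤ (B + 1) * ‖x - y‖ := by
      have e2 : (U y - y) - (U x - x) = (U y - U x) - (y - x) := by abel
      rw [e2]
      calc ‖(U y - U x) - (y - x)‖ ≤ ‖U y - U x‖ + ‖y - x‖ := norm_sub_le _ _
        _ ≤ B * ‖y - x‖ + ‖y - x‖ := by linarith [hUlip y x]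
        _ = (B + 1) * ‖x - y‖ := by rw [norm_sub_rev y x]; ring
    have h2 : ‖(s - t) • ((U y - y) - (U x - x))‖ ≤ |s - t| * ((B+1) * ‖x - y‖) := by
      rw [norm_smul, Real.norm_eq_abs]
      exact mul_le_mul_of_nonneg_left h3 (abs_nonneg _)
    have hBnn : 0 ≤ B + 1 := by linarith
    have h4 : |s-t| * ((B+1) * ‖x-y‖) ≤ (c/2) * ‖x-y‖ := by
      nlinarith [norm_nonneg (x-y), abs_nonneg (s-t)]
    have h5 : c * ‖Φ x - Φ y‖ ≤ c * ((1/2) * ‖x - y‖) := by linarith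
    have h6 := le_of_mul_le_mul_left h5 hc
    rw [dist_eq_norm, dist_eq_norm]; exact h6
  have hlip : LipschitzWith (1/2 : NNReal) Φ := by
    apply LipschitzWith.of_dist_le_mul
    intro x y
    have := key x y
    simpa using this
  have hcontr : ContractingWith (1/2 : NNReal) Φ := ⟨by rw [← NNReal.coe_lt_coe]; norm_num, hlip⟩
  haveI : Nonempty X := ⟨z⟩
  refine ⟨hcontr.fixedPoint Φ, ?_⟩
  have hfix : Φ (hcontr.fixedPoint Φ) = hcontr.fixedPoint Φ := hcontr.fixedPoint_isFixedPt
  set x₀ := hcontr.fixedPoint Φ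
  have h := hΦ x₀
  rw [hfix] at h
  have e3 : (1-s) • x₀ + s • U x₀ = ((1-t) • x₀ + t • U x₀) + (s-t) • (U x₀ - x₀) := by module
  rw [e3, h]
  abel

lemma surj_all {X : Type*} [NormedAddCommGroup X] [NormedSpace ℝ X] [CompleteSpace X]
    (U : X → X) (B c : ℝ) (hc : 0 < c) (hB : 0 ≤ B)
    (hUlip : ∀ x y : X, ‖U x - U y‖ ≤ B * ‖x - y‖)
    (hlow : ∀ t : ℝ, 0 ≤ t → t ≤ 1 → ∀ x y : X,
      c * ‖x - y‖ ≤ ‖((1-t) • x + t • U x) - ((1-t) • y + t • U y)‖) :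
    ∀ z : X, ∃ x, U x = z := by
  have hB1 : (0:ℝ) < B + 1 := by linarith
  set δ := c / (2*(B+1)) with hδdef
  have hδ : 0 < δ := by positivity
  have key : ∀ k : ℕ, ∀ z : X,
      ∃ x, (1 - min ((k:ℝ)*δ) 1) • x + (min ((k:ℝ)*δ) 1) • U x = z := by
    intro k
    induction k with
    | zero =>
      intro z
      refine ⟨z, ?_⟩
      norm_num
    | succ k ih =>
      have ht0 : (0:ℝ) ≤ min ((k:ℝ)*δ) 1 := le_min (by positivity) one_pos.le
      have ht1 : min ((k:ℝ)*δ) 1 ≤ 1 := min_le_right _ _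
      have hmono : min ((k:ℝ)*δ) 1 ≤ min (((k:ℝ)+1)*δ) 1 := by
        apply min_le_min _ le_rfl
        nlinarith
      have hub : min (((k:ℝ)+1)*δ) 1 ≤ min ((k:ℝ)*δ) 1 + δ := by
        rcases le_total ((k:ℝ)*δ) 1 with h|h
        · rw [min_eq_left h]
          calc min (((k:ℝ)+1)*δ) 1 ≤ ((k:ℝ)+1)*δ := min_le_left _ _
            _ = (k:ℝ)*δ + δ := by ring
        · have h1 : min ((k:ℝ)*δ) 1 = 1 := min_eq_right h
          have h2 : min (((k:ℝ)+1)*δ) 1 ≤ 1 := min_le_right _ _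
          linarith
      have hstep := surj_step U B c hc hB hUlip hlow (min ((k:ℝ)*δ) 1)
        (min (((k:ℝ)+1)*δ) 1) ht0 ht1 ?_ ih
      · intro z
        have := hstep z
        push_cast
        exact this
      · rw [abs_of_nonneg (by linarith)]
        have h7 : min (((k:ℝ)+1)*δ) 1 - min ((k:ℝ)*δ) 1 ≤ δ := by linarith
        calc (min (((k:ℝ)+1)*δ) 1 - min ((k:ℝ)*δ) 1) * (B+1) ≤ δ * (B+1) := by nlinarith
          _ = c/2 := by rw [hδdef]; field_simp
  intro z
  obtain ⟨N, hN⟩ := exists_nat_ge (1/δ)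
  have h1 : (1:ℝ) ≤ (N:ℝ)*δ := by
    rw [div_le_iff₀ hδ] at hN
    linarith
  obtain ⟨x, hx⟩ := key N z
  rw [min_eq_right h1] at hx
  refine ⟨x, ?_⟩
  simpa using hx


set_option maxHeartbeats 1000000 in
theorem stmt16 {X Md : Type*} [NormedAddCommGroup X] [NormedSpace ℝ X] [CompleteSpace X]
    [NormedAddCommGroup Md] [NormedSpace ℝ Md] [CompleteSpace Md]
    -- `Md` is a BK-space: a Banach space of scalar sequences with continuous coordinates,
    -- modelled by continuous coordinate functionals separating points.
    (coord : ℕ → Md →L[ℝ] ℝ)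
    (hsep : ∀ c d : Md, (∀ n, coord n c = coord n d) → c = d)
    -- `({f n}, S)` is a metric frame for `X` w.r.t. `Md` with bounds `a ≤ b`,
    -- with analysis map `θ`.
    (f : ℕ → X → ℝ) (hflip : ∀ n, ∃ K : NNReal, LipschitzWith K (f n))
    (θ : X → Md) (hmem : ∀ x n, coord n (θ x) = f n x)
    (a b : ℝ) (ha : 0 < a) (hab : a ≤ b)
    (hlow : ∀ x y : X, a * ‖x - y‖ ≤ ‖θ x - θ y‖)
    (hup : ∀ x y : X, ‖θ x - θ y‖ ≤ b * ‖x - y‖)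
    (S : Md → X) (hSlip : ∃ K : NNReal, LipschitzWith K S)
    (hrec : ∀ x : X, S (θ x) = x)
    -- the perturbed reconstruction map `T`
    (T : Md → X) (hTlip : ∃ K : NNReal, LipschitzWith K T)
    (l1 l2 μ : ℝ) (hl1 : 0 ≤ l1) (hl2 : 0 ≤ l2) (hμ : 0 ≤ μ)
    (hmax1 : l2 < 1) (hmax2 : l1 + μ * b < 1)
    (hyp : ∀ c d : Md,
      ‖S c - S d - (T c - T d)‖ ≤ l1 * ‖S c - S d‖ + l2 * ‖T c - T d‖ + μ * ‖c - d‖) :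
    ∃ (g : ℕ → X → ℝ) (θ' : X → Md),
      (∀ n, ∃ K : NNReal, LipschitzWith K (g n)) ∧
      (∀ x n, coord n (θ' x) = g n x) ∧
      (∀ x y : X, a * (1 - l2) / (1 + l1 + μ * b) * ‖x - y‖ ≤ ‖θ' x - θ' y‖) ∧
      (∀ x y : X, ‖θ' x - θ' y‖ ≤ b * (1 + l2) / (1 - (l1 + μ * b)) * ‖x - y‖) ∧
      (∀ x : X, T (θ' x) = x) := by
  have hb : 0 < b := lt_of_lt_of_le ha hab
  have hμb : 0 ≤ μ * b := mul_nonneg hμ hb.le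
  have hl2' : (0:ℝ) < 1 - l2 := by linarith
  have hD : (0:ℝ) < 1 + l1 + μ * b := by linarith
  have hc1den : (0:ℝ) < 1 - (l1 + μ * b) := by linarith
  set U : X → X := fun x => T (θ x) with hUdef
  -- key perturbation inequality
  have hK1 : ∀ x y : X, ‖(x - y) - (U x - U y)‖ ≤ (l1 + μ*b) * ‖x - y‖ + l2 * ‖U x - U y‖ := by
    intro x y
    have h := hyp (θ x) (θ y)
    rw [hrec, hrec] at h
    have h2 : μ * ‖θ x - θ y‖ ≤ μ * (b * ‖x - y‖) := mul_le_mul_of_nonneg_left (hup x y) hμ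
    have : U x = T (θ x) := rfl
    have : U y = T (θ y) := rfl
    simp only [hUdef]
    calc ‖(x - y) - (T (θ x) - T (θ y))‖ = ‖x - y - (T (θ x) - T (θ y))‖ := by rw [sub_sub]
      _ ≤ l1 * ‖x - y‖ + l2 * ‖T (θ x) - T (θ y)‖ + μ * ‖θ x - θ y‖ := h
      _ ≤ (l1 + μ*b) * ‖x - y‖ + l2 * ‖T (θ x) - T (θ y)‖ := by nlinarith
  -- Lipschitz bound for U (product form)
  have hUlip' : ∀ x y : X, (1 - l2) * ‖U x - U y‖ ≤ (1 + l1 + μ*b) * ‖x - y‖ := by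
    intro x y
    have h1 := hK1 x y
    have h2 := abs_norm_sub_norm_le (x - y) (U x - U y)
    rw [abs_le] at h2
    obtain ⟨h2a, h2b⟩ := h2
    nlinarith [norm_nonneg ((x-y) - (U x - U y))]
  -- lower bound for U (product form)
  have hUlow' : ∀ x y : X, (1 - (l1 + μ*b)) * ‖x - y‖ ≤ (1 + l2) * ‖U x - U y‖ := by
    intro x y
    have h1 := hK1 x y
    have h2 := abs_norm_sub_norm_le (x - y) (U x - U y)
    rw [abs_le] at h2
    obtain ⟨h2a, h2b⟩ := h2
    nlinarith [norm_nonneg ((x-y) - (U x - U y))]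
  -- constants for the continuation argument
  set m := max (l1 + μ*b) l2 with hmdef
  have hm1 : m < 1 := max_lt hmax2 hmax1
  have hm0 : 0 ≤ m := le_trans hl2 (le_max_right _ _)
  set c := (1 - m) / (1 + l2) with hcdef
  have hc : 0 < c := div_pos (by linarith) (by linarith)
  set B := (1 + l1 + μ*b) / (1 - l2) with hBdef
  have hB : 0 ≤ B := div_nonneg (by linarith) (by linarith)
  have hUlip : ∀ x y : X, ‖U x - U y‖ ≤ B * ‖x - y‖ := by
    intro x y
    rw [hBdef, div_mul_eq_mul_div, le_div_iff₀ hl2']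
    nlinarith [hUlip' x y]
  -- lower bound along the homotopy
  have hlowt : ∀ t : ℝ, 0 ≤ t → t ≤ 1 → ∀ x y : X,
      c * ‖x - y‖ ≤ ‖((1-t) • x + t • U x) - ((1-t) • y + t • U y)‖ := by
    intro t ht0 ht1 x y
    set Δ := ((1-t) • x + t • U x) - ((1-t) • y + t • U y) with hΔ
    have e1 : x - y - Δ = t • ((x - y) - (U x - U y)) := by rw [hΔ]; module
    have n1 : ‖x - y - Δ‖ = t * ‖(x-y) - (U x - U y)‖ := by
      rw [e1, norm_smul, Real.norm_eq_abs, abs_of_nonneg ht0]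
    have e2 : t • (U x - U y) = Δ - (1-t) • (x - y) := by rw [hΔ]; module
    have n2 : t * ‖U x - U y‖ ≤ ‖Δ‖ + (1-t) * ‖x - y‖ := by
      have h := norm_sub_le Δ ((1-t) • (x - y))
      rw [← e2] at h
      rwa [norm_smul, norm_smul, Real.norm_eq_abs, Real.norm_eq_abs, abs_of_nonneg ht0,
        abs_of_nonneg (by linarith : (0:ℝ) ≤ 1-t)] at h
    have hk := hK1 x y
    have hmul := mul_le_mul_of_nonneg_left hk ht0
    rw [← n1] at hmul
    -- hmul : ‖x-y-Δ‖ ≤ t*((l1+μb)*‖x-y‖ + l2*‖Ux-Uy‖)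
    have tri : ‖x - y‖ ≤ ‖Δ‖ + ‖x - y - Δ‖ := by
      have e3 : x - y = Δ + (x - y - Δ) := by abel
      calc ‖x - y‖ = ‖Δ + (x - y - Δ)‖ := by rw [← e3]
        _ ≤ ‖Δ‖ + ‖x - y - Δ‖ := norm_add_le _ _
    have hma : l1 + μ*b ≤ m := le_max_left _ _
    have hmb : l2 ≤ m := le_max_right _ _
    rw [hcdef, div_mul_eq_mul_div, div_le_iff₀ (by linarith : (0:ℝ) < 1 + l2)]
    nlinarith [norm_nonneg (x - y), norm_nonneg Δ, norm_nonneg (U x - U y),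
      mul_le_mul_of_nonneg_left n2 hl2, mul_le_mul_of_nonneg_right hma ht0,
      mul_le_mul_of_nonneg_right hmb (by linarith : (0:ℝ) ≤ 1-t)]
  -- surjectivity of U
  have hUsurj : ∀ z : X, ∃ x, U x = z := surj_all U B c hc hB hUlip hlowt
  set Uinv : X → X := fun z => Classical.choose (hUsurj z) with hUinvdef
  have hUinv : ∀ z : X, U (Uinv z) = z := fun z => Classical.choose_spec (hUsurj z)
  -- inverse Lipschitz bound
  have hUinvlip : ∀ x y : X, (1 - (l1 + μ*b)) * ‖Uinv x - Uinv y‖ ≤ (1 + l2) * ‖x - y‖ := by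
    intro x y
    have := hUlow' (Uinv x) (Uinv y)
    rwa [hUinv, hUinv] at this
  have hUinvlow : ∀ x y : X, (1 - l2) * ‖x - y‖ ≤ (1 + l1 + μ*b) * ‖Uinv x - Uinv y‖ := by
    intro x y
    have := hUlip' (Uinv x) (Uinv y)
    rwa [hUinv, hUinv] at this
  refine ⟨fun n x => f n (Uinv x), fun x => θ (Uinv x), ?_, ?_, ?_, ?_, ?_⟩
  · -- Lipschitz of g n
    intro n
    obtain ⟨K, hK⟩ := hflip n
    have C0 : (0:ℝ) ≤ (1 + l2) / (1 - (l1 + μ*b)) := div_nonneg (by linarith) hc1den.le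
    refine ⟨K * Real.toNNReal ((1 + l2) / (1 - (l1 + μ*b))), ?_⟩
    have hUinvL : LipschitzWith (Real.toNNReal ((1 + l2) / (1 - (l1 + μ*b)))) Uinv := by
      apply LipschitzWith.of_dist_le_mul
      intro x y
      rw [Real.coe_toNNReal _ C0, dist_eq_norm, dist_eq_norm]
      rw [div_mul_eq_mul_div, le_div_iff₀ hc1den]
      nlinarith [hUinvlip x y]
    exact hK.comp hUinvL
  · intro x n
    exact hmem (Uinv x) n
  · -- lower frame bound
    intro x y
    have h1 := hlow (Uinv x) (Uinv y)
    have h2 := hUinvlow x y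
    rw [div_mul_eq_mul_div, div_le_iff₀ hD]
    nlinarith [norm_nonneg (θ (Uinv x) - θ (Uinv y)), norm_nonneg (Uinv x - Uinv y),
      mul_le_mul_of_nonneg_left h1 hD.le]
  · -- upper frame bound
    intro x y
    have h1 := hup (Uinv x) (Uinv y)
    have h2 := hUinvlip x y
    rw [div_mul_eq_mul_div, le_div_iff₀ hc1den]
    nlinarith [norm_nonneg (x - y), norm_nonneg (Uinv x - Uinv y)]
  · intro x
    exact hUinv x
end
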